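/- arXiv:2502.19031 — 8 statements merged into one kernel-verified Lean document; each statement's English description precedes it below -/
import Mathlib

section
/- Let A ∈ ℤ^{d×n} be a configuration matrix and let M ⊆ ker(A) be a finite set of moves. Then the binomials {x^{u⁺} − x^{u⁻} : u ∈ M} generate the toric ideal I_A if and only if for every t ∈ ℕA the graph G_{M,t} with vertex set F_t and edges {uv : u − v ∈ ±M} is connected (fundamental theorem of Markov bases). -/
open MvPolynomial

def natToInt {n : ℕ} (u : Fin n → ℕ) : Fin n → ℤ := fun i => (u i : ℤ)

def posPart {n : ℕ} (u : Fin n → ℤ) : Fin n → ℕ := fun i => (u i).toNat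

def negPart {n : ℕ} (u : Fin n → ℤ) : Fin n → ℕ := fun i => (-(u i)).toNat

/-- `A` is a configuration matrix: `ker(A) ∩ ℕⁿ = {0}`. -/
def IsConfiguration {d n : ℕ} (A : Matrix (Fin d) (Fin n) ℤ) : Prop :=
  ∀ u : Fin n → ℕ, A.mulVec (natToInt u) = 0 → u = 0

/-- The monomial `x^u` for `u ∈ ℕⁿ`. -/
noncomputable def natMonomial (k : Type*) [Field k] {n : ℕ} (u : Fin n → ℕ) :
    MvPolynomial (Fin n) k :=
  monomial (Finsupp.equivFunOnFinite.symm u) 1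

/-- The toric ideal `I_A`, generated by the binomials `x^u - x^v` with `Au = Av`. -/
noncomputable def toricIdeal (k : Type*) [Field k] {d n : ℕ} (A : Matrix (Fin d) (Fin n) ℤ) :
    Ideal (MvPolynomial (Fin n) k) :=
  Ideal.span { p | ∃ u v : Fin n → ℕ,
    A.mulVec (natToInt u) = A.mulVec (natToInt v) ∧
    p = natMonomial k u - natMonomial k v }

/-- The binomial `x^{u⁺} - x^{u⁻}` associated to a move `u ∈ ℤⁿ`. -/
noncomputable def moveBinomial (k : Type*) [Field k] {n : ℕ} (u : Fin n → ℤ) :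
    MvPolynomial (Fin n) k :=
  natMonomial k (posPart u) - natMonomial k (negPart u)

/-- `M ⊆ ker(A)` is a Markov basis if its binomials generate the toric ideal. -/
def IsMarkovBasis (k : Type*) [Field k] {d n : ℕ} (A : Matrix (Fin d) (Fin n) ℤ)
    (M : Set (Fin n → ℤ)) : Prop :=
  (∀ u ∈ M, A.mulVec u = 0) ∧ Ideal.span (moveBinomial k '' M) = toricIdeal k A

/-- A minimal Markov basis is an inclusion-minimal Markov basis. -/
def IsMinimalMarkovBasis (k : Type*) [Field k] {d n : ℕ} (A : Matrix (Fin d) (Fin n) ℤ)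
    (M : Set (Fin n → ℤ)) : Prop :=
  IsMarkovBasis k A M ∧ ∀ M' ⊂ M, ¬ IsMarkovBasis k A M'

section Aux

variable (k : Type*) [Field k] {n : ℕ}

lemma natToInt_posPart_sub_negPart (m : Fin n → ℤ) :
    natToInt (_root_.posPart m) - natToInt (_root_.negPart m) = m := by
  funext i
  simp only [natToInt, _root_.posPart, _root_.negPart, Pi.sub_apply]
  omega

lemma natMonomial_add (a b : Fin n → ℕ) :
    natMonomial k (a + b) = natMonomial k a * natMonomial k b := by
  have h : Finsupp.equivFunOnFinite.symm (a + b)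
      = Finsupp.equivFunOnFinite.symm a + Finsupp.equivFunOnFinite.symm b := by
    ext i; simp
  rw [natMonomial, natMonomial, natMonomial, MvPolynomial.monomial_mul, one_mul, h]

/-- One move step decomposes the binomial as a monomial multiple of the move binomial. -/
lemma step_mem_span (M : Finset (Fin n → ℤ)) (b c : Fin n → ℕ)
    (h : natToInt b - natToInt c ∈ M) :
    natMonomial k b - natMonomial k c
      ∈ Ideal.span (moveBinomial k '' (↑M : Set (Fin n → ℤ))) := by
  set m : Fin n → ℤ := natToInt b - natToInt c with hm
  obtain ⟨w, hb, hc⟩ : ∃ w : Fin n → ℕ, b = _root_.posPart m + w ∧ c = _root_.negPart m + w := by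
    refine ⟨fun i => min (b i) (c i), ?_, ?_⟩ <;>
      · funext i
        simp only [Pi.add_apply, _root_.posPart, _root_.negPart, hm, Pi.sub_apply, natToInt]
        omega
  have hmem : moveBinomial k m ∈ Ideal.span (moveBinomial k '' (↑M : Set (Fin n → ℤ))) :=
    Ideal.subset_span ⟨m, h, rfl⟩
  have : natMonomial k b - natMonomial k c = moveBinomial k m * natMonomial k w := by
    rw [hb, hc, natMonomial_add, natMonomial_add, moveBinomial, sub_mul]
  rw [this]
  exact Ideal.mul_mem_right _ _ hmem

/-- The single-step move relation on fibers. -/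
def moveStep (M : Finset (Fin n → ℤ)) (a b : Fin n → ℕ) : Prop :=
  natToInt a - natToInt b ∈ M ∨ natToInt b - natToInt a ∈ M

lemma moveStep_symm (M : Finset (Fin n → ℤ)) : Symmetric (moveStep M) :=
  fun _ _ h => h.symm

/-- The setoid of connectivity by moves. -/
def moveSetoid (M : Finset (Fin n → ℤ)) : Setoid (Fin n → ℕ) where
  r := Relation.ReflTransGen (moveStep M)
  iseqv := ⟨fun _ => .refl,
    fun h => by
      induction h with
      | refl => exact .refl
      | tail _ hs ih => exact Relation.ReflTransGen.head (moveStep_symm M hs) ih,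
    fun h h' => h.trans h'⟩

/-- The linear map sending each monomial to the indicator of its connected component. -/
noncomputable def compMap (M : Finset (Fin n → ℤ)) :
    MvPolynomial (Fin n) k →ₗ[k] (Quotient (moveSetoid M) →₀ k) :=
  Finsupp.lmapDomain k k (fun s : Fin n →₀ ℕ => Quotient.mk (moveSetoid M) ⇑s) ∘ₗ
    (AddMonoidAlgebra.coeffLinearEquiv k).toLinearMap

lemma compMap_natMonomial (M : Finset (Fin n → ℤ)) (u : Fin n → ℕ) :
    compMap k M (natMonomial k u) = Finsupp.single (Quotient.mk (moveSetoid M) u) 1 := by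
  rw [natMonomial, compMap]
  show Finsupp.mapDomain _ (Finsupp.single _ _ : (Fin n →₀ ℕ) →₀ k) = _
  rw [Finsupp.mapDomain_single]
  congr 1

lemma compMap_monomial (M : Finset (Fin n → ℤ)) (a : Fin n →₀ ℕ) (c : k) :
    compMap k M (MvPolynomial.monomial a c)
      = Finsupp.single (Quotient.mk (moveSetoid M) ⇑a) c := by
  rw [compMap]
  show Finsupp.mapDomain _ (Finsupp.single _ _ : (Fin n →₀ ℕ) →₀ k) = _
  rw [Finsupp.mapDomain_single]

lemma compMap_vanishes (M : Finset (Fin n → ℤ)) (p : MvPolynomial (Fin n) k)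
    (hp : p ∈ Ideal.span (moveBinomial k '' (↑M : Set (Fin n → ℤ)))) :
    compMap k M p = 0 := by
  have key : ∀ q ∈ Ideal.span (moveBinomial k '' (↑M : Set (Fin n → ℤ))),
      ∀ r : MvPolynomial (Fin n) k, compMap k M (r * q) = 0 := by
    intro q hq
    refine Submodule.span_induction (p := fun q _ => ∀ r, compMap k M (r * q) = 0)
      ?_ ?_ ?_ ?_ hq
    · rintro x ⟨m, hmM, rfl⟩ r
      induction r using MvPolynomial.induction_on' with
      | monomial a c =>
        rw [moveBinomial, natMonomial, natMonomial, mul_sub, MvPolynomial.monomial_mul,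
          MvPolynomial.monomial_mul, mul_one, map_sub, compMap_monomial, compMap_monomial]
        have hcoe : ∀ v : Fin n → ℕ, ⇑(a + Finsupp.equivFunOnFinite.symm v) = ⇑a + v := by
          intro v; funext i; simp
        rw [hcoe, hcoe]
        have hstep : moveStep M (⇑a + _root_.posPart m) (⇑a + _root_.negPart m) := by
          left
          have : natToInt (⇑a + _root_.posPart m) - natToInt (⇑a + _root_.negPart m) = m := by
            funext i
            simp only [natToInt, Pi.add_apply, Pi.sub_apply, _root_.posPart, _root_.negPart]
            omega
          rw [this]; exact hmM
        have : Quotient.mk (moveSetoid M) (⇑a + _root_.posPart m)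
            = Quotient.mk (moveSetoid M) (⇑a + _root_.negPart m) :=
          Quotient.sound (Relation.ReflTransGen.single hstep)
        rw [this, sub_self]
      | add p q hp hq => rw [add_mul, map_add, hp, hq, add_zero]
    · intro r; rw [mul_zero, map_zero]
    · intro x y _ _ hx hy r; rw [mul_add, map_add, hx r, hy r, add_zero]
    · intro a x _ hx r
      rw [smul_eq_mul, ← mul_assoc]
      exact hx (r * a)
  have := key p hp 1
  rwa [one_mul] at this

end Aux

/-- fundamental theorem of Markov bases: a finite set `M ⊆ ker A` generates
`I_A` iff for every fiber the graph `G_{M,t}` (edges given by moves `±M`) is connected. -/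
theorem fundamental_theorem_of_markov_bases (k : Type*) [Field k] {d n : ℕ}
    (A : Matrix (Fin d) (Fin n) ℤ) (hA : IsConfiguration A)
    (M : Finset (Fin n → ℤ)) (hM : ∀ u ∈ M, A.mulVec u = 0) :
    Ideal.span (moveBinomial k '' (↑M : Set (Fin n → ℤ))) = toricIdeal k A ↔
      ∀ t : Fin d → ℤ, (∃ x : Fin n → ℕ, A.mulVec (natToInt x) = t) →
        ∀ u v : Fin n → ℕ, A.mulVec (natToInt u) = t → A.mulVec (natToInt v) = t →
          Relation.ReflTransGen
            (fun a b : Fin n → ℕ =>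
              natToInt a - natToInt b ∈ M ∨ natToInt b - natToInt a ∈ M)
            u v := by
  constructor
  · -- generation implies connectivity
    intro hspan t _ u v hu hv
    have hmem : natMonomial k u - natMonomial k v
        ∈ Ideal.span (moveBinomial k '' (↑M : Set (Fin n → ℤ))) := by
      rw [hspan]
      exact Ideal.subset_span ⟨u, v, hu.trans hv.symm, rfl⟩
    have h0 := compMap_vanishes k M _ hmem
    rw [map_sub, compMap_natMonomial, compMap_natMonomial, sub_eq_zero] at h0
    have h1 : Quotient.mk (moveSetoid M) u = Quotient.mk (moveSetoid M) v :=
      (Finsupp.single_left_inj (one_ne_zero)).mp h0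
    exact Quotient.exact h1
  · -- connectivity implies generation
    intro hconn
    apply le_antisymm
    · -- span of move binomials ⊆ toric ideal
      rw [Ideal.span_le]
      rintro p ⟨m, hmM, rfl⟩
      refine Ideal.subset_span ⟨_root_.posPart m, _root_.negPart m, ?_, rfl⟩
      have : A.mulVec (natToInt (_root_.posPart m)) - A.mulVec (natToInt (_root_.negPart m)) = 0 := by
        rw [← Matrix.mulVec_sub, natToInt_posPart_sub_negPart]
        exact hM m hmM
      exact sub_eq_zero.mp this
    · rw [toricIdeal, Ideal.span_le]
      rintro p ⟨u, v, huv, rfl⟩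
      have hpath := hconn (A.mulVec (natToInt u)) ⟨u, rfl⟩ u v rfl huv.symm
      clear huv
      induction hpath with
      | refl =>
        rw [sub_self]
        exact Submodule.zero_mem _
      | @tail b c _ hstep ih =>
        have hbc : natMonomial k b - natMonomial k c
            ∈ Ideal.span (moveBinomial k '' (↑M : Set (Fin n → ℤ))) := by
          rcases hstep with h | h
          · exact step_mem_span k M b c h
          · have := step_mem_span k M c b h
            have h2 : natMonomial k b - natMonomial k c
                = -(natMonomial k c - natMonomial k b) := by ring
            rw [h2]; exact neg_mem this
        have : natMonomial k u - natMonomial k c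
            = (natMonomial k u - natMonomial k b) + (natMonomial k b - natMonomial k c) := by
          ring
        rw [this]
        exact add_mem ih hbc
end

section
/- For the matrix A = (1 2 3) ∈ ℤ^{1×3}, the toric ideal I_A ⊆ k[x,y,z] has exactly two minimal binomial generating sets up to sign of the binomials, namely {x² − y, x³ − z} and {x² − y, xy − z}. -/
open MvPolynomial

/-- `p` is a binomial of the toric ideal of `A`. -/
def IsBinomialOf (k : Type*) [Field k] {d n : ℕ} (A : Matrix (Fin d) (Fin n) ℤ)
    (p : MvPolynomial (Fin n) k) : Prop :=
  ∃ u v : Fin n → ℕ, A.mulVec (natToInt u) = A.mulVec (natToInt v) ∧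
    p = natMonomial k u - natMonomial k v

/-- `B` is a minimal binomial generating set of the toric ideal of `A`. -/
def IsMinimalBinomialGenSet (k : Type*) [Field k] {d n : ℕ} (A : Matrix (Fin d) (Fin n) ℤ)
    (B : Set (MvPolynomial (Fin n) k)) : Prop :=
  (∀ p ∈ B, IsBinomialOf k A p) ∧ Ideal.span B = toricIdeal k A ∧
    ∀ p ∈ B, Ideal.span (B \ {p}) ≠ toricIdeal k A

/-- Two sets of polynomials coincide up to sign of their elements. -/
def SameUpToSign {n : ℕ} {k : Type*} [Field k]
    (B C : Set (MvPolynomial (Fin n) k)) : Prop :=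
  ∀ p, (p ∈ B ∨ -p ∈ B) ↔ (p ∈ C ∨ -p ∈ C)

section Aux

variable {k : Type*} [Field k]

local notation "R" => MvPolynomial (Fin 3) k
local notation "A123" => (!![1, 2, 3] : Matrix (Fin 1) (Fin 3) ℤ)

lemma natMonomial_eq (u : Fin 3 → ℕ) :
    natMonomial k u = X 0 ^ u 0 * X 1 ^ u 1 * X 2 ^ u 2 := by
  rw [natMonomial, monomial_eq, Finsupp.prod_fintype _ _ (fun i => pow_zero _),
    Fin.prod_univ_three]
  simp [Finsupp.equivFunOnFinite_symm_apply_apply]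

lemma mulVec_eq_iff (u v : Fin 3 → ℕ) :
    Matrix.mulVec A123 (natToInt u) = Matrix.mulVec A123 (natToInt v) ↔
    u 0 + 2 * u 1 + 3 * u 2 = v 0 + 2 * v 1 + 3 * v 2 := by
  have me : ∀ w : Fin 3 → ℕ, Matrix.mulVec A123 (natToInt w) =
      fun _ => (w 0 : ℤ) + 2 * w 1 + 3 * w 2 := by
    intro w; funext i; fin_cases i
    simp [Matrix.mulVec, dotProduct, natToInt, Fin.sum_univ_three]
  rw [me, me]
  constructor
  · intro h; have := congrFun h 0; omega
  · intro h; funext i; omega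

/-- `toricIdeal ≤ J` whenever `J` contains the two basic relations. -/
lemma toric_le (J : Ideal R)
    (h1 : X 0 ^ 2 - X 1 ∈ J) (h2 : X 0 ^ 3 - X 2 ∈ J) :
    toricIdeal k A123 ≤ J := by
  rw [toricIdeal, Ideal.span_le]
  rintro p ⟨u, v, huv, rfl⟩
  rw [mulVec_eq_iff] at huv
  rw [SetLike.mem_coe, ← Ideal.Quotient.mk_eq_mk_iff_sub_mem]
  set Q := Ideal.Quotient.mk J with hQ
  have e1 : Q (X 1) = Q (X 0) ^ 2 := by
    rw [← map_pow]; rw [Ideal.Quotient.mk_eq_mk_iff_sub_mem]; simpa using J.neg_mem h1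
  have e2 : Q (X 2) = Q (X 0) ^ 3 := by
    rw [← map_pow]; rw [Ideal.Quotient.mk_eq_mk_iff_sub_mem]; simpa using J.neg_mem h2
  have key : ∀ w : Fin 3 → ℕ, Q (natMonomial k w) = Q (X 0) ^ (w 0 + 2 * w 1 + 3 * w 2) := by
    intro w
    rw [natMonomial_eq, map_mul, map_mul, map_pow, map_pow, map_pow, e1, e2,
      ← pow_mul, ← pow_mul, ← pow_add, ← pow_add]
  rw [key, key, huv]

-- binomial normal forms
lemma hb1 : (X 0 ^ 2 - X 1 : R) = natMonomial k ![2,0,0] - natMonomial k ![0,1,0] := by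
  rw [natMonomial_eq, natMonomial_eq]; simp

lemma hb2 : (X 0 ^ 3 - X 2 : R) = natMonomial k ![3,0,0] - natMonomial k ![0,0,1] := by
  rw [natMonomial_eq, natMonomial_eq]; simp

lemma hb3 : (X 0 * X 1 - X 2 : R) = natMonomial k ![1,1,0] - natMonomial k ![0,0,1] := by
  rw [natMonomial_eq, natMonomial_eq]; simp

lemma hb4 : (X 0 * (X 0 ^ 2 - X 1) : R) = natMonomial k ![3,0,0] - natMonomial k ![1,1,0] := by
  rw [natMonomial_eq, natMonomial_eq]; simp; ring

lemma neg_nm (u v : Fin 3 → ℕ) :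
    -(natMonomial k u - natMonomial k v) = natMonomial k v - natMonomial k u := neg_sub _ _

lemma cNM (u v w : Fin 3 → ℕ) :
    coeff (Finsupp.equivFunOnFinite.symm w) (natMonomial k u - natMonomial k v) =
      (if u = w then (1:k) else 0) - (if v = w then 1 else 0) := by
  rw [coeff_sub, natMonomial, natMonomial, coeff_monomial, coeff_monomial]
  simp [Equiv.apply_eq_iff_eq]

lemma ne_of_coeff {p q : R} (w : Fin 3 →₀ ℕ) (h : coeff w p ≠ coeff w q) : p ≠ q :=
  fun e => h (by rw [e])

-- the members of toricIdeal
lemma mem_toric (u v : Fin 3 → ℕ) (h : u 0 + 2 * u 1 + 3 * u 2 = v 0 + 2 * v 1 + 3 * v 2) :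
    natMonomial k u - natMonomial k v ∈ toricIdeal k A123 :=
  Ideal.subset_span ⟨u, v, (mulVec_eq_iff u v).mpr h, rfl⟩

lemma mem_toric1 : (X 0 ^ 2 - X 1 : R) ∈ toricIdeal k A123 := by
  rw [hb1]; exact mem_toric _ _ (by decide)

lemma mem_toric2 : (X 0 ^ 3 - X 2 : R) ∈ toricIdeal k A123 := by
  rw [hb2]; exact mem_toric _ _ (by decide)

lemma mem_toric3 : (X 0 * X 1 - X 2 : R) ∈ toricIdeal k A123 := by
  rw [hb3]; exact mem_toric _ _ (by decide)

lemma span1_eq : Ideal.span ({X 0 ^ 2 - X 1, X 0 ^ 3 - X 2} : Set R) = toricIdeal k A123 := by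
  refine le_antisymm ?_ (toric_le _ ?_ ?_)
  · rw [Ideal.span_le]
    rintro p (rfl | rfl)
    · exact mem_toric1
    · exact mem_toric2
  · exact Ideal.subset_span (Set.mem_insert _ _)
  · exact Ideal.subset_span (Set.mem_insert_of_mem _ rfl)

lemma span2_eq : Ideal.span ({X 0 ^ 2 - X 1, X 0 * X 1 - X 2} : Set R) = toricIdeal k A123 := by
  refine le_antisymm ?_ (toric_le _ ?_ ?_)
  · rw [Ideal.span_le]
    rintro p (rfl | rfl)
    · exact mem_toric1
    · exact mem_toric3
  · exact Ideal.subset_span (Set.mem_insert _ _)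
  · exact Ideal.mem_span_pair.mpr ⟨X 0, 1, by ring⟩

end Aux
section Aux2
variable {k : Type*} [Field k]
local notation "R" => MvPolynomial (Fin 3) k
local notation "A123" => (!![1, 2, 3] : Matrix (Fin 1) (Fin 3) ℤ)

/-- The ideal of polynomials all of whose monomials have weighted degree `≥ c`
(weights 1,2,3). -/
def Wge (k : Type*) [Field k] (c : ℕ) : Ideal (MvPolynomial (Fin 3) k) where
  carrier := {p | ∀ m ∈ p.support, c ≤ m 0 + 2 * m 1 + 3 * m 2}
  zero_mem' := by simp
  add_mem' := by
    intro p q hp hq m hm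
    rcases Finset.mem_union.mp (MvPolynomial.support_add hm) with h | h
    · exact hp m h
    · exact hq m h
  smul_mem' := by
    intro r p hp m hm
    rw [smul_eq_mul] at hm
    obtain ⟨m1, hm1, m2, hm2, rfl⟩ := Finset.mem_add.mp (MvPolynomial.support_mul r p hm)
    have := hp m2 hm2
    simp only [Finsupp.add_apply]
    omega

lemma nm_sub_mem_Wge {c : ℕ} (u v : Fin 3 → ℕ)
    (hu : c ≤ u 0 + 2 * u 1 + 3 * u 2) (hv : c ≤ v 0 + 2 * v 1 + 3 * v 2) :
    natMonomial k u - natMonomial k v ∈ Wge k c := by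
  intro m hm
  have h := MvPolynomial.support_sub (Fin 3) (natMonomial k u) (natMonomial k v) hm
  rw [natMonomial, natMonomial] at h
  rcases Finset.mem_union.mp h with h | h <;>
  · have h2 := MvPolynomial.support_monomial_subset h
    rw [Finset.mem_singleton] at h2
    subst h2
    simpa [Finsupp.equivFunOnFinite_symm_apply_apply] using (by assumption : _)

lemma Wge_mono {c c' : ℕ} (h : c' ≤ c) : Wge k c ≤ Wge k c' :=
  fun p hp m hm => le_trans h (hp m hm)

lemma x2y_not_mem_Wge3 : (X 0 ^ 2 - X 1 : R) ∉ Wge k 3 := by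
  intro h
  have := h (Finsupp.equivFunOnFinite.symm ![0,1,0]) (by
    rw [MvPolynomial.mem_support_iff, hb1, cNM, if_neg (by decide), if_pos rfl]
    norm_num)
  simp [Finsupp.equivFunOnFinite_symm_apply_apply] at this
end Aux2
section Aux3
variable {k : Type*} [Field k]
local notation "R" => MvPolynomial (Fin 3) k
local notation "A123" => (!![1, 2, 3] : Matrix (Fin 1) (Fin 3) ℤ)

lemma x3z_not_mem_K :
    (X 0 ^ 3 - X 2 : R) ∉ Ideal.span {(X 0 ^ 2 - X 1 : R)} ⊔ Wge k 4 := by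
  intro h
  obtain ⟨a, ha, w, hw, hsum⟩ := Submodule.mem_sup.mp h
  obtain ⟨f, rfl⟩ := Ideal.mem_span_singleton'.mp ha
  set μ : Fin 3 →₀ ℕ := Finsupp.equivFunOnFinite.symm ![0,0,1] with hμ
  have hμ0 : μ 0 = 0 := by simp [hμ, Finsupp.equivFunOnFinite_symm_apply_apply]
  have hμ1 : μ 1 = 0 := by simp [hμ, Finsupp.equivFunOnFinite_symm_apply_apply]
  have hc := congrArg (coeff μ) hsum
  have hcw : coeff μ w = 0 := by
    by_contra hne
    have := hw μ (MvPolynomial.mem_support_iff.mpr hne)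
    simp [hμ, Finsupp.equivFunOnFinite_symm_apply_apply] at this
  have hmul : f * (X 0 ^ 2 - X 1) = (f * X 0) * X 0 - f * X 1 := by ring
  have c1 : coeff μ ((f * X 0) * X 0) = 0 := by rw [coeff_mul_X', if_neg (by simp [hμ0])]
  have c2 : coeff μ (f * X 1) = 0 := by rw [coeff_mul_X', if_neg (by simp [hμ1])]
  rw [coeff_add, hcw, add_zero, hmul, coeff_sub, c1, c2, sub_zero, hb2, hμ, cNM,
    if_neg (by decide), if_pos rfl] at hc
  norm_num at hc

lemma deg2_cases (u : Fin 3 → ℕ) (h : u 0 + 2 * u 1 + 3 * u 2 = 2) :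
    u = ![2,0,0] ∨ u = ![0,1,0] := by
  have h' : (u 0 = 2 ∧ u 1 = 0 ∧ u 2 = 0) ∨ (u 0 = 0 ∧ u 1 = 1 ∧ u 2 = 0) := by omega
  rcases h' with ⟨h0, h1, h2⟩ | ⟨h0, h1, h2⟩ <;> [left; right] <;>
    (funext i; fin_cases i <;> simp [h0, h1, h2])

lemma deg3_cases (u : Fin 3 → ℕ) (h : u 0 + 2 * u 1 + 3 * u 2 = 3) :
    u = ![3,0,0] ∨ u = ![1,1,0] ∨ u = ![0,0,1] := by
  have h' : (u 0 = 3 ∧ u 1 = 0 ∧ u 2 = 0) ∨ (u 0 = 1 ∧ u 1 = 1 ∧ u 2 = 0) ∨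
      (u 0 = 0 ∧ u 1 = 0 ∧ u 2 = 1) := by omega
  rcases h' with ⟨h0, h1, h2⟩ | ⟨h0, h1, h2⟩ | ⟨h0, h1, h2⟩ <;> [left; (right; left); (right; right)] <;>
    (funext i; fin_cases i <;> simp [h0, h1, h2])

lemma degle1_cases (u v : Fin 3 → ℕ) (huv : u 0 + 2*u 1 + 3*u 2 = v 0 + 2*v 1 + 3*v 2)
    (h : u 0 + 2 * u 1 + 3 * u 2 ≤ 1) : u = v := by
  funext i; fin_cases i <;> simp <;> omega

/-- Every nonzero binomial of the toric ideal is (up to the listed forms)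
one of the small-degree binomials or lies in `Wge 4`. -/
lemma binom_cases {p : R} (hp : IsBinomialOf k A123 p) (hne : p ≠ 0) :
    p = X 0 ^ 2 - X 1 ∨ p = -(X 0 ^ 2 - X 1) ∨
    p = X 0 ^ 3 - X 2 ∨ p = -(X 0 ^ 3 - X 2) ∨
    p = X 0 * X 1 - X 2 ∨ p = -(X 0 * X 1 - X 2) ∨
    p = X 0 * (X 0 ^ 2 - X 1) ∨ p = -(X 0 * (X 0 ^ 2 - X 1)) ∨
    p ∈ Wge k 4 := by
  obtain ⟨u, v, huv, rfl⟩ := hp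
  rw [mulVec_eq_iff] at huv
  have hune : u ≠ v := by rintro rfl; exact hne (sub_self _)
  by_cases hd4 : 4 ≤ u 0 + 2 * u 1 + 3 * u 2
  · exact Or.inr <| Or.inr <| Or.inr <| Or.inr <| Or.inr <| Or.inr <| Or.inr <| Or.inr <|
      nm_sub_mem_Wge u v hd4 (huv ▸ hd4)
  · have hdd : u 0 + 2 * u 1 + 3 * u 2 = 0 ∨ u 0 + 2 * u 1 + 3 * u 2 = 1 ∨
        u 0 + 2 * u 1 + 3 * u 2 = 2 ∨ u 0 + 2 * u 1 + 3 * u 2 = 3 := by omega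
    rcases hdd with hdeg | hdeg | hdeg | hdeg
    · exact absurd (degle1_cases u v huv (by omega)) hune
    · exact absurd (degle1_cases u v huv (by omega)) hune
    · rcases deg2_cases u (by omega) with rfl | rfl <;>
        rcases deg2_cases v (by omega) with rfl | rfl
      · exact absurd rfl hune
      · exact Or.inl (by rw [hb1])
      · exact Or.inr <| Or.inl (by rw [hb1, neg_sub])
      · exact absurd rfl hune
    · rcases deg3_cases u (by omega) with rfl | rfl | rfl <;>
        rcases deg3_cases v (by omega) with rfl | rfl | rfl
      · exact absurd rfl hune
      · exact Or.inr <| Or.inr <| Or.inr <| Or.inr <| Or.inr <| Or.inr <| Or.inl (by rw [hb4])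
      · exact Or.inr <| Or.inr <| Or.inl (by rw [hb2])
      · exact Or.inr <| Or.inr <| Or.inr <| Or.inr <| Or.inr <| Or.inr <| Or.inr <| Or.inl
          (by rw [hb4, neg_sub])
      · exact absurd rfl hune
      · exact Or.inr <| Or.inr <| Or.inr <| Or.inr <| Or.inl (by rw [hb3])
      · exact Or.inr <| Or.inr <| Or.inr <| Or.inl (by rw [hb2, neg_sub])
      · exact Or.inr <| Or.inr <| Or.inr <| Or.inr <| Or.inr <| Or.inl (by rw [hb3, neg_sub])
      · exact absurd rfl hune
end Aux3
section Aux4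
variable {k : Type*} [Field k]
local notation "R" => MvPolynomial (Fin 3) k
local notation "A123" => (!![1, 2, 3] : Matrix (Fin 1) (Fin 3) ℤ)

lemma hb2' : (-(X 0 ^ 3 - X 2) : R) = natMonomial k ![0,0,1] - natMonomial k ![3,0,0] := by
  rw [hb2, neg_sub]

lemma ne_12 : (X 0 ^ 2 - X 1 : R) ≠ X 0 ^ 3 - X 2 := by
  apply ne_of_coeff (Finsupp.equivFunOnFinite.symm ![0,1,0])
  rw [hb1, hb2, cNM, cNM, if_neg (by decide), if_pos rfl, if_neg (by decide),
    if_neg (by decide)]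
  norm_num

lemma ne_13 : (X 0 ^ 2 - X 1 : R) ≠ X 0 * X 1 - X 2 := by
  apply ne_of_coeff (Finsupp.equivFunOnFinite.symm ![0,1,0])
  rw [hb1, hb3, cNM, cNM, if_neg (by decide), if_pos rfl, if_neg (by decide),
    if_neg (by decide)]
  norm_num

lemma ne_23 : (X 0 ^ 3 - X 2 : R) ≠ X 0 * X 1 - X 2 := by
  apply ne_of_coeff (Finsupp.equivFunOnFinite.symm ![3,0,0])
  rw [hb2, hb3, cNM, cNM, if_pos rfl, if_neg (by decide), if_neg (by decide)]
  norm_num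

lemma ne_n21 : (-(X 0 ^ 3 - X 2) : R) ≠ X 0 ^ 2 - X 1 := by
  apply ne_of_coeff (Finsupp.equivFunOnFinite.symm ![0,0,1])
  rw [hb2', hb1, cNM, cNM]
  have h1 : (![3,0,0] : Fin 3 → ℕ) ≠ ![0,0,1] := by decide
  have h2 : (![2,0,0] : Fin 3 → ℕ) ≠ ![0,0,1] := by decide
  have h3 : (![0,1,0] : Fin 3 → ℕ) ≠ ![0,0,1] := by decide
  simp only [if_pos rfl, if_neg h1, if_neg h2, if_neg h3]
  norm_num

lemma ne_n23 : (-(X 0 ^ 3 - X 2) : R) ≠ X 0 * X 1 - X 2 := by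
  apply ne_of_coeff (Finsupp.equivFunOnFinite.symm ![3,0,0])
  rw [hb2', hb3, cNM, cNM]
  have h1 : (![0,0,1] : Fin 3 → ℕ) ≠ ![3,0,0] := by decide
  have h2 : (![1,1,0] : Fin 3 → ℕ) ≠ ![3,0,0] := by decide
  simp only [if_pos rfl, if_neg h1, if_neg h2]
  norm_num

lemma ne_zero1 : (X 0 ^ 2 - X 1 : R) ≠ 0 := by
  apply ne_of_coeff (Finsupp.equivFunOnFinite.symm ![2,0,0])
  rw [hb1, cNM, if_pos rfl, if_neg (by decide), coeff_zero]
  norm_num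

lemma ne_zero2 : (X 0 ^ 3 - X 2 : R) ≠ 0 := by
  apply ne_of_coeff (Finsupp.equivFunOnFinite.symm ![3,0,0])
  rw [hb2, cNM, if_pos rfl, if_neg (by decide), coeff_zero]
  norm_num

lemma span_pair_congr {a b a' b' : R} (h1 : a = a' ∨ a = -a') (h2 : b = b' ∨ b = -b') :
    Ideal.span {a, b} = Ideal.span {a', b'} := by
  have mem_l : ∀ x y z : MvPolynomial (Fin 3) k, (x = y ∨ x = -y) →
      x ∈ Ideal.span ({y, z} : Set (MvPolynomial (Fin 3) k)) := by
    rintro x y z (rfl | rfl)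
    · exact Ideal.subset_span (Set.mem_insert _ _)
    · exact neg_mem (Ideal.subset_span (Set.mem_insert _ _))
  have mem_r : ∀ x y z : MvPolynomial (Fin 3) k, (x = y ∨ x = -y) →
      x ∈ Ideal.span ({z, y} : Set (MvPolynomial (Fin 3) k)) := by
    rintro x y z (rfl | rfl)
    · exact Ideal.subset_span (Set.mem_insert_of_mem _ rfl)
    · exact neg_mem (Ideal.subset_span (Set.mem_insert_of_mem _ rfl))
  have h1' : a' = a ∨ a' = -a := by rcases h1 with rfl | rfl <;> simp
  have h2' : b' = b ∨ b' = -b := by rcases h2 with rfl | rfl <;> simp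
  apply le_antisymm <;> rw [Ideal.span_le] <;> rintro x (rfl | rfl)
  · exact mem_l _ _ _ h1
  · exact mem_r _ _ _ h2
  · exact mem_l _ _ _ h1'
  · exact mem_r _ _ _ h2'

lemma same_pair {a b a' b' : MvPolynomial (Fin 3) k} (h1 : a = a' ∨ a = -a')
    (h2 : b = b' ∨ b = -b') :
    SameUpToSign ({a, b} : Set (MvPolynomial (Fin 3) k)) {a', b'} := by
  intro p
  simp only [Set.mem_insert_iff, Set.mem_singleton_iff]
  rcases h1 with rfl | rfl <;> rcases h2 with rfl | rfl <;>
    constructor <;> rintro ((rfl | rfl) | h | h) <;>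
    simp_all [neg_eq_iff_eq_neg] <;> tauto

lemma span_single_ne (g : R) (t : Fin 3 → R) (hk : MvPolynomial.aeval t g = 0)
    (w : R) (hw : w ∈ toricIdeal k A123) (hne : MvPolynomial.aeval t w ≠ 0) :
    Ideal.span ({g} : Set R) ≠ toricIdeal k A123 := by
  intro h
  apply hne
  have hle : Ideal.span ({g} : Set R) ≤ RingHom.ker (MvPolynomial.aeval t).toRingHom := by
    rw [Ideal.span_le, Set.singleton_subset_iff]
    exact hk
  exact hle (h ▸ hw)
end Aux4

/-- for `A = (1 2 3)`, the toric ideal has exactly two minimal binomial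
generating sets up to sign: `{x² - y, x³ - z}` and `{x² - y, xy - z}`. -/
theorem two_minimal_generating_sets_123 (k : Type*) [Field k] :
    IsMinimalBinomialGenSet k (!![1, 2, 3] : Matrix (Fin 1) (Fin 3) ℤ)
      ({X 0 ^ 2 - X 1, X 0 ^ 3 - X 2} : Set (MvPolynomial (Fin 3) k)) ∧
    IsMinimalBinomialGenSet k (!![1, 2, 3] : Matrix (Fin 1) (Fin 3) ℤ)
      ({X 0 ^ 2 - X 1, X 0 * X 1 - X 2} : Set (MvPolynomial (Fin 3) k)) ∧
    ¬ SameUpToSign ({X 0 ^ 2 - X 1, X 0 ^ 3 - X 2} : Set (MvPolynomial (Fin 3) k))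
        ({X 0 ^ 2 - X 1, X 0 * X 1 - X 2} : Set (MvPolynomial (Fin 3) k)) ∧
    ∀ B : Set (MvPolynomial (Fin 3) k),
      IsMinimalBinomialGenSet k (!![1, 2, 3] : Matrix (Fin 1) (Fin 3) ℤ) B →
        SameUpToSign B ({X 0 ^ 2 - X 1, X 0 ^ 3 - X 2} : Set (MvPolynomial (Fin 3) k)) ∨
        SameUpToSign B ({X 0 ^ 2 - X 1, X 0 * X 1 - X 2} : Set (MvPolynomial (Fin 3) k)) := by
  refine ⟨⟨?_, span1_eq, ?_⟩, ⟨?_, span2_eq, ?_⟩, ?_, ?_⟩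
  · -- binomials of the first set
    rintro p (rfl | rfl)
    · exact ⟨![2,0,0], ![0,1,0], (mulVec_eq_iff _ _).mpr (by decide), hb1⟩
    · exact ⟨![3,0,0], ![0,0,1], (mulVec_eq_iff _ _).mpr (by decide), hb2⟩
  · -- minimality of the first set
    rintro p (rfl | rfl)
    · rw [Set.pair_diff_left ne_12]
      exact span_single_ne _ (![X 0, X 1, X 0 ^ 3] : Fin 3 → MvPolynomial (Fin 3) k) (by simp) _ mem_toric1
        (by simpa using ne_zero1)
    · rw [Set.pair_diff_right ne_12]
      exact span_single_ne _ (![X 0, X 0 ^ 2, X 2] : Fin 3 → MvPolynomial (Fin 3) k) (by simp) _ mem_toric2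
        (by simpa using ne_zero2)
  · -- binomials of the second set
    rintro p (rfl | rfl)
    · exact ⟨![2,0,0], ![0,1,0], (mulVec_eq_iff _ _).mpr (by decide), hb1⟩
    · exact ⟨![1,1,0], ![0,0,1], (mulVec_eq_iff _ _).mpr (by decide), hb3⟩
  · -- minimality of the second set
    rintro p (rfl | rfl)
    · rw [Set.pair_diff_left ne_13]
      exact span_single_ne _ (![X 0, X 1, X 0 * X 1] : Fin 3 → MvPolynomial (Fin 3) k) (by simp) _ mem_toric1
        (by simpa using ne_zero1)
    · rw [Set.pair_diff_right ne_13]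
      refine span_single_ne _ (![X 0, X 0 ^ 2, X 2] : Fin 3 → MvPolynomial (Fin 3) k) (by simp) _ mem_toric3 ?_
      have he : (MvPolynomial.aeval (![X 0, X 0 ^ 2, X 2] : Fin 3 → MvPolynomial (Fin 3) k)) ((X 0 * X 1 - X 2 : MvPolynomial (Fin 3) k)) =
          (X 0 ^ 3 - X 2 : MvPolynomial (Fin 3) k) := by
        simp
        ring
      rw [he]
      exact ne_zero2
  · -- the two sets are not the same up to sign
    intro h
    have h2 := (h (X 0 ^ 3 - X 2)).mp (Or.inl (Set.mem_insert_of_mem _ rfl))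
    rcases h2 with (h2 | h2) | (h2 | h2)
    · exact ne_12 h2.symm
    · exact ne_23 h2
    · exact ne_n21 h2
    · exact ne_n23 h2
  · -- classification
    rintro B ⟨hbin, hspan, hmin⟩
    have h0 : (0 : MvPolynomial (Fin 3) k) ∉ B := by
      intro h0
      apply hmin 0 h0
      have he : Ideal.span (B \ {0}) = Ideal.span B := by
        apply le_antisymm (Ideal.span_mono Set.diff_subset)
        rw [Ideal.span_le]
        intro x hx
        by_cases hx0 : x = (0 : MvPolynomial (Fin 3) k)
        · subst hx0; exact (Ideal.span _).zero_mem
        · exact Ideal.subset_span ⟨hx, hx0⟩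
      rw [he, hspan]
    obtain ⟨p, hpB, hp⟩ : ∃ p ∈ B, p = X 0 ^ 2 - X 1 ∨ p = -(X 0 ^ 2 - X 1) := by
      by_contra hA
      push_neg at hA
      have hle : Ideal.span B ≤ Wge k 3 := by
        rw [Ideal.span_le]
        intro b hb
        have hbne : b ≠ 0 := fun e => h0 (e ▸ hb)
        rcases binom_cases (hbin b hb) hbne with h|h|h|h|h|h|h|h|h
        · exact absurd h (hA b hb).1
        · exact absurd h (hA b hb).2
        · rw [h, hb2]; exact nm_sub_mem_Wge _ _ (by decide) (by decide)
        · rw [h, hb2']; exact nm_sub_mem_Wge _ _ (by decide) (by decide)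
        · rw [h, hb3]; exact nm_sub_mem_Wge _ _ (by decide) (by decide)
        · rw [h, hb3, neg_sub]; exact nm_sub_mem_Wge _ _ (by decide) (by decide)
        · rw [h, hb4]; exact nm_sub_mem_Wge _ _ (by decide) (by decide)
        · rw [h, hb4, neg_sub]; exact nm_sub_mem_Wge _ _ (by decide) (by decide)
        · exact Wge_mono (by norm_num) h
      exact x2y_not_mem_Wge3 (hle (by rw [hspan]; exact mem_toric1))
    obtain ⟨q, hqB, hq⟩ : ∃ q ∈ B,
        (q = X 0 ^ 3 - X 2 ∨ q = -(X 0 ^ 3 - X 2)) ∨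
        (q = X 0 * X 1 - X 2 ∨ q = -(X 0 * X 1 - X 2)) := by
      by_contra hC
      push_neg at hC
      have hS : Ideal.span ({X 0 ^ 2 - X 1} : Set (MvPolynomial (Fin 3) k)) ≤
          Ideal.span ({X 0 ^ 2 - X 1} : Set (MvPolynomial (Fin 3) k)) ⊔ Wge k 4 :=
        le_sup_left
      have hW4 : Wge k 4 ≤
          Ideal.span ({X 0 ^ 2 - X 1} : Set (MvPolynomial (Fin 3) k)) ⊔ Wge k 4 :=
        le_sup_right
      have hle : Ideal.span B ≤
          Ideal.span ({X 0 ^ 2 - X 1} : Set (MvPolynomial (Fin 3) k)) ⊔ Wge k 4 := by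
        rw [Ideal.span_le]
        intro b hb
        have hbne : b ≠ 0 := fun e => h0 (e ▸ hb)
        rcases binom_cases (hbin b hb) hbne with h|h|h|h|h|h|h|h|h
        · rw [h]; exact hS (Ideal.subset_span rfl)
        · rw [h]; exact neg_mem (hS (Ideal.subset_span rfl))
        · exact absurd h ((hC b hb).1).1
        · exact absurd h ((hC b hb).1).2
        · exact absurd h ((hC b hb).2).1
        · exact absurd h ((hC b hb).2).2
        · rw [h]; exact hS (Ideal.mem_span_singleton'.mpr ⟨X 0, rfl⟩)
        · rw [h]; exact neg_mem (hS (Ideal.mem_span_singleton'.mpr ⟨X 0, rfl⟩))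
        · exact hW4 h
      exact x3z_not_mem_K (hle (by rw [hspan]; exact mem_toric2))
    have hpq_span : Ideal.span ({p, q} : Set (MvPolynomial (Fin 3) k)) =
        toricIdeal k (!![1, 2, 3] : Matrix (Fin 1) (Fin 3) ℤ) := by
      rcases hq with hq2 | hq3
      · rw [span_pair_congr hp hq2]; exact span1_eq
      · rw [span_pair_congr hp hq3]; exact span2_eq
    have hBeq : B = {p, q} := by
      apply Set.Subset.antisymm
      · intro b hb
        by_contra hbpq
        apply hmin b hb
        apply le_antisymm ((Ideal.span_mono Set.diff_subset).trans (le_of_eq hspan))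
        rw [← hpq_span]
        apply Ideal.span_mono
        intro x hx
        refine ⟨?_, ?_⟩
        · rcases hx with hx | hx
          · rw [hx]; exact hpB
          · rw [Set.mem_singleton_iff.mp hx]; exact hqB
        · intro he
          rw [Set.mem_singleton_iff] at he
          apply hbpq
          rw [← he]
          exact hx
      · intro x hx
        rcases hx with hx | hx
        · rw [hx]; exact hpB
        · rw [Set.mem_singleton_iff.mp hx]; exact hqB
    subst hBeq
    rcases hq with hq2 | hq3
    · exact Or.inl (same_pair hp hq2)
    · exact Or.inr (same_pair hp hq3)
end

section
/- For the matrix A = (1 2 3) ∈ ℤ^{1×3}, the universal Markov basis (the union of all minimal Markov bases, up to sign) is {(2,−1,0), (3,0,−1), (1,1,−1)}, i.e. corresponds to the binomials x² − y, x³ − z, xy − z. -/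
open MvPolynomial

/-! ### Auxiliary development for `A = (1 2 3)` -/

namespace UM123

local notation "A₁₂₃" => (!![1, 2, 3] : Matrix (Fin 1) (Fin 3) ℤ)

variable (k : Type*) [Field k]

lemma symm_add (u v : Fin 3 → ℕ) : (Finsupp.equivFunOnFinite.symm (u + v) : Fin 3 →₀ ℕ)
    = Finsupp.equivFunOnFinite.symm u + Finsupp.equivFunOnFinite.symm v := by
  ext i; simp

lemma nm_mul (u v : Fin 3 → ℕ) : natMonomial k u * natMonomial k v = natMonomial k (u + v) := by
  simp [natMonomial, monomial_mul, symm_add]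

lemma symm_split (u : Fin 3 → ℕ) : (Finsupp.equivFunOnFinite.symm u : Fin 3 →₀ ℕ)
    = Finsupp.single 0 (u 0) + Finsupp.single 1 (u 1) + Finsupp.single 2 (u 2) := by
  ext i; fin_cases i <;> simp [Finsupp.single_apply]

lemma nm_eq (u : Fin 3 → ℕ) : natMonomial k u = X 0 ^ u 0 * X 1 ^ u 1 * X 2 ^ u 2 := by
  rw [X_pow_eq_monomial, X_pow_eq_monomial, X_pow_eq_monomial, monomial_mul, monomial_mul]
  rw [natMonomial, symm_split]
  norm_num

lemma coeff_nm (u : Fin 3 → ℕ) (m : Fin 3 →₀ ℕ) :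
    coeff m (natMonomial k u) = if Finsupp.equivFunOnFinite.symm u = m then 1 else 0 :=
  coeff_monomial m _ 1

lemma mulVec_app (w : Fin 3 → ℤ) :
    Matrix.mulVec A₁₂₃ w = fun _ => w 0 + 2 * w 1 + 3 * w 2 := by
  funext i
  fin_cases i
  simp [Matrix.mulVec, dotProduct, Fin.sum_univ_three]

/-- weighted degree -/
def D (u : Fin 3 → ℕ) : ℕ := u 0 + 2 * u 1 + 3 * u 2

lemma mulVec_nat (u : Fin 3 → ℕ) :
    Matrix.mulVec A₁₂₃ (natToInt u) = fun _ => (D u : ℤ) := by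
  rw [mulVec_app]
  funext i
  simp only [natToInt, D]
  push_cast
  ring

lemma mem_toric (u v : Fin 3 → ℕ) (h : D u = D v) :
    natMonomial k u - natMonomial k v ∈ toricIdeal k A₁₂₃ := by
  apply Ideal.subset_span
  exact ⟨u, v, by rw [mulVec_nat, mulVec_nat, h], rfl⟩

set_option linter.unnecessarySeqFocus false in
lemma reduce (J : Ideal (MvPolynomial (Fin 3) k))
    (h1 : natMonomial k ![2,0,0] - natMonomial k ![0,1,0] ∈ J)
    (w : Fin 3 → ℕ) (hw2 : w 2 = 0) (hDw : D w = 3)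
    (h2 : natMonomial k w - natMonomial k ![0,0,1] ∈ J) :
    ∀ u : Fin 3 → ℕ, natMonomial k u - natMonomial k ![D u, 0, 0] ∈ J := by
  suffices H : ∀ N : ℕ, ∀ u : Fin 3 → ℕ, u 1 + 2 * u 2 ≤ N →
      natMonomial k u - natMonomial k ![D u, 0, 0] ∈ J by
    exact fun u => H _ u le_rfl
  intro N
  induction N with
  | zero =>
    intro u hu
    have h1' : u 1 = 0 := by omega
    have h2' : u 2 = 0 := by omega
    have : ![D u, 0, 0] = u := by
      funext i; fin_cases i <;> simp [D, h1', h2']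
    rw [this, sub_self]
    exact J.zero_mem
  | succ N ih =>
    intro u hu
    by_cases hz : 0 < u 2
    · -- replace z by w
      set u' : Fin 3 → ℕ := ![u 0, u 1, u 2 - 1] with hu'
      have e1 : u = u' + ![0,0,1] := by
        funext i; fin_cases i <;> simp [hu'] <;> omega
      have key : natMonomial k u - natMonomial k (u' + w) ∈ J := by
        have : natMonomial k u - natMonomial k (u' + w)
            = (- natMonomial k u') * (natMonomial k w - natMonomial k ![0,0,1]) := by
          rw [e1, ← nm_mul, ← nm_mul]; ring
        rw [this]
        exact J.mul_mem_left _ h2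
      have hw1 : w 1 ≤ 1 := by simp [D] at hDw; omega
      have hm : (u' + w) 1 + 2 * (u' + w) 2 ≤ N := by
        simp [hu', hw2]; omega
      have hD : D (u' + w) = D u := by
        simp only [D, Pi.add_apply, hu'] at *
        simp at *
        omega
      have := ih (u' + w) hm
      rw [hD] at this
      have goal_eq : natMonomial k u - natMonomial k ![D u, 0, 0]
          = (natMonomial k u - natMonomial k (u' + w))
            + (natMonomial k (u' + w) - natMonomial k ![D u, 0, 0]) := by ring
      rw [goal_eq]
      exact J.add_mem key this
    · by_cases hy : 0 < u 1
      · set u' : Fin 3 → ℕ := ![u 0, u 1 - 1, u 2] with hu'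
        have e1 : u = u' + ![0,1,0] := by
          funext i; fin_cases i <;> simp [hu'] <;> omega
        have key : natMonomial k u - natMonomial k (u' + ![2,0,0]) ∈ J := by
          have : natMonomial k u - natMonomial k (u' + ![2,0,0])
              = (- natMonomial k u') * (natMonomial k ![2,0,0] - natMonomial k ![0,1,0]) := by
            rw [e1, ← nm_mul, ← nm_mul]; ring
          rw [this]
          exact J.mul_mem_left _ h1
        have hm : (u' + (![2,0,0] : Fin 3 → ℕ)) 1 + 2 * (u' + (![2,0,0] : Fin 3 → ℕ)) 2 ≤ N := by
          simp [hu']; omega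
        have hD : D (u' + ![2,0,0]) = D u := by
          simp only [D, Pi.add_apply, hu'] at *
          simp at *
          omega
        have := ih (u' + ![2,0,0]) hm
        rw [hD] at this
        have goal_eq : natMonomial k u - natMonomial k ![D u, 0, 0]
            = (natMonomial k u - natMonomial k (u' + ![2,0,0]))
              + (natMonomial k (u' + ![2,0,0]) - natMonomial k ![D u, 0, 0]) := by ring
        rw [goal_eq]
        exact J.add_mem key this
      · have h1' : u 1 = 0 := by omega
        have h2' : u 2 = 0 := by omega
        have : ![D u, 0, 0] = u := by
          funext i; fin_cases i <;> simp [D, h1', h2']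
        rw [this, sub_self]
        exact J.zero_mem

/-- The toric ideal equals the span of the two binomials, for either choice of second
generator. -/
lemma toric_eq_span (w : Fin 3 → ℕ) (hw2 : w 2 = 0) (hDw : D w = 3) :
    Ideal.span {natMonomial k ![2,0,0] - natMonomial k ![0,1,0],
      natMonomial k w - natMonomial k ![0,0,1]} = toricIdeal k A₁₂₃ := by
  apply le_antisymm
  · rw [Ideal.span_le]
    rintro p (rfl | rfl)
    · exact mem_toric k _ _ (by simp [D])
    · refine mem_toric k _ _ ?_
      simp only [D] at hDw ⊢
      simp
      omega
  · rw [toricIdeal, Ideal.span_le]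
    rintro p ⟨a, b, hab, rfl⟩
    set J := Ideal.span {natMonomial k ![2,0,0] - natMonomial k ![0,1,0],
      natMonomial k w - natMonomial k ![0,0,1]} with hJ
    have h1 : natMonomial k ![2,0,0] - natMonomial k ![0,1,0] ∈ J :=
      Ideal.subset_span (by left; rfl)
    have h2 : natMonomial k w - natMonomial k ![0,0,1] ∈ J :=
      Ideal.subset_span (by right; rfl)
    have hD : D a = D b := by
      rw [mulVec_nat, mulVec_nat] at hab
      have := congrFun hab 0
      simpa using this
    have ra := reduce k J h1 w hw2 hDw h2 a
    have rb := reduce k J h1 w hw2 hDw h2 b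
    rw [hD] at ra
    have : natMonomial k a - natMonomial k b
        = (natMonomial k a - natMonomial k ![D b, 0, 0])
          - (natMonomial k b - natMonomial k ![D b, 0, 0]) := by ring
    rw [this]
    exact J.sub_mem ra rb


/-! ### concrete moves -/

lemma posPart_m1 : _root_.posPart ![2,-1,0] = ![2,0,0] := by
  funext i; fin_cases i <;> rfl

lemma negPart_m1 : _root_.negPart ![2,-1,0] = ![0,1,0] := by
  funext i; fin_cases i <;> rfl

lemma posPart_m2 : _root_.posPart ![3,0,-1] = ![3,0,0] := by
  funext i; fin_cases i <;> rfl

lemma negPart_m2 : _root_.negPart ![3,0,-1] = ![0,0,1] := by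
  funext i; fin_cases i <;> rfl

lemma posPart_m3 : _root_.posPart ![1,1,-1] = ![1,1,0] := by
  funext i; fin_cases i <;> rfl

lemma negPart_m3 : _root_.negPart ![1,1,-1] = ![0,0,1] := by
  funext i; fin_cases i <;> rfl

lemma mb_m1 : moveBinomial k ![2,-1,0] = natMonomial k ![2,0,0] - natMonomial k ![0,1,0] := by
  rw [moveBinomial, posPart_m1, negPart_m1]

lemma mb_m2 : moveBinomial k ![3,0,-1] = natMonomial k ![3,0,0] - natMonomial k ![0,0,1] := by
  rw [moveBinomial, posPart_m2, negPart_m2]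

lemma mb_m3 : moveBinomial k ![1,1,-1] = natMonomial k ![1,1,0] - natMonomial k ![0,0,1] := by
  rw [moveBinomial, posPart_m3, negPart_m3]

lemma moveBinomial_neg (v : Fin 3 → ℤ) : moveBinomial k (-v) = - moveBinomial k v := by
  have h1 : _root_.posPart (-v) = _root_.negPart v := by funext i; simp [_root_.posPart, _root_.negPart]
  have h2 : _root_.negPart (-v) = _root_.posPart v := by funext i; simp [_root_.posPart, _root_.negPart]
  rw [moveBinomial, h1, h2, moveBinomial, neg_sub]

lemma span_pair_sign {R : Type*} [CommRing R] (p q p' q' : R)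
    (hp : p' = p ∨ p' = -p) (hq : q' = q ∨ q' = -q) :
    Ideal.span {p', q'} = Ideal.span {p, q} := by
  have mem : ∀ (a b : R), (a = b ∨ a = -b) → ∀ S : Set R, b ∈ S → a ∈ Ideal.span S := by
    rintro a b (rfl | rfl) S hb
    · exact Ideal.subset_span hb
    · exact neg_mem (Ideal.subset_span hb)
  have hp' : p = p' ∨ p = -p' := by
    rcases hp with rfl | rfl
    · left; rfl
    · right; rw [neg_neg]
  have hq' : q = q' ∨ q = -q' := by
    rcases hq with rfl | rfl
    · left; rfl
    · right; rw [neg_neg]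
  apply le_antisymm
  · rw [Ideal.span_le]
    rintro x (rfl | rfl)
    · exact mem _ _ hp _ (Set.mem_insert _ _)
    · exact mem _ _ hq _ (Set.mem_insert_of_mem _ rfl)
  · rw [Ideal.span_le]
    rintro x (rfl | rfl)
    · exact mem _ _ hp' _ (Set.mem_insert _ _)
    · exact mem _ _ hq' _ (Set.mem_insert_of_mem _ rfl)

/-- the two standard minimal Markov bases, with signs -/
lemma markov_pair (a b : Fin 3 → ℤ)
    (ha : a = ![2,-1,0] ∨ a = -![2,-1,0])
    (hb : b = ![3,0,-1] ∨ b = -![3,0,-1] ∨ b = ![1,1,-1] ∨ b = -![1,1,-1]) :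
    IsMarkovBasis k A₁₂₃ {a, b} := by
  constructor
  · rintro v (rfl | rfl) <;> rw [mulVec_app] <;>
      [rcases ha with rfl | rfl; rcases hb with rfl | rfl | rfl | rfl] <;>
      funext i <;> fin_cases i <;> simp
  · rw [Set.image_pair]
    have hpa : moveBinomial k a = moveBinomial k ![2,-1,0] ∨
        moveBinomial k a = -(moveBinomial k ![2,-1,0]) := by
      rcases ha with rfl | rfl
      · left; rfl
      · right; rw [moveBinomial_neg]
    rcases hb with rfl | rfl | rfl | rfl
    · rw [span_pair_sign _ _ _ _ hpa (Or.inl rfl), mb_m1, mb_m2]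
      exact toric_eq_span k ![3,0,0] rfl rfl
    · rw [span_pair_sign _ _ _ _ hpa (Or.inr (moveBinomial_neg k _)), mb_m1, mb_m2]
      exact toric_eq_span k ![3,0,0] rfl rfl
    · rw [span_pair_sign _ _ _ _ hpa (Or.inl rfl), mb_m1, mb_m3]
      exact toric_eq_span k ![1,1,0] rfl rfl
    · rw [span_pair_sign _ _ _ _ hpa (Or.inr (moveBinomial_neg k _)), mb_m1, mb_m3]
      exact toric_eq_span k ![1,1,0] rfl rfl

lemma aeval_nm (c : Fin 3 → MvPolynomial (Fin 3) k) (u : Fin 3 → ℕ) :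
    aeval c (natMonomial k u) = c 0 ^ u 0 * c 1 ^ u 1 * c 2 ^ u 2 := by
  rw [nm_eq]; simp

lemma not_markov_of (M' : Set (Fin 3 → ℤ)) (g : MvPolynomial (Fin 3) k)
    (c : Fin 3 → MvPolynomial (Fin 3) k)
    (hM' : ∀ p ∈ moveBinomial k '' M', aeval c p = 0)
    (hg : g ∈ toricIdeal k A₁₂₃) (hgφ : aeval c g ≠ 0) :
    ¬ IsMarkovBasis k A₁₂₃ M' := by
  intro h
  rw [← h.2] at hg
  apply hgφ
  have hle : Ideal.span (moveBinomial k '' M') ≤ RingHom.ker (aeval c).toRingHom :=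
    Ideal.span_le.mpr (fun p hp => RingHom.mem_ker.mpr (hM' p hp))
  exact RingHom.mem_ker.mp (hle hg)

lemma minimal_pair (b : Fin 3 → ℤ) (hb : b = ![3,0,-1] ∨ b = ![1,1,-1]) :
    ∀ M' ⊂ ({![2,-1,0], b} : Set (Fin 3 → ℤ)), ¬ IsMarkovBasis k A₁₂₃ M' := by
  intro M' hss
  have hsub : M' ⊆ {![2,-1,0], b} := subset_of_ssubset hss
  have hmiss : ¬ (![2,-1,0] ∈ M' ∧ b ∈ M') := by
    rintro ⟨h1, h2⟩
    exact hss.2 (Set.insert_subset h1 (Set.singleton_subset_iff.mpr h2))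
  by_cases hcase : ![2,-1,0] ∈ M'
  · have hbM : b ∉ M' := fun h => hmiss ⟨hcase, h⟩
    apply not_markov_of k M' (moveBinomial k b) ![X 0, X 0^2, 0]
    · rintro p ⟨v, hv, rfl⟩
      have hv1 : v = ![2,-1,0] := by
        rcases hsub hv with h | h
        · exact h
        · exact absurd (h ▸ hv) hbM
      subst hv1
      rw [mb_m1, map_sub, aeval_nm, aeval_nm]
      simp
    · rcases hb with rfl | rfl
      · rw [mb_m2]; exact mem_toric k _ _ (by simp [D])
      · rw [mb_m3]; exact mem_toric k _ _ (by simp [D])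
    · rcases hb with rfl | rfl
      · rw [mb_m2, map_sub, aeval_nm, aeval_nm]
        simp
      · rw [mb_m3, map_sub, aeval_nm, aeval_nm]
        simp
  · -- m1 missing, M' ⊆ {b}
    have hsub' : ∀ v ∈ M', v = b := by
      intro v hv
      rcases hsub hv with h | h
      · exact absurd (h ▸ hv) hcase
      · exact h
    rcases hb with rfl | rfl
    · apply not_markov_of k M' (moveBinomial k ![2,-1,0]) ![X 0, 0, X 0 ^ 3]
      · rintro p ⟨v, hv, rfl⟩
        rw [hsub' v hv, mb_m2, map_sub, aeval_nm, aeval_nm]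
        simp
      · rw [mb_m1]; exact mem_toric k _ _ (by simp [D])
      · rw [mb_m1, map_sub, aeval_nm, aeval_nm]
        simp
    · apply not_markov_of k M' (moveBinomial k ![2,-1,0]) ![X 0, 0, 0]
      · rintro p ⟨v, hv, rfl⟩
        rw [hsub' v hv, mb_m3, map_sub, aeval_nm, aeval_nm]
        simp
      · rw [mb_m1]; exact mem_toric k _ _ (by simp [D])
      · rw [mb_m1, map_sub, aeval_nm, aeval_nm]
        simp

lemma symm_le {u v : Fin 3 → ℕ} :
    (Finsupp.equivFunOnFinite.symm u ≤ Finsupp.equivFunOnFinite.symm v) ↔ ∀ i, u i ≤ v i := by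
  rw [Finsupp.le_def]
  simp

lemma exists_small (M : Set (Fin 3 → ℤ)) (g : MvPolynomial (Fin 3) k)
    (hg : g ∈ Ideal.span (moveBinomial k '' M)) (m : Fin 3 → ℕ)
    (hc : coeff (Finsupp.equivFunOnFinite.symm m) g ≠ 0) :
    ∃ v ∈ M, moveBinomial k v ≠ 0 ∧
      ((∀ i, _root_.posPart v i ≤ m i) ∨ (∀ i, _root_.negPart v i ≤ m i)) := by
  by_contra hcon
  push_neg at hcon
  obtain ⟨c, hsupp, hsum⟩ := Submodule.mem_span_set.mp hg
  apply hc
  rw [← hsum, Finsupp.sum, coeff_sum]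
  apply Finset.sum_eq_zero
  intro x hx
  obtain ⟨v, hvM, rfl⟩ := hsupp hx
  by_cases h0 : moveBinomial k v = 0
  · rw [h0, smul_zero, coeff_zero]
  · obtain ⟨⟨i1, hi1⟩, ⟨i2, hi2⟩⟩ := hcon v hvM h0
    have hA : ¬ (Finsupp.equivFunOnFinite.symm (_root_.posPart v)
        ≤ Finsupp.equivFunOnFinite.symm m) := fun hle => absurd hi1 (not_lt.mpr (symm_le.mp hle i1))
    have hB : ¬ (Finsupp.equivFunOnFinite.symm (_root_.negPart v)
        ≤ Finsupp.equivFunOnFinite.symm m) := fun hle => absurd hi2 (not_lt.mpr (symm_le.mp hle i2))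
    rw [smul_eq_mul, moveBinomial, natMonomial, natMonomial, mul_sub, coeff_sub,
      coeff_mul_monomial', coeff_mul_monomial', if_neg hA, if_neg hB, sub_zero]

lemma symm_ne {u v : Fin 3 → ℕ} (h : u ≠ v) :
    Finsupp.equivFunOnFinite.symm u ≠ Finsupp.equivFunOnFinite.symm v :=
  fun he => h (Finsupp.equivFunOnFinite.symm.injective he)

lemma ne_zero_of (v : Fin 3 → ℤ) (h : moveBinomial k v ≠ 0) : ¬ (v 0 = 0 ∧ v 1 = 0 ∧ v 2 = 0) := by
  rintro ⟨h0, h1, h2⟩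
  apply h
  have : v = 0 := by funext i; fin_cases i <;> assumption
  subst this
  have : _root_.posPart (0 : Fin 3 → ℤ) = _root_.negPart (0 : Fin 3 → ℤ) := by
    funext i; simp [_root_.posPart, _root_.negPart]
  rw [moveBinomial, this, sub_self]

lemma kernel_eq (M : Set (Fin 3 → ℤ)) (hM : IsMarkovBasis k A₁₂₃ M) (v : Fin 3 → ℤ)
    (hv : v ∈ M) : v 0 + 2 * v 1 + 3 * v 2 = 0 := by
  have := hM.1 v hv
  rw [mulVec_app] at this
  exact congrFun this 0

lemma claim1 (M : Set (Fin 3 → ℤ)) (hM : IsMarkovBasis k A₁₂₃ M) :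
    ∃ v ∈ M, v = ![2,-1,0] ∨ v = -![2,-1,0] := by
  have hg : natMonomial k ![2,0,0] - natMonomial k ![0,1,0]
      ∈ Ideal.span (moveBinomial k '' M) := by
    rw [hM.2]; exact mem_toric k _ _ (by simp [D])
  have hc : coeff (Finsupp.equivFunOnFinite.symm ![0,1,0])
      (natMonomial k ![2,0,0] - natMonomial k ![0,1,0]) ≠ 0 := by
    rw [coeff_sub, coeff_nm, coeff_nm, if_neg (symm_ne (by decide)), if_pos rfl]
    norm_num
  obtain ⟨v, hvM, hne0, hcase⟩ := exists_small k M _ hg ![0,1,0] hc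
  refine ⟨v, hvM, ?_⟩
  have hker := kernel_eq k M hM v hvM
  have hnz := ne_zero_of k v hne0
  rcases hcase with h | h
  · have h0 := h 0; have h1 := h 1; have h2 := h 2
    simp only [_root_.posPart] at h0 h1 h2
    have : v 0 = -2 ∧ v 1 = 1 ∧ v 2 = 0 := by
      simp at h0 h1 h2
      omega
    right
    funext i; fin_cases i <;> simp [this.1, this.2.1, this.2.2]
  · have h0 := h 0; have h1 := h 1; have h2 := h 2
    simp only [_root_.negPart] at h0 h1 h2
    have : v 0 = 2 ∧ v 1 = -1 ∧ v 2 = 0 := by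
      simp at h0 h1 h2
      omega
    left
    funext i; fin_cases i <;> simp [this.1, this.2.1, this.2.2]

lemma claim2 (M : Set (Fin 3 → ℤ)) (hM : IsMarkovBasis k A₁₂₃ M) :
    ∃ v ∈ M, v = ![3,0,-1] ∨ v = -![3,0,-1] ∨ v = ![1,1,-1] ∨ v = -![1,1,-1] := by
  have hg : natMonomial k ![3,0,0] - natMonomial k ![0,0,1]
      ∈ Ideal.span (moveBinomial k '' M) := by
    rw [hM.2]; exact mem_toric k _ _ (by simp [D])
  have hc : coeff (Finsupp.equivFunOnFinite.symm ![0,0,1])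
      (natMonomial k ![3,0,0] - natMonomial k ![0,0,1]) ≠ 0 := by
    rw [coeff_sub, coeff_nm, coeff_nm, if_neg (symm_ne (by decide)), if_pos rfl]
    norm_num
  obtain ⟨v, hvM, hne0, hcase⟩ := exists_small k M _ hg ![0,0,1] hc
  refine ⟨v, hvM, ?_⟩
  have hker := kernel_eq k M hM v hvM
  have hnz := ne_zero_of k v hne0
  rcases hcase with h | h
  · have h0 := h 0; have h1 := h 1; have h2 := h 2
    simp only [_root_.posPart] at h0 h1 h2
    have : (v 0 = -3 ∧ v 1 = 0 ∧ v 2 = 1) ∨ (v 0 = -1 ∧ v 1 = -1 ∧ v 2 = 1) := by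
      simp at h0 h1 h2
      omega
    rcases this with ⟨e0, e1, e2⟩ | ⟨e0, e1, e2⟩
    · right; left; funext i; fin_cases i <;> simp [e0, e1, e2]
    · right; right; right; funext i; fin_cases i <;> simp [e0, e1, e2]
  · have h0 := h 0; have h1 := h 1; have h2 := h 2
    simp only [_root_.negPart] at h0 h1 h2
    have : (v 0 = 3 ∧ v 1 = 0 ∧ v 2 = -1) ∨ (v 0 = 1 ∧ v 1 = 1 ∧ v 2 = -1) := by
      simp at h0 h1 h2
      omega
    rcases this with ⟨e0, e1, e2⟩ | ⟨e0, e1, e2⟩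
    · left; funext i; fin_cases i <;> simp [e0, e1, e2]
    · right; right; left; funext i; fin_cases i <;> simp [e0, e1, e2]

end UM123

/-- for `A = (1 2 3)`, the universal Markov basis (union of all minimal Markov
bases, up to sign) is `{(2,-1,0), (3,0,-1), (1,1,-1)}`. -/
theorem universal_markov_123 (k : Type*) [Field k] (u : Fin 3 → ℤ) :
    (∃ M : Set (Fin 3 → ℤ),
        IsMinimalMarkovBasis k (!![1, 2, 3] : Matrix (Fin 1) (Fin 3) ℤ) M ∧
        (u ∈ M ∨ -u ∈ M)) ↔
      (u = ![2, -1, 0] ∨ u = -![2, -1, 0] ∨ u = ![3, 0, -1] ∨ u = -![3, 0, -1] ∨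
        u = ![1, 1, -1] ∨ u = -![1, 1, -1]) := by
  constructor
  · rintro ⟨M, ⟨hM, hmin⟩, hu⟩
    obtain ⟨a, haM, ha⟩ := UM123.claim1 k M hM
    obtain ⟨b, hbM, hb⟩ := UM123.claim2 k M hM
    have hab : IsMarkovBasis k (!![1, 2, 3] : Matrix (Fin 1) (Fin 3) ℤ)
        ({a, b} : Set (Fin 3 → ℤ)) := UM123.markov_pair k a b ha hb
    have hMeq : M = {a, b} := by
      by_contra hne
      have hss : ({a, b} : Set (Fin 3 → ℤ)) ⊂ M :=
        Set.ssubset_iff_subset_ne.mpr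
          ⟨Set.insert_subset haM (Set.singleton_subset_iff.mpr hbM), fun h => hne h.symm⟩
      exact hmin _ hss hab
    subst hMeq
    have hmem : ∀ w : Fin 3 → ℤ, w ∈ ({a, b} : Set (Fin 3 → ℤ)) →
        (w = ![2, -1, 0] ∨ w = -![2, -1, 0] ∨ w = ![3, 0, -1] ∨ w = -![3, 0, -1] ∨
          w = ![1, 1, -1] ∨ w = -![1, 1, -1]) := by
      rintro w (rfl | rfl)
      · tauto
      · tauto
    rcases hu with hu | hu
    · exact hmem u hu
    · have hn : u = -(-u) := (neg_neg u).symm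
      rcases hmem _ hu with h | h | h | h | h | h
      · rw [hn, h]; tauto
      · rw [hn, h, neg_neg]; tauto
      · rw [hn, h]; tauto
      · rw [hn, h, neg_neg]; tauto
      · rw [hn, h]; tauto
      · rw [hn, h, neg_neg]; tauto
  · intro h
    rcases h with rfl | rfl | rfl | rfl | rfl | rfl
    · exact ⟨{![2,-1,0], ![3,0,-1]},
        ⟨UM123.markov_pair k _ _ (Or.inl rfl) (Or.inl rfl),
          UM123.minimal_pair k _ (Or.inl rfl)⟩,
        Or.inl (Set.mem_insert _ _)⟩
    · exact ⟨{![2,-1,0], ![3,0,-1]},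
        ⟨UM123.markov_pair k _ _ (Or.inl rfl) (Or.inl rfl),
          UM123.minimal_pair k _ (Or.inl rfl)⟩,
        Or.inr (by rw [neg_neg]; exact Set.mem_insert _ _)⟩
    · exact ⟨{![2,-1,0], ![3,0,-1]},
        ⟨UM123.markov_pair k _ _ (Or.inl rfl) (Or.inl rfl),
          UM123.minimal_pair k _ (Or.inl rfl)⟩,
        Or.inl (Set.mem_insert_of_mem _ rfl)⟩
    · exact ⟨{![2,-1,0], ![3,0,-1]},
        ⟨UM123.markov_pair k _ _ (Or.inl rfl) (Or.inl rfl),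
          UM123.minimal_pair k _ (Or.inl rfl)⟩,
        Or.inr (by rw [neg_neg]; exact Set.mem_insert_of_mem _ rfl)⟩
    · exact ⟨{![2,-1,0], ![1,1,-1]},
        ⟨UM123.markov_pair k _ _ (Or.inl rfl) (Or.inr (Or.inr (Or.inl rfl))),
          UM123.minimal_pair k _ (Or.inr rfl)⟩,
        Or.inl (Set.mem_insert_of_mem _ rfl)⟩
    · exact ⟨{![2,-1,0], ![1,1,-1]},
        ⟨UM123.markov_pair k _ _ (Or.inl rfl) (Or.inr (Or.inr (Or.inl rfl))),
          UM123.minimal_pair k _ (Or.inr rfl)⟩,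
        Or.inr (by rw [neg_neg]; exact Set.mem_insert_of_mem _ rfl)⟩
end

section
/- The number of labelled spanning trees of the complete graph on vertex set {1,…,m} with vertex i assigned weight m_i > 0, counted with multiplicity ∏_{edges ij of the tree} m_i m_j, equals m_1 m_2 ⋯ m_k (m_1 + ⋯ + m_k)^{k−2} for k ≥ 2 vertices (generalized Cayley formula). -/
open scoped Classical
open Finset Function

set_option linter.unusedSectionVars false

namespace Cayley

variable {V : Type*} [Fintype V] [DecidableEq V]

noncomputable def Valid (R : Finset V) : Finset (V → V) :=
  Finset.univ.filter (fun f => (∀ i ∈ R, f i = i) ∧ ∀ i, ∃ n, f^[n] i ∈ R)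

noncomputable def Tset (f : V → V) (v : V) : Finset V :=
  Finset.univ.filter (fun u => ∃ n, f^[n] u = v)

lemma mem_Valid {R : Finset V} {f : V → V} :
    f ∈ Valid R ↔ (∀ i ∈ R, f i = i) ∧ ∀ i, ∃ n, f^[n] i ∈ R := by
  simp [Valid]

lemma mem_Tset {f : V → V} {v u : V} : u ∈ Tset f v ↔ ∃ n, f^[n] u = v := by
  simp [Tset]

lemma iterate_update_of_ne {g : V → V} {w t i : V} {n : ℕ}
    (h : ∀ m < n, g^[m] i ≠ w) : (update g w t)^[n] i = g^[n] i := by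
  induction n with
  | zero => simp
  | succ n ih =>
    rw [Function.iterate_succ_apply', Function.iterate_succ_apply',
      ih (fun m hm => h m (hm.trans (Nat.lt_succ_self n)))]
    rw [Function.update_of_ne (h n (Nat.lt_succ_self n))]

lemma root_unique {f : V → V} {a b i : V} {m n : ℕ} (ha : f a = a) (hb : f b = b)
    (hma : f^[m] i = a) (hnb : f^[n] i = b) : a = b := by
  rcases le_total m n with h | h
  · have : f^[n] i = a := by
      have := Function.iterate_add_apply f (n - m) m i
      rw [Nat.sub_add_cancel h] at this
      rw [this, hma, Function.iterate_fixed ha]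
    rw [this] at hnb; exact hnb
  · have : f^[m] i = b := by
      have := Function.iterate_add_apply f (m - n) n i
      rw [Nat.sub_add_cancel h] at this
      rw [this, hnb, Function.iterate_fixed hb]
    rw [this] at hma; exact hma.symm

/-- the orbit of a point reaching a fixed point `v ≠ w` (with `w` also fixed) avoids `w`. -/
lemma orbit_avoids {g : V → V} {w v i : V} {n : ℕ} (hgw : g w = w) (hv : g v = v)
    (hvw : v ≠ w) (hn : g^[n] i = v) : ∀ m, g^[m] i ≠ w :=
  fun m hm => hvw (root_unique hv hgw hn hm)

lemma noloop {R : Finset V} {f : V → V} (hf : f ∈ Valid R) {w : V} (hw : w ∉ R) {p : ℕ}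
    (hp : 0 < p) (h : f^[p] w = w) : False := by
  obtain ⟨hfix, hreach⟩ := mem_Valid.1 hf
  obtain ⟨q, hq⟩ := hreach w
  have hper : f^[p * q] w = w := by
    rw [Function.iterate_mul]
    exact Function.iterate_fixed h q
  have hge : q ≤ p * q := Nat.le_mul_of_pos_left q hp
  have : f^[p * q] w = f^[q] w := by
    have := Function.iterate_add_apply f (p * q - q) q w
    rw [Nat.sub_add_cancel hge] at this
    rw [this, Function.iterate_fixed (hfix _ hq)]
  rw [hper] at this
  rw [← this] at hq
  exact hw hq

section Update

variable {R : Finset V} {w t : V}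

lemma valid_fix {f : V → V} (hf : f ∈ Valid R) {i : V} (hi : i ∈ R) : f i = i :=
  (mem_Valid.1 hf).1 i hi

variable (hw : w ∉ R)
include hw

/-- forward direction : updating a parent function at `w` with a target avoiding
`w`'s subtree gives a parent function for `R`. -/
lemma upd_valid {g : V → V} (hg : g ∈ Valid (insert w R)) (ht : t ∉ Tset g w) :
    update g w t ∈ Valid R := by
  obtain ⟨hfix, hreach⟩ := mem_Valid.1 hg
  have hgw : g w = w := hfix w (mem_insert_self w R)
  -- orbit of t avoids w
  have htav : ∀ m, g^[m] t ≠ w := fun m hm => ht (mem_Tset.2 ⟨m, hm⟩)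
  refine mem_Valid.2 ⟨fun i hi => ?_, fun i => ?_⟩
  · rw [Function.update_of_ne (fun h => hw (by rw [← h]; exact hi))]
    exact hfix i (mem_insert_of_mem hi)
  · -- reach
    obtain ⟨n, hn⟩ := hreach i
    rcases mem_insert.1 hn with hvw | hvR
    · -- g^[n] i = w : pass through w then to t's root
      have hex : ∃ m, g^[m] i = w := ⟨n, hvw⟩
      set N := Nat.find hex with hN
      have hNw : g^[N] i = w := Nat.find_spec hex
      have hfN : (update g w t)^[N] i = w := by
        rw [iterate_update_of_ne (fun m hm => Nat.find_min hex hm)]; exact hNw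
      have hfN1 : (update g w t)^[N + 1] i = t := by
        rw [Function.iterate_succ_apply', hfN, Function.update_self]
      obtain ⟨p, hp⟩ := hreach t
      have hpR : g^[p] t ∈ R := by
        rcases mem_insert.1 hp with h | h
        · exact absurd h (htav p)
        · exact h
      have hft : (update g w t)^[p] t = g^[p] t := iterate_update_of_ne (fun m _ => htav m)
      refine ⟨p + (N + 1), ?_⟩
      rw [Function.iterate_add_apply, hfN1, hft]
      exact hpR
    · -- root in R : orbit avoids w
      have hfixv : g (g^[n] i) = g^[n] i := hfix _ (mem_insert_of_mem hvR)
      have hne : g^[n] i ≠ w := fun h => hw (h ▸ hvR)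
      have : (update g w t)^[n] i = g^[n] i :=
        iterate_update_of_ne (fun m _ => orbit_avoids hgw hfixv hne rfl m)
      exact ⟨n, by rw [this]; exact hvR⟩

/-- how subtrees transform under the update. -/
lemma upd_Tset {g : V → V} (hg : g ∈ Valid (insert w R)) (ht : t ∉ Tset g w)
    {v : V} (hv : v ∈ R) {u : V} :
    (u ∈ Tset (update g w t) v) ↔ (u ∈ Tset g v ∨ (t ∈ Tset g v ∧ u ∈ Tset g w)) := by
  obtain ⟨hfix, hreach⟩ := mem_Valid.1 hg
  have hgw : g w = w := hfix w (mem_insert_self w R)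
  have hgv : g v = v := hfix v (mem_insert_of_mem hv)
  have hvw : v ≠ w := fun h => hw (h ▸ hv)
  have htav : ∀ m, g^[m] t ≠ w := fun m hm => ht (mem_Tset.2 ⟨m, hm⟩)
  constructor
  · rintro hu
    obtain ⟨n, hn⟩ := mem_Tset.1 hu
    by_cases hex : ∃ m, g^[m] u = w
    · -- u in subtree of w
      set N := Nat.find hex with hNdef
      have hNw : g^[N] u = w := Nat.find_spec hex
      have hfN : (update g w t)^[N] u = w := by
        rw [iterate_update_of_ne (fun m hm => Nat.find_min hex hm)]; exact hNw
      have hnN : N < n := by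
        rcases lt_or_ge N n with h | h
        · exact h
        · exfalso
          have : (update g w t)^[n] u = g^[n] u :=
            iterate_update_of_ne (fun m hm => Nat.find_min hex (lt_of_lt_of_le hm h))
          rw [this] at hn
          exact hvw (root_unique hgv hgw hn hNw)
      have hfN1 : (update g w t)^[N + 1] u = t := by
        rw [Function.iterate_succ_apply', hfN, Function.update_self]
      have hsplit : (update g w t)^[(n - (N+1)) + (N+1)] u = v := by
        rw [Nat.sub_add_cancel hnN]; exact hn
      rw [Function.iterate_add_apply, hfN1] at hsplit
      have : g^[n - (N+1)] t = v := by
        rw [← iterate_update_of_ne (g := g) (t := t) (fun m _ => htav m)]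
        exact hsplit
      exact Or.inr ⟨mem_Tset.2 ⟨_, this⟩, mem_Tset.2 ⟨N, hNw⟩⟩
    · push_neg at hex
      have : (update g w t)^[n] u = g^[n] u := iterate_update_of_ne (fun m _ => hex m)
      rw [this] at hn
      exact Or.inl (mem_Tset.2 ⟨n, hn⟩)
  · rintro (hu | ⟨htv, huw⟩)
    · obtain ⟨n, hn⟩ := mem_Tset.1 hu
      have : (update g w t)^[n] u = g^[n] u :=
        iterate_update_of_ne (fun m _ => orbit_avoids hgw hgv hvw hn m)
      exact mem_Tset.2 ⟨n, by rw [this]; exact hn⟩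
    · obtain ⟨n, hn⟩ := mem_Tset.1 huw
      obtain ⟨p, hp⟩ := mem_Tset.1 htv
      have hex : ∃ m, g^[m] u = w := ⟨n, hn⟩
      set N := Nat.find hex
      have hNw : g^[N] u = w := Nat.find_spec hex
      have hfN : (update g w t)^[N] u = w := by
        rw [iterate_update_of_ne (fun m hm => Nat.find_min hex hm)]; exact hNw
      have hfN1 : (update g w t)^[N + 1] u = t := by
        rw [Function.iterate_succ_apply', hfN, Function.update_self]
      have hft : (update g w t)^[p] t = g^[p] t := iterate_update_of_ne (fun m _ => htav m)
      refine mem_Tset.2 ⟨p + (N + 1), ?_⟩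
      rw [Function.iterate_add_apply, hfN1, hft]
      exact hp

/-- backward direction. -/
lemma upd_inv {f : V → V} (hf : f ∈ Valid R) :
    update f w w ∈ Valid (insert w R) ∧ f w ∉ Tset (update f w w) w := by
  obtain ⟨hfix, hreach⟩ := mem_Valid.1 hf
  have hfw : ∀ m, f^[m] (f w) ≠ w := by
    intro m hm
    have : f^[m + 1] w = w := by rw [Function.iterate_succ_apply]; exact hm
    exact noloop hf hw (Nat.succ_pos m) this
  constructor
  · refine mem_Valid.2 ⟨fun i hi => ?_, fun i => ?_⟩
    · rcases mem_insert.1 hi with rfl | hi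
      · exact Function.update_self _ _ _
      · rw [Function.update_of_ne (fun h => hw (by rw [← h]; exact hi))]; exact hfix i hi
    · by_cases hex : ∃ m, f^[m] i = w
      · set N := Nat.find hex
        have hNw : f^[N] i = w := Nat.find_spec hex
        refine ⟨N, ?_⟩
        rw [iterate_update_of_ne (fun m hm => Nat.find_min hex hm), hNw]
        exact mem_insert_self w R
      · push_neg at hex
        obtain ⟨n, hn⟩ := hreach i
        refine ⟨n, ?_⟩
        rw [iterate_update_of_ne (fun m _ => hex m)]
        exact mem_insert_of_mem hn
  · intro hmem
    obtain ⟨n, hn⟩ := mem_Tset.1 hmem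
    rw [iterate_update_of_ne (fun m _ => hfw m)] at hn
    exact hfw n hn

end Update

lemma Tset_disjoint {g : V → V} {v v' : V} (hv : g v = v) (hv' : g v' = v') (hne : v ≠ v') :
    Disjoint (Tset g v) (Tset g v') := by
  rw [Finset.disjoint_left]
  intro u hu hu'
  obtain ⟨m, hm⟩ := mem_Tset.1 hu
  obtain ⟨n, hn⟩ := mem_Tset.1 hu'
  exact hne (root_unique hv hv' hm hn)

lemma self_mem_Tset {g : V → V} {v : V} : v ∈ Tset g v := mem_Tset.2 ⟨0, rfl⟩

variable (x : V → ℕ)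

noncomputable def Aw (R : Finset V) : ℕ := ∑ f ∈ Valid R, ∏ i ∈ Rᶜ, x (f i)

noncomputable def Bw (R : Finset V) (v : V) : ℕ :=
  ∑ f ∈ Valid R, (∏ i ∈ Rᶜ, x (f i)) * ∑ u ∈ Tset f v, x u

/-- reindex the sum over `Valid R` through the peeling bijection at `w ∉ R`. -/
lemma sum_valid_sigma {R : Finset V} {w : V} (hw : w ∉ R) (F : (V → V) → ℕ) :
    ∑ f ∈ Valid R, F f
      = ∑ p ∈ (Valid (insert w R)).sigma (fun g => (Tset g w)ᶜ), F (update p.1 w p.2) := by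
  refine Finset.sum_nbij' (i := fun f => ⟨update f w w, f w⟩)
    (j := fun p => update p.1 w p.2) ?_ ?_ ?_ ?_ ?_
  · intro f hf
    obtain ⟨h1, h2⟩ := upd_inv hw hf
    exact Finset.mem_sigma.2 ⟨h1, Finset.mem_compl.2 h2⟩
  · rintro ⟨g, t⟩ hp
    obtain ⟨h1, h2⟩ := Finset.mem_sigma.1 hp
    exact upd_valid hw h1 (Finset.mem_compl.1 h2)
  · intro f hf
    simp only [Function.update_idem]
    exact Function.update_eq_self _ _
  · rintro ⟨g, t⟩ hp
    obtain ⟨h1, h2⟩ := Finset.mem_sigma.1 hp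
    have hgw : g w = w := valid_fix h1 (mem_insert_self w R)
    have e1 : update (update g w t) w w = g := by
      rw [Function.update_idem]
      conv_rhs => rw [← Function.update_eq_self w g]
      rw [hgw]
    have e2 : (update g w t) w = t := Function.update_self _ _ _
    exact Sigma.ext e1 (heq_of_eq e2)
  · intro f hf
    congr 1
    simp only [Function.update_idem]
    exact (Function.update_eq_self _ _).symm

lemma compl_insert_prod {R : Finset V} {w : V} (hw : w ∉ R) (g : V → V) (t : V) :
    ∏ i ∈ Rᶜ, x (update g w t i) = x t * ∏ i ∈ (insert w R)ᶜ, x (g i) := by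
  have hsplit : Rᶜ = insert w ((insert w R)ᶜ) := by
    rw [Finset.compl_insert]
    rw [Finset.insert_erase (Finset.mem_compl.2 hw)]
  rw [hsplit, Finset.prod_insert (by simp)]
  rw [Function.update_self]
  congr 1
  refine Finset.prod_congr rfl (fun i hi => ?_)
  have : i ≠ w := by
    intro h; subst h
    simp [Finset.mem_compl] at hi
  rw [Function.update_of_ne this]

/-- Step identity for `Aw`. -/
lemma Aw_step {R : Finset V} {w : V} (hw : w ∉ R) :
    Aw x R + Bw x (insert w R) w = (∑ u, x u) * Aw x (insert w R) := by
  rw [Aw, sum_valid_sigma hw, Finset.sum_sigma]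
  have hA : ∀ g ∈ Valid (insert w R),
      ∑ t ∈ (Tset g w)ᶜ, ∏ i ∈ Rᶜ, x (update g w t i)
        = (∑ t ∈ (Tset g w)ᶜ, x t) * ∏ i ∈ (insert w R)ᶜ, x (g i) := by
    intro g hg
    rw [Finset.sum_mul]
    exact Finset.sum_congr rfl (fun t _ => compl_insert_prod x hw g t)
  rw [Finset.sum_congr rfl hA, Bw, ← Finset.sum_add_distrib]
  rw [Aw, Finset.mul_sum]
  refine Finset.sum_congr rfl (fun g hg => ?_)
  rw [mul_comm ((∑ t ∈ (Tset g w)ᶜ, x t)) _, ← mul_add, mul_comm _ (∏ i ∈ (insert w R)ᶜ, x (g i))]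
  congr 1
  rw [Finset.sum_compl_add_sum]

/-- Step identity for `Bw`. -/
lemma Bw_step {R : Finset V} {w : V} (hw : w ∉ R) {v : V} (hv : v ∈ R) :
    Bw x R v = (∑ u, x u) * Bw x (insert w R) v := by
  rw [Bw, sum_valid_sigma hw (F := fun f => (∏ i ∈ Rᶜ, x (f i)) * ∑ u ∈ Tset f v, x u),
    Finset.sum_sigma]
  rw [Bw, Finset.mul_sum]
  refine Finset.sum_congr rfl (fun g hg => ?_)
  have hgw : g w = w := valid_fix hg (mem_insert_self w R)
  have hgv : g v = v := valid_fix hg (mem_insert_of_mem hv)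
  have hvw : v ≠ w := fun h => hw (h ▸ hv)
  have hdisj : Disjoint (Tset g v) (Tset g w) := Tset_disjoint hgv hgw hvw
  have hsub : Tset g v ⊆ (Tset g w)ᶜ := by
    intro u hu
    exact Finset.mem_compl.2 (Finset.disjoint_left.1 hdisj hu)
  -- evaluate the subtree sum of the updated function
  have hTset : ∀ t ∈ (Tset g w)ᶜ,
      (∑ u ∈ Tset (update g w t) v, x u)
        = (if t ∈ Tset g v then (∑ u ∈ Tset g v, x u) + (∑ u ∈ Tset g w, x u)
           else ∑ u ∈ Tset g v, x u) := by
    intro t ht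
    have ht' : t ∉ Tset g w := Finset.mem_compl.1 ht
    by_cases htv : t ∈ Tset g v
    · rw [if_pos htv]
      have : Tset (update g w t) v = Tset g v ∪ Tset g w := by
        ext u
        rw [Finset.mem_union, upd_Tset hw hg ht' hv]
        tauto
      rw [this, Finset.sum_union hdisj]
    · rw [if_neg htv]
      have : Tset (update g w t) v = Tset g v := by
        ext u
        rw [upd_Tset hw hg ht' hv]
        tauto
      rw [this]
  -- now compute the inner sum over t
  calc ∑ t ∈ (Tset g w)ᶜ,
        (∏ i ∈ Rᶜ, x (update g w t i)) * ∑ u ∈ Tset (update g w t) v, x u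
      = ∑ t ∈ (Tset g w)ᶜ, (x t * ∏ i ∈ (insert w R)ᶜ, x (g i)) *
          (if t ∈ Tset g v then (∑ u ∈ Tset g v, x u) + (∑ u ∈ Tset g w, x u)
           else ∑ u ∈ Tset g v, x u) := by
        refine Finset.sum_congr rfl (fun t ht => ?_)
        rw [compl_insert_prod x hw g t, hTset t ht]
    _ = (∑ u, x u) * ((∏ i ∈ (insert w R)ᶜ, x (g i)) * ∑ u ∈ Tset g v, x u) := by
        rw [← Finset.sum_sdiff hsub]
        have h1 : ∀ t ∈ (Tset g w)ᶜ \ Tset g v,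
            (x t * ∏ i ∈ (insert w R)ᶜ, x (g i)) *
            (if t ∈ Tset g v then (∑ u ∈ Tset g v, x u) + (∑ u ∈ Tset g w, x u)
             else ∑ u ∈ Tset g v, x u)
            = (x t * ∏ i ∈ (insert w R)ᶜ, x (g i)) * ∑ u ∈ Tset g v, x u := by
          intro t ht
          rw [if_neg (Finset.mem_sdiff.1 ht).2]
        have h2 : ∀ t ∈ Tset g v,
            (x t * ∏ i ∈ (insert w R)ᶜ, x (g i)) *
            (if t ∈ Tset g v then (∑ u ∈ Tset g v, x u) + (∑ u ∈ Tset g w, x u)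
             else ∑ u ∈ Tset g v, x u)
            = (x t * ∏ i ∈ (insert w R)ᶜ, x (g i)) *
              ((∑ u ∈ Tset g v, x u) + (∑ u ∈ Tset g w, x u)) := by
          intro t ht
          rw [if_pos ht]
        rw [Finset.sum_congr rfl h1, Finset.sum_congr rfl h2]
        have huniv : (∑ u, x u)
            = (∑ t ∈ (Tset g w)ᶜ \ Tset g v, x t) + (∑ t ∈ Tset g v, x t)
              + (∑ t ∈ Tset g w, x t) := by
          rw [Finset.sum_sdiff hsub, Finset.sum_compl_add_sum]
        rw [huniv]
        simp only [← Finset.sum_mul]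
        ring

lemma Valid_univ : (Valid (Finset.univ : Finset V)) = {id} := by
  ext f
  rw [mem_Valid, Finset.mem_singleton]
  constructor
  · rintro ⟨h1, _⟩
    funext i
    exact h1 i (Finset.mem_univ i)
  · rintro rfl
    exact ⟨fun i _ => rfl, fun i => ⟨0, Finset.mem_univ i⟩⟩

lemma Tset_id {v : V} : Tset (id : V → V) v = {v} := by
  ext u
  rw [mem_Tset, Finset.mem_singleton]
  constructor
  · rintro ⟨n, hn⟩
    rwa [Function.iterate_id, id_eq] at hn
  · rintro rfl
    exact ⟨0, rfl⟩

lemma Aw_univ : Aw x (Finset.univ : Finset V) = 1 := by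
  rw [Aw, Valid_univ, Finset.sum_singleton, Finset.compl_univ, Finset.prod_empty]

lemma Bw_univ (v : V) : Bw x (Finset.univ : Finset V) v = x v := by
  rw [Bw, Valid_univ, Finset.sum_singleton, Finset.compl_univ, Finset.prod_empty, one_mul,
    Tset_id, Finset.sum_singleton]

lemma Bw_eq (n : ℕ) : ∀ R : Finset V, Rᶜ.card = n → ∀ v ∈ R,
    Bw x R v = x v * (∑ u, x u) ^ n := by
  induction n with
  | zero =>
    intro R hR v hv
    have hRu : R = Finset.univ := by
      have : Rᶜ = ∅ := Finset.card_eq_zero.1 hR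
      rwa [Finset.compl_eq_empty_iff] at this
    subst hRu
    rw [Bw_univ, pow_zero, mul_one]
  | succ n ih =>
    intro R hR v hv
    have hne : Rᶜ.Nonempty := Finset.card_pos.1 (by omega)
    obtain ⟨w, hwc⟩ := hne
    have hw : w ∉ R := Finset.mem_compl.1 hwc
    have hcard : (insert w R)ᶜ.card = n := by
      rw [Finset.compl_insert, Finset.card_erase_of_mem hwc, hR]
      omega
    rw [Bw_step x hw hv, ih (insert w R) hcard v (mem_insert_of_mem hv)]
    rw [pow_succ]
    ring

lemma Aw_eq (n : ℕ) : ∀ R : Finset V, Rᶜ.card = n + 1 →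
    Aw x R = (∑ v ∈ R, x v) * (∑ u, x u) ^ n := by
  induction n with
  | zero =>
    intro R hR
    obtain ⟨w, hwc⟩ := Finset.card_pos.1 (by omega : 0 < Rᶜ.card)
    have hw : w ∉ R := Finset.mem_compl.1 hwc
    have huniv : insert w R = Finset.univ := by
      have h0 : (insert w R)ᶜ.card = 0 := by
        rw [Finset.compl_insert, Finset.card_erase_of_mem hwc, hR]
      have : (insert w R)ᶜ = ∅ := Finset.card_eq_zero.1 h0
      rwa [Finset.compl_eq_empty_iff] at this
    have hstep := Aw_step x hw
    rw [huniv, Aw_univ, Bw_univ, mul_one] at hstep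
    have hsum : (∑ v ∈ R, x v) + x w = ∑ u, x u := by
      rw [← huniv, Finset.sum_insert hw]
      ring
    rw [pow_zero, mul_one]
    omega
  | succ n ih =>
    intro R hR
    obtain ⟨w, hwc⟩ := Finset.card_pos.1 (by omega : 0 < Rᶜ.card)
    have hw : w ∉ R := Finset.mem_compl.1 hwc
    have hcard : (insert w R)ᶜ.card = n + 1 := by
      rw [Finset.compl_insert, Finset.card_erase_of_mem hwc, hR]
      omega
    have hstep := Aw_step x hw
    rw [ih (insert w R) hcard, Bw_eq x (n+1) (insert w R) hcard w (mem_insert_self w R)] at hstep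
    have hsum : (∑ v ∈ insert w R, x v) = x w + ∑ v ∈ R, x v := Finset.sum_insert hw
    rw [hsum] at hstep
    have : (∑ u, x u) * ((x w + ∑ v ∈ R, x v) * (∑ u, x u) ^ n)
        = (∑ v ∈ R, x v) * (∑ u, x u) ^ (n + 1) + x w * (∑ u, x u) ^ (n + 1) := by
      rw [pow_succ]
      ring
    omega

/-! ### The bridge between trees and parent functions -/

section Graph

variable (z : V)

/-- The graph associated to a parent function rooted at `z`. -/
noncomputable def Gf (f : V → V) : SimpleGraph V :=
  SimpleGraph.fromEdgeSet ↑((({z} : Finset V)ᶜ).image (fun i => s(i, f i)))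

variable {z}

lemma valid_singleton_iff {f : V → V} :
    f ∈ Valid ({z} : Finset V) ↔ f z = z ∧ ∀ i, ∃ n, f^[n] i = z := by
  rw [mem_Valid]
  simp only [Finset.mem_singleton]
  constructor
  · rintro ⟨h1, h2⟩
    exact ⟨h1 z rfl, fun i => h2 i⟩
  · rintro ⟨h1, h2⟩
    exact ⟨fun i hi => hi ▸ h1, h2⟩

lemma valid_ne_self {f : V → V} (hf : f ∈ Valid ({z} : Finset V)) {i : V} (hi : i ≠ z) :
    f i ≠ i := by
  intro h
  obtain ⟨n, hn⟩ := (valid_singleton_iff.1 hf).2 i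
  rw [Function.iterate_fixed h] at hn
  exact hi hn

lemma Gf_adj {f : V → V} {a b : V} :
    (Gf z f).Adj a b ↔ (∃ i, i ≠ z ∧ s(a, b) = s(i, f i)) ∧ a ≠ b := by
  rw [Gf, SimpleGraph.fromEdgeSet_adj]
  simp only [Finset.coe_image, Set.mem_image, Finset.mem_coe, Finset.mem_compl,
    Finset.mem_singleton]
  constructor
  · rintro ⟨⟨i, hi, he⟩, hne⟩
    exact ⟨⟨i, hi, he.symm⟩, hne⟩
  · rintro ⟨⟨i, hi, he⟩, hne⟩
    exact ⟨⟨i, hi, he.symm⟩, hne⟩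

lemma Gf_adj_parent {f : V → V} (hf : f ∈ Valid ({z} : Finset V)) {i : V} (hi : i ≠ z) :
    (Gf z f).Adj i (f i) :=
  Gf_adj.2 ⟨⟨i, hi, rfl⟩, (valid_ne_self hf hi).symm⟩

lemma Gf_reach {f : V → V} (hf : f ∈ Valid ({z} : Finset V)) :
    ∀ (n : ℕ) (i : V), f^[n] i = z → (Gf z f).Reachable i z := by
  intro n
  induction n with
  | zero => intro i hi; rw [Function.iterate_zero_apply] at hi; exact hi ▸ SimpleGraph.Reachable.refl i
  | succ n ih =>
    intro i hi
    by_cases h : i = z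
    · exact h ▸ SimpleGraph.Reachable.refl i
    · rw [Function.iterate_succ_apply] at hi
      exact ((Gf_adj_parent hf h).reachable).trans (ih (f i) hi)

lemma Gf_connected {f : V → V} (hf : f ∈ Valid ({z} : Finset V)) : (Gf z f).Connected := by
  rw [SimpleGraph.connected_iff]
  refine ⟨fun u v => ?_, ⟨z⟩⟩
  obtain ⟨n, hn⟩ := (valid_singleton_iff.1 hf).2 u
  obtain ⟨m, hm⟩ := (valid_singleton_iff.1 hf).2 v
  exact (Gf_reach hf n u hn).trans (Gf_reach hf m v hm).symm

lemma mem_Tset_f {f : V → V} {a i : V} (hia : i ≠ a) (hi : i ∈ Tset f a) : f i ∈ Tset f a := by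
  obtain ⟨n, hn⟩ := mem_Tset.1 hi
  cases n with
  | zero => exact absurd hn hia
  | succ n => exact mem_Tset.2 ⟨n, by rwa [Function.iterate_succ_apply] at hn⟩

lemma mem_Tset_of_f {f : V → V} {a i : V} (hi : f i ∈ Tset f a) : i ∈ Tset f a := by
  obtain ⟨n, hn⟩ := mem_Tset.1 hi
  exact mem_Tset.2 ⟨n + 1, by rwa [Function.iterate_succ_apply]⟩

lemma Gf_edge_stable {f : V → V} {a u v' : V}
    (hadj : (Gf z f).Adj u v') (hne : s(u, v') ≠ s(a, f a)) :
    (u ∈ Tset f a ↔ v' ∈ Tset f a) := by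
  obtain ⟨⟨i, hi, he⟩, huv⟩ := Gf_adj.1 hadj
  have hia : i ≠ a := by rintro rfl; exact hne he
  have key : (i ∈ Tset f a ↔ f i ∈ Tset f a) :=
    ⟨fun h => mem_Tset_f hia h, fun h => mem_Tset_of_f h⟩
  rcases Sym2.eq_iff.1 he with ⟨rfl, rfl⟩ | ⟨rfl, rfl⟩
  · exact key
  · exact key.symm

lemma Gf_walk_stable {f : V → V} {a : V} :
    ∀ {u v' : V} (p : (Gf z f).Walk u v'), s(a, f a) ∉ p.edges →
      (u ∈ Tset f a ↔ v' ∈ Tset f a) := by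
  intro u v' p
  induction p with
  | nil => intro _; rfl
  | cons h q ih =>
    intro hmem
    rw [SimpleGraph.Walk.edges_cons, List.mem_cons] at hmem
    push_neg at hmem
    exact (Gf_edge_stable h hmem.1.symm).trans (ih hmem.2)

lemma Gf_parent_not_mem_Tset {f : V → V} (hf : f ∈ Valid ({z} : Finset V)) {a : V}
    (ha : a ≠ z) : f a ∉ Tset f a := by
  intro h
  obtain ⟨n, hn⟩ := mem_Tset.1 h
  have : f^[n + 1] a = a := by rwa [Function.iterate_succ_apply]
  exact noloop hf (by simpa using ha) (Nat.succ_pos n) this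

lemma Gf_acyclic {f : V → V} (hf : f ∈ Valid ({z} : Finset V)) : (Gf z f).IsAcyclic := by
  rw [SimpleGraph.isAcyclic_iff_forall_adj_isBridge]
  intro u v hadj
  obtain ⟨⟨i, hi, he⟩, huv⟩ := Gf_adj.1 hadj
  rw [he]
  rw [SimpleGraph.isBridge_iff_adj_and_forall_walk_mem_edges]
  refine fun p => ?_
  by_contra hmem
  have := Gf_walk_stable p hmem
  exact (Gf_parent_not_mem_Tset hf hi) (this.1 self_mem_Tset)

lemma Gf_isTree {f : V → V} (hf : f ∈ Valid ({z} : Finset V)) : (Gf z f).IsTree :=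
  ⟨Gf_connected hf, Gf_acyclic hf⟩

lemma Gf_edge_inj {f : V → V} (hf : f ∈ Valid ({z} : Finset V)) :
    ∀ i ∈ ({z} : Finset V)ᶜ, ∀ j ∈ ({z} : Finset V)ᶜ,
      s(i, f i) = s(j, f j) → i = j := by
  intro i hi j hj he
  rcases Sym2.eq_iff.1 he with ⟨h1, _⟩ | ⟨h1, h2⟩
  · exact h1
  · -- i = f j and f i = j : a 2-cycle, impossible
    exfalso
    have hiz : i ≠ z := by simpa using hi
    have : f^[2] i = i := by
      subst h1
      simp [Function.iterate_succ_apply, h2]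
    exact noloop hf (by simpa using hiz) (by norm_num) this

lemma Gf_edgeFinset {f : V → V} (hf : f ∈ Valid ({z} : Finset V)) :
    (Gf z f).edgeFinset = (({z} : Finset V)ᶜ).image (fun i => s(i, f i)) := by
  ext e
  rw [SimpleGraph.mem_edgeFinset, Gf, SimpleGraph.edgeSet_fromEdgeSet]
  simp only [Set.mem_diff, Finset.coe_image, Set.mem_image, Finset.mem_coe, Set.mem_setOf_eq,
    Finset.mem_image]
  constructor
  · rintro ⟨⟨i, hi, rfl⟩, _⟩
    exact ⟨i, hi, rfl⟩
  · rintro ⟨i, hi, rfl⟩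
    refine ⟨⟨i, hi, rfl⟩, ?_⟩
    rw [Sym2.mem_diagSet, Sym2.mk_isDiag_iff]
    intro h
    exact (valid_ne_self hf (by simpa [Finset.mem_compl] using hi)) h.symm

end Graph

section Par

variable (z : V)

/-- the parent map of a graph w.r.t. a root `z` : the second vertex of a path to `z`. -/
noncomputable def par (G : SimpleGraph V) (i : V) : V :=
  if h : ∃ p : G.Walk i z, p.IsPath then h.choose.getVert 1 else i

variable {z}

lemma par_eq {G : SimpleGraph V} (hG : G.IsAcyclic) {i : V} {p : G.Walk i z}
    (hp : p.IsPath) : par z G i = p.getVert 1 := by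
  have h : ∃ q : G.Walk i z, q.IsPath := ⟨p, hp⟩
  rw [par, dif_pos h]
  have := hG.path_unique ⟨h.choose, h.choose_spec⟩ ⟨p, hp⟩
  rw [Subtype.mk.injEq] at this
  rw [this]

lemma par_root {G : SimpleGraph V} (hG : G.IsAcyclic) : par z G z = z := by
  rw [par_eq hG (SimpleGraph.Walk.IsPath.nil (u := z))]
  rfl

lemma par_iterate {G : SimpleGraph V} (hG : G.IsAcyclic) :
    ∀ (n : ℕ) (i : V) (p : G.Walk i z), p.IsPath → p.length = n → (par z G)^[n] i = z := by
  intro n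
  induction n with
  | zero =>
    intro i p _ hl
    rw [Function.iterate_zero_apply]
    exact SimpleGraph.Walk.eq_of_length_eq_zero hl
  | succ n ih =>
    intro i p hp hl
    cases p with
    | nil => simp at hl
    | @cons _ b _ h q =>
      have hpar : par z G i = b := by
        rw [par_eq hG hp]
        rw [SimpleGraph.Walk.getVert_cons_succ, SimpleGraph.Walk.getVert_zero]
      rw [Function.iterate_succ_apply, hpar]
      refine ih b q ((SimpleGraph.Walk.cons_isPath_iff h q).1 hp).1 ?_
      simpa using hl

lemma par_valid {G : SimpleGraph V} (hG : G.IsTree) : par z G ∈ Valid ({z} : Finset V) := by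
  rw [valid_singleton_iff]
  refine ⟨par_root hG.2, fun i => ?_⟩
  have hr : G.Reachable i z := hG.1.preconnected i z
  obtain ⟨w⟩ := hr
  exact ⟨w.toPath.val.length, par_iterate hG.2 _ i w.toPath.val w.toPath.property rfl⟩

end Par

section Inverses

lemma exists_orbit_path {f : V → V} (hf : f ∈ Valid ({z} : Finset V)) :
    ∀ (n : ℕ) (i : V), f^[n] i = z → (∀ m < n, f^[m] i ≠ z) →
      ∃ p : (Gf z f).Walk i z, p.IsPath ∧ (0 < n → p.getVert 1 = f i) ∧
        ∀ u ∈ p.support, ∃ m, f^[m] i = u := by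
  intro n
  induction n with
  | zero =>
    intro i hi _
    rw [Function.iterate_zero_apply] at hi
    subst hi
    exact ⟨SimpleGraph.Walk.nil, SimpleGraph.Walk.IsPath.nil, fun h => absurd h (lt_irrefl 0),
      fun u hu => ⟨0, by simpa [SimpleGraph.Walk.support_nil] using (by simpa using hu : u = i).symm⟩⟩
  | succ n ih =>
    intro i hi hmin
    have hiz : i ≠ z := by simpa using hmin 0 (Nat.succ_pos n)
    have hfi : f^[n] (f i) = z := by rwa [Function.iterate_succ_apply] at hi
    have hfmin : ∀ m < n, f^[m] (f i) ≠ z := by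
      intro m hm h
      exact hmin (m + 1) (Nat.succ_lt_succ hm) (by rwa [Function.iterate_succ_apply])
    obtain ⟨q, hq, _, hsup⟩ := ih (f i) hfi hfmin
    have hadj : (Gf z f).Adj i (f i) := Gf_adj_parent hf hiz
    have hnotmem : i ∉ q.support := by
      intro hmem
      obtain ⟨m, hm⟩ := hsup i hmem
      have : f^[m + 1] i = i := by rwa [Function.iterate_succ_apply]
      exact noloop hf (by simpa using hiz) (Nat.succ_pos m) this
    refine ⟨SimpleGraph.Walk.cons hadj q, ?_, fun _ => ?_, fun u hu => ?_⟩
    · exact (SimpleGraph.Walk.cons_isPath_iff hadj q).2 ⟨hq, hnotmem⟩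
    · rw [SimpleGraph.Walk.getVert_cons_succ, SimpleGraph.Walk.getVert_zero]
    · rw [SimpleGraph.Walk.support_cons, List.mem_cons] at hu
      rcases hu with rfl | hu
      · exact ⟨0, rfl⟩
      · obtain ⟨m, hm⟩ := hsup u hu
        exact ⟨m + 1, by rwa [Function.iterate_succ_apply]⟩

lemma par_Gf {f : V → V} (hf : f ∈ Valid ({z} : Finset V)) : par z (Gf z f) = f := by
  funext i
  by_cases hiz : i = z
  · subst hiz
    rw [par_root (Gf_acyclic hf), (valid_singleton_iff.1 hf).1]
  · have hex : ∃ n, f^[n] i = z := (valid_singleton_iff.1 hf).2 i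
    set N := Nat.find hex with hN
    have hNz : f^[N] i = z := Nat.find_spec hex
    have hNmin : ∀ m < N, f^[m] i ≠ z := fun m hm => Nat.find_min hex hm
    have hNpos : 0 < N := by
      rcases Nat.eq_zero_or_pos N with h | h
      · exfalso; rw [h, Function.iterate_zero_apply] at hNz; exact hiz hNz
      · exact h
    obtain ⟨p, hp, hg, _⟩ := exists_orbit_path hf N i hNz hNmin
    rw [par_eq (Gf_acyclic hf) hp, hg hNpos]

end Inverses

section RightInv

variable {z : V} {G : SimpleGraph V}

/-- every non-root vertex is `G`-adjacent to its parent. -/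
lemma adj_par (hG : G.IsTree) {i : V} (hi : i ≠ z) : G.Adj i (par z G i) := by
  have hr : G.Reachable i z := hG.1.preconnected i z
  obtain ⟨w⟩ := hr
  obtain ⟨p, hp⟩ : ∃ p : G.Walk i z, p.IsPath := ⟨w.toPath.val, w.toPath.property⟩
  cases p with
  | nil => exact absurd rfl hi
  | @cons _ b _ h q =>
    have : par z G i = b := by
      rw [par_eq hG.2 hp, SimpleGraph.Walk.getVert_cons_succ, SimpleGraph.Walk.getVert_zero]
    rw [this]
    exact h

lemma par_adj (hG : G.IsTree) {a b : V} (hadj : G.Adj a b) :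
    (b ≠ z ∧ par z G b = a) ∨ (a ≠ z ∧ par z G a = b) := by
  by_cases haz : a = z
  · subst haz
    -- path from b is the single edge
    have hbz : b ≠ a := hadj.ne'
    left
    refine ⟨hbz, ?_⟩
    have hp : (SimpleGraph.Walk.cons hadj.symm SimpleGraph.Walk.nil : G.Walk b a).IsPath := by
      rw [SimpleGraph.Walk.cons_isPath_iff]
      exact ⟨SimpleGraph.Walk.IsPath.nil, by simp [hbz]⟩
    rw [par_eq hG.2 hp]
    simp [SimpleGraph.Walk.getVert_cons_succ]
  · obtain ⟨p, hp⟩ : ∃ p : G.Walk a z, p.IsPath := by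
      obtain ⟨w⟩ := hG.1.preconnected a z
      exact ⟨w.toPath.val, w.toPath.property⟩
    by_cases hb : b ∈ p.support
    · -- the path from a starts with the edge to b
      right
      refine ⟨haz, ?_⟩
      have hq : (p.takeUntil b hb).IsPath := hp.takeUntil hb
      have he : (SimpleGraph.Walk.cons hadj SimpleGraph.Walk.nil : G.Walk a b).IsPath := by
        rw [SimpleGraph.Walk.cons_isPath_iff]
        exact ⟨SimpleGraph.Walk.IsPath.nil, by simp [hadj.ne]⟩
      have hQE : p.takeUntil b hb = SimpleGraph.Walk.cons hadj SimpleGraph.Walk.nil := by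
        have := hG.2.path_unique ⟨p.takeUntil b hb, hq⟩ ⟨SimpleGraph.Walk.cons hadj SimpleGraph.Walk.nil, he⟩
        rwa [Subtype.mk.injEq] at this
      rw [par_eq hG.2 hp]
      conv_lhs => rw [← SimpleGraph.Walk.take_spec p hb]
      rw [SimpleGraph.Walk.getVert_append, hQE]
      simp [SimpleGraph.Walk.getVert_zero]
    · -- prepend the edge b→a to the path from a
      left
      have hbz : b ≠ z := fun h => hb (h ▸ p.end_mem_support)
      refine ⟨hbz, ?_⟩
      have hp' : (SimpleGraph.Walk.cons hadj.symm p).IsPath := by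
        rw [SimpleGraph.Walk.cons_isPath_iff]
        exact ⟨hp, hb⟩
      rw [par_eq hG.2 hp']
      simp [SimpleGraph.Walk.getVert_cons_succ]

lemma Gf_par (hG : G.IsTree) : Gf z (par z G) = G := by
  ext a b
  rw [Gf_adj]
  constructor
  · rintro ⟨⟨i, hi, he⟩, hne⟩
    have : G.Adj i (par z G i) := adj_par hG hi
    rcases Sym2.eq_iff.1 he with ⟨rfl, rfl⟩ | ⟨rfl, rfl⟩
    · exact this
    · exact this.symm
  · intro hadj
    refine ⟨?_, hadj.ne⟩
    rcases par_adj hG hadj with ⟨hbz, hpb⟩ | ⟨haz, hpa⟩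
    · exact ⟨b, hbz, by rw [hpb, Sym2.eq_swap]⟩
    · exact ⟨a, haz, by rw [hpa]⟩

end RightInv

section Final

variable {z : V} (x : V → ℕ)

lemma tree_weight {f : V → V} (hf : f ∈ Valid ({z} : Finset V)) :
    ∏ e ∈ (Gf z f).edgeFinset,
        Sym2.lift ⟨fun i j => x i * x j, fun i j => Nat.mul_comm _ _⟩ e
      = ∏ i ∈ ({z} : Finset V)ᶜ, (x i * x (f i)) := by
  rw [Gf_edgeFinset hf, Finset.prod_image (Gf_edge_inj hf)]
  refine Finset.prod_congr rfl (fun i _ => ?_)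
  rw [Sym2.lift_mk]

lemma sum_trees (z : V) :
    ∑ G ∈ Finset.univ.filter (fun G : SimpleGraph V => G.IsTree),
        ∏ e ∈ G.edgeFinset,
          Sym2.lift ⟨fun i j => x i * x j, fun i j => Nat.mul_comm _ _⟩ e
      = ∑ f ∈ Valid ({z} : Finset V), ∏ i ∈ ({z} : Finset V)ᶜ, (x i * x (f i)) := by
  refine Finset.sum_nbij' (i := par z) (j := Gf z) ?_ ?_ ?_ ?_ ?_
  · intro G hG
    exact par_valid (Finset.mem_filter.1 hG).2
  · intro f hf
    exact Finset.mem_filter.2 ⟨Finset.mem_univ _, Gf_isTree hf⟩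
  · intro G hG
    exact Gf_par (Finset.mem_filter.1 hG).2
  · intro f hf
    exact par_Gf hf
  · intro G hG
    have hG' := (Finset.mem_filter.1 hG).2
    conv_lhs => rw [← Gf_par (z := z) hG']
    exact tree_weight x (par_valid hG')

end Final
end Cayley

/-- generalized Cayley formula. Summing over all labelled trees on `Fin k`
the weight `∏_{ij ∈ E(T)} m_i * m_j` gives `(∏ i, m i) * (∑ i, m i) ^ (k - 2)`. -/
theorem generalized_cayley (k : ℕ) (hk : 2 ≤ k) (m : Fin k → ℕ) (hm : ∀ i, 0 < m i) :
    ∑ G ∈ Finset.univ.filter (fun G : SimpleGraph (Fin k) => G.IsTree),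
      ∏ e ∈ G.edgeFinset,
        Sym2.lift ⟨fun i j => m i * m j, fun i j => Nat.mul_comm _ _⟩ e
      = (∏ i, m i) * (∑ i, m i) ^ (k - 2) := by
  have hkpos : 0 < k := by omega
  let z : Fin k := ⟨0, hkpos⟩
  rw [Cayley.sum_trees m z]
  have hsplit : ∀ f : Fin k → Fin k,
      ∏ i ∈ ({z} : Finset (Fin k))ᶜ, (m i * m (f i))
        = (∏ i ∈ ({z} : Finset (Fin k))ᶜ, m i) * ∏ i ∈ ({z} : Finset (Fin k))ᶜ, m (f i) :=
    fun f => Finset.prod_mul_distrib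
  rw [Finset.sum_congr rfl (fun f _ => hsplit f), ← Finset.mul_sum]
  have hcard : (({z} : Finset (Fin k))ᶜ).card = (k - 2) + 1 := by
    rw [Finset.card_compl, Finset.card_singleton, Fintype.card_fin]
    omega
  rw [show (∑ f ∈ Cayley.Valid ({z} : Finset (Fin k)),
        ∏ i ∈ ({z} : Finset (Fin k))ᶜ, m (f i)) = Cayley.Aw m ({z} : Finset (Fin k)) from rfl]
  rw [Cayley.Aw_eq m (k - 2) _ hcard, Finset.sum_singleton]
  have : (∏ i ∈ ({z} : Finset (Fin k))ᶜ, m i) * m z = ∏ i, m i := by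
    rw [mul_comm, ← Finset.prod_singleton (f := m) (a := z)]
    exact Finset.prod_mul_prod_compl _ _
  rw [← this]
  ring
end

section
/- The Prüfer decoding map, which sends a sequence in {0,…,n−1} of length n−2 to the edge set of a tree on vertex set {0,…,n−1} (repeatedly joining the smallest leaf not in the remaining sequence to the first entry of the sequence), is a bijection onto the set of labelled trees on n vertices. -/
/-- One pass of Prüfer decoding: given the remaining sequence and the set of vertices already
used up (joined as leaves), produce the list of edges of the decoded tree. At each step the
smallest unused vertex not appearing in the remaining sequence is joined to the head of the
sequence; at the end the two remaining vertices are joined. -/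
def pruferDecodeAux (n : ℕ) : List (Fin n) → Finset (Fin n) → List (Sym2 (Fin n))
  | [], used =>
      match (Finset.univ \ used).sort (· ≤ ·) with
      | [a, b] => [s(a, b)]
      | _ => []
  | v :: s, used =>
      match ((Finset.univ \ used).filter (fun x => x ∉ v :: s)).min with
      | none => []
      | some leaf => s(leaf, v) :: pruferDecodeAux n s (insert leaf used)

section PruferAux
open SimpleGraph Walk Finset

lemma decode_nil {n : ℕ} (U : Finset (Fin n)) (a b : Fin n)
    (h : (Finset.univ \ U).sort (· ≤ ·) = [a, b]) :
    pruferDecodeAux n [] U = [s(a, b)] := by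
  rw [pruferDecodeAux, h]

lemma decode_cons {n : ℕ} (U : Finset (Fin n)) (v : Fin n) (s : List (Fin n)) (ℓ : Fin n)
    (h : ((Finset.univ \ U).filter (fun x => x ∉ v :: s)).min = some ℓ) :
    pruferDecodeAux n (v :: s) U = s(ℓ, v) :: pruferDecodeAux n s (insert ℓ U) := by
  rw [pruferDecodeAux, h]

variable {α : Type*} [DecidableEq α]

lemma isAcyclic_of_no_adj {G : SimpleGraph α} (h : ∀ a b, ¬ G.Adj a b) : G.IsAcyclic := by
  intro v c hc
  cases c with
  | nil => exact hc.ne_nil rfl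
  | cons ha p => exact h _ _ ha

lemma path_avoids_leaf {G : SimpleGraph α} {ℓ v x y : α}
    (huniq : ∀ u, G.Adj ℓ u → u = v) {p : G.Walk x y} (hp : p.IsPath)
    (hx : x ≠ ℓ) (hy : y ≠ ℓ) : ℓ ∉ p.support := by
  intro h
  set q := p.takeUntil ℓ h with hq
  set r := p.dropUntil ℓ h with hr
  have hspec : q.append r = p := p.take_spec h
  have hqn : ¬ q.reverse.Nil := by
    rw [Walk.not_nil_iff_lt_length]
    by_contra hcon
    push_neg at hcon
    interval_cases hl : q.reverse.length
    · exact hx (Walk.nil_iff_length_eq.mpr hl).eq.symm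
  obtain ⟨u, hadj, q₂, hq₂⟩ := Walk.not_nil_iff.mp hqn
  have hu : u = v := huniq u hadj
  have hvq : v ∈ q.support := by
    have : u ∈ q.reverse.support := by rw [hq₂]; simp
    rw [Walk.support_reverse, List.mem_reverse] at this
    rwa [hu] at this
  have hrn : ¬ r.Nil := by
    rw [Walk.not_nil_iff_lt_length]
    by_contra hcon
    push_neg at hcon
    interval_cases hl : r.length
    · exact hy ((Walk.nil_iff_length_eq.mpr hl).eq).symm
  obtain ⟨w, hadj2, r₂, hr₂⟩ := Walk.not_nil_iff.mp hrn
  have hw : w = v := huniq w hadj2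
  have hvr : v ∈ r.support.tail := by
    rw [hr₂]; simp [Walk.support_cons, ← hw]
  have hnd := hp.support_nodup
  rw [← hspec, Walk.support_append] at hnd
  exact (List.disjoint_of_nodup_append hnd) hvq hvr

lemma isAcyclic_of_pendant {G : SimpleGraph α} {ℓ v : α}
    (huniq : ∀ u, G.Adj ℓ u → u = v)
    (hacy : (G.deleteEdges {s(ℓ, v)}).IsAcyclic) : G.IsAcyclic := by
  intro x c hc
  by_cases hl : ℓ ∈ c.support
  · have hc' := hc.rotate hl
    set c' := c.rotate ℓ hl with hc'def
    have hn : ¬ c'.Nil := hc'.not_nil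
    obtain ⟨u, hadj, d, hd⟩ := Walk.not_nil_iff.mp hn
    have hu : u = v := huniq u hadj
    obtain ⟨w2, hadj2, d₂, hd₂⟩ := Walk.not_nil_iff.mp ((Walk.not_nil_iff_lt_length).mpr (by
      have h3 := hc'.three_le_length
      rw [hd] at h3
      have : d.reverse.length = d.length := Walk.length_reverse d
      simp only [Walk.length_cons] at h3
      omega) : ¬ d.reverse.Nil)
    have hw2 : w2 = v := huniq w2 hadj2
    have hmem : s(ℓ, v) ∈ d.edges := by
      have : s(ℓ, w2) ∈ d.reverse.edges := by rw [hd₂]; simp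
      rw [Walk.edges_reverse, List.mem_reverse] at this
      rwa [hw2] at this
    have hnd := hc'.edges_nodup
    rw [hd] at hnd
    simp only [Walk.edges_cons, List.nodup_cons] at hnd
    exact hnd.1 (hu ▸ hmem)
  · have hq : ∀ e ∈ c.edges, e ∈ (G.deleteEdges {s(ℓ, v)}).edgeSet := by
      intro e he
      rw [SimpleGraph.edgeSet_deleteEdges]
      refine ⟨c.edges_subset_edgeSet he, ?_⟩
      intro hcon
      simp only [Set.mem_singleton_iff] at hcon
      subst hcon
      exact hl (c.fst_mem_support_of_mem_edges he)
    exact hacy (c.transfer _ hq) (hc.transfer hq)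

/-- degree of a vertex in a list of edges -/
def degL {n : ℕ} (x : Fin n) (L : List (Sym2 (Fin n))) : ℕ :=
  (L.toFinset.filter (fun e => x ∈ e)).card

lemma prufer_main (n : ℕ) (s : List (Fin n)) : ∀ (U : Finset (Fin n)),
    (Finset.univ \ U).card = s.length + 2 →
    (∀ x ∈ s, x ∈ Finset.univ \ U) →
    ((pruferDecodeAux n s U).length = s.length + 1) ∧
    (∀ e ∈ pruferDecodeAux n s U, ∀ x ∈ e, x ∈ Finset.univ \ U) ∧
    (∀ e ∈ pruferDecodeAux n s U, ¬ e.IsDiag) ∧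
    (pruferDecodeAux n s U).Nodup ∧
    (∀ x ∈ Finset.univ \ U, ∀ y ∈ Finset.univ \ U,
      (SimpleGraph.fromEdgeSet {e | e ∈ pruferDecodeAux n s U}).Reachable x y) ∧
    (∀ x ∈ Finset.univ \ U, 1 ≤ degL x (pruferDecodeAux n s U)) ∧
    (∀ x ∈ Finset.univ \ U, (degL x (pruferDecodeAux n s U) = 1 ↔ x ∉ s)) ∧
    (SimpleGraph.fromEdgeSet {e | e ∈ pruferDecodeAux n s U}).IsAcyclic := by
  induction s with
  | nil =>
    intro U hcard hmem
    obtain ⟨a, b, hab⟩ := List.length_eq_two.mp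
      ((Finset.length_sort (α := Fin n) (· ≤ ·)).trans hcard)
    have hnd : ([a, b] : List (Fin n)).Nodup := hab ▸ Finset.sort_nodup _ _
    have hne : a ≠ b := by simpa using hnd
    have haV : a ∈ Finset.univ \ U := by
      rw [← Finset.mem_sort (α := Fin n) (· ≤ ·), hab]; simp
    have hbV : b ∈ Finset.univ \ U := by
      rw [← Finset.mem_sort (α := Fin n) (· ≤ ·), hab]; simp
    have hVeq : Finset.univ \ U = {a, b} := by
      refine (Finset.eq_of_subset_of_card_le ?_ ?_).symm
      · intro x hx; simp at hx; rcases hx with h | h <;> subst h <;> assumption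
      · rw [hcard, Finset.card_insert_of_notMem (by simpa using hne), Finset.card_singleton]
        simp
    rw [decode_nil U a b hab]
    have hadj : (SimpleGraph.fromEdgeSet {e | e ∈ [s(a, b)]}).Adj a b := by
      rw [SimpleGraph.fromEdgeSet_adj]; exact ⟨by simp, hne⟩
    refine ⟨by simp, ?_, ?_, by simp, ?_, ?_, ?_, ?_⟩
    · intro e he x hx
      simp only [List.mem_singleton] at he
      subst he
      rcases Sym2.mem_iff.mp hx with h | h <;> subst h <;> assumption
    · intro e he; simp only [List.mem_singleton] at he; subst he
      simpa using hne
    · intro x hx y hy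
      rw [hVeq] at hx hy
      simp only [Finset.mem_insert, Finset.mem_singleton] at hx hy
      rcases hx with rfl | rfl <;> rcases hy with rfl | rfl
      · rfl
      · exact hadj.reachable
      · exact hadj.symm.reachable
      · rfl
    · intro x hx
      rw [hVeq] at hx
      simp only [Finset.mem_insert, Finset.mem_singleton] at hx
      have hxe : x ∈ s(a, b) := by rcases hx with rfl | rfl <;> simp
      refine Finset.card_pos.mpr ⟨s(a, b), ?_⟩
      simp [hxe]
    · intro x hx
      rw [hVeq] at hx
      simp only [Finset.mem_insert, Finset.mem_singleton] at hx
      have hxe : x ∈ s(a, b) := by rcases hx with rfl | rfl <;> simp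
      simp only [List.not_mem_nil, not_false_iff, iff_true, degL]
      rw [show ([s(a,b)] : List (Sym2 (Fin n))).toFinset = {s(a,b)} by simp]
      rw [Finset.filter_singleton, if_pos hxe, Finset.card_singleton]
    · refine isAcyclic_of_pendant (ℓ := a) (v := b) ?_ (isAcyclic_of_no_adj ?_)
      · intro u hu
        rw [SimpleGraph.fromEdgeSet_adj] at hu
        simp only [List.mem_singleton, Set.mem_setOf_eq] at hu
        rcases Sym2.eq_iff.mp hu.1 with ⟨_, h⟩ | ⟨h1, h2⟩
        · exact h
        · subst h2; exact (hu.2 rfl).elim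
      · intro c d hcd
        simp only [SimpleGraph.deleteEdges_adj, SimpleGraph.fromEdgeSet_adj,
          Set.mem_setOf_eq, List.mem_singleton, Set.mem_singleton_iff] at hcd
        exact hcd.2 hcd.1.1
  | cons v s ih =>
    intro U hcard hmem
    simp only [List.length_cons] at hcard
    have hFne : ((Finset.univ \ U).filter (fun x => x ∉ v :: s)).Nonempty := by
      by_contra hcon
      rw [Finset.not_nonempty_iff_eq_empty] at hcon
      have hsub : Finset.univ \ U ⊆ (v :: s).toFinset := by
        intro x hx
        by_contra hx2
        have hxF : x ∈ (Finset.univ \ U).filter (fun x => x ∉ v :: s) := by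
          simp only [Finset.mem_filter]
          exact ⟨hx, by simpa using hx2⟩
        rw [hcon] at hxF
        simp at hxF
      have h1 := Finset.card_le_card hsub
      have h2 := (v :: s).toFinset_card_le
      simp only [List.length_cons] at h2
      omega
    obtain ⟨ℓ, hℓ⟩ := Finset.min_of_nonempty hFne
    have hℓF : ℓ ∈ (Finset.univ \ U).filter (fun x => x ∉ v :: s) := Finset.mem_of_min hℓ
    have hℓV : ℓ ∈ Finset.univ \ U := (Finset.mem_filter.mp hℓF).1
    have hℓns : ℓ ∉ v :: s := by have := (Finset.mem_filter.mp hℓF).2; simpa using this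
    have hℓmin : ∀ x ∈ Finset.univ \ U, x ∉ v :: s → ℓ ≤ x := by
      intro x hx hxs
      exact Finset.min_le_of_eq (Finset.mem_filter.mpr ⟨hx, by simpa using hxs⟩) hℓ
    rw [decode_cons U v s ℓ hℓ]
    have hV' : Finset.univ \ (insert ℓ U) = (Finset.univ \ U).erase ℓ := by
      ext x
      simp [not_or, and_comm]
    have hcard' : (Finset.univ \ (insert ℓ U)).card = s.length + 2 := by
      rw [hV', Finset.card_erase_of_mem hℓV]; omega
    have hmem' : ∀ x ∈ s, x ∈ Finset.univ \ (insert ℓ U) := by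
      intro x hx
      rw [hV', Finset.mem_erase]
      exact ⟨fun h => hℓns (h ▸ List.mem_cons_of_mem v hx), hmem x (List.mem_cons_of_mem v hx)⟩
    obtain ⟨ih1, ih2, ih3, ih4, ih5, ih6, ih7, ih8⟩ := ih (insert ℓ U) hcard' hmem'
    set L' := pruferDecodeAux n s (insert ℓ U) with hL'
    have hneq : ℓ ≠ v := fun h => hℓns (h ▸ List.mem_cons_self (a := v) (l := s))
    have hvV : v ∈ Finset.univ \ U := hmem v (List.mem_cons_self (a := v) (l := s))
    have hvV' : v ∈ Finset.univ \ (insert ℓ U) := by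
      rw [hV', Finset.mem_erase]; exact ⟨Ne.symm hneq, hvV⟩
    have hℓnotV' : ℓ ∉ Finset.univ \ (insert ℓ U) := by rw [hV']; simp
    have key : ∀ e ∈ L', ℓ ∉ e := fun e he hx => hℓnotV' (ih2 e he ℓ hx)
    have henotin : s(ℓ, v) ∉ L' := fun h => key _ h (by simp)
    have hVsub : Finset.univ \ (insert ℓ U) ⊆ Finset.univ \ U := by
      rw [hV']; exact Finset.erase_subset _ _
    have hmemx : ∀ x ∈ Finset.univ \ U, x ≠ ℓ → x ∈ Finset.univ \ (insert ℓ U) := by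
      intro x hx hxne; rw [hV', Finset.mem_erase]; exact ⟨hxne, hx⟩
    have hle : (SimpleGraph.fromEdgeSet {e | e ∈ L'}) ≤
        SimpleGraph.fromEdgeSet {e | e ∈ s(ℓ, v) :: L'} :=
      SimpleGraph.fromEdgeSet_mono (fun e he => List.mem_cons_of_mem _ he)
    have hadj : (SimpleGraph.fromEdgeSet {e | e ∈ s(ℓ, v) :: L'}).Adj ℓ v := by
      rw [SimpleGraph.fromEdgeSet_adj]; exact ⟨by simp, hneq⟩
    have hdeg : ∀ x, degL x (s(ℓ, v) :: L') = (if x ∈ s(ℓ, v) then 1 else 0) + degL x L' := by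
      intro x
      simp only [degL, List.toFinset_cons]
      rw [Finset.filter_insert]
      split
      · rw [Finset.card_insert_of_notMem
          (fun h => henotin (List.mem_toFinset.mp (Finset.mem_of_mem_filter _ h)))]
        omega
      · simp
    refine ⟨?_, ?_, ?_, ?_, ?_, ?_, ?_, ?_⟩
    · simp [ih1]
    · intro e he x hx
      rcases List.mem_cons.mp he with rfl | he'
      · rcases Sym2.mem_iff.mp hx with rfl | rfl
        · exact hℓV
        · exact hvV
      · exact hVsub (ih2 e he' x hx)
    · intro e he
      rcases List.mem_cons.mp he with rfl | he'
      · simpa using hneq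
      · exact ih3 e he'
    · exact List.nodup_cons.mpr ⟨henotin, ih4⟩
    · intro x hx y hy
      by_cases hxℓ : x = ℓ <;> by_cases hyℓ : y = ℓ
      · subst hxℓ; subst hyℓ; rfl
      · subst hxℓ
        exact hadj.reachable.trans ((ih5 v hvV' y (hmemx y hy hyℓ)).mono hle)
      · subst hyℓ
        exact ((ih5 x (hmemx x hx hxℓ) v hvV').mono hle).trans hadj.symm.reachable
      · exact (ih5 x (hmemx x hx hxℓ) y (hmemx y hy hyℓ)).mono hle
    · intro x hx
      by_cases hxℓ : x = ℓ
      · subst hxℓ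
        refine Finset.card_pos.mpr ⟨s(x, v), ?_⟩
        simp
      · refine le_trans (ih6 x (hmemx x hx hxℓ)) (Finset.card_le_card ?_)
        intro e he
        simp only [Finset.mem_filter, List.mem_toFinset, List.toFinset_cons,
          Finset.mem_insert] at he ⊢
        exact ⟨Or.inr he.1, he.2⟩
    · intro x hx
      rw [hdeg x]
      by_cases hxℓ : x = ℓ
      · subst hxℓ
        have h0 : degL x L' = 0 := by
          rw [degL, Finset.card_eq_zero, Finset.filter_eq_empty_iff]
          intro e he
          exact key e (List.mem_toFinset.mp he)
        rw [h0, if_pos (by simp)]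
        simpa using hℓns
      · by_cases hxv : x = v
        · subst hxv
          rw [if_pos (by simp)]
          have h1 := ih6 x hvV'
          constructor
          · intro h; omega
          · intro h; exact absurd (List.mem_cons_self (a := x) (l := s)) h
        · rw [if_neg (by simp [hxℓ, hxv]), Nat.zero_add]
          rw [ih7 x (hmemx x hx hxℓ)]
          simp only [List.mem_cons, not_or]
          tauto
    · refine isAcyclic_of_pendant (ℓ := ℓ) (v := v) ?_ ?_
      · intro u hu
        rw [SimpleGraph.fromEdgeSet_adj] at hu
        obtain ⟨hu1, hu2⟩ := hu
        simp only [Set.mem_setOf_eq, List.mem_cons] at hu1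
        rcases hu1 with h | h
        · rcases Sym2.eq_iff.mp h with ⟨_, h2⟩ | ⟨h1, _⟩
          · exact h2
          · exact absurd h1 hneq
        · exact (key _ h (by simp)).elim
      · have hGeq : (SimpleGraph.fromEdgeSet {e | e ∈ s(ℓ, v) :: L'}).deleteEdges {s(ℓ, v)} =
            SimpleGraph.fromEdgeSet {e | e ∈ L'} := by
          ext a b
          simp only [SimpleGraph.deleteEdges_adj, SimpleGraph.fromEdgeSet_adj, Set.mem_setOf_eq,
            List.mem_cons, Set.mem_singleton_iff]
          constructor
          · rintro ⟨⟨h1 | h1, h2⟩, h3⟩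
            · exact absurd h1 h3
            · exact ⟨h1, h2⟩
          · rintro ⟨h1, h2⟩
            exact ⟨⟨Or.inr h1, h2⟩, fun hcon => henotin (hcon ▸ h1)⟩
        rw [hGeq]; exact ih8

lemma exists_min_decode (n : ℕ) (U : Finset (Fin n)) (v : Fin n) (s : List (Fin n))
    (hcard : (Finset.univ \ U).card = s.length + 3) :
    ∃ ℓ, ((Finset.univ \ U).filter (fun x => x ∉ v :: s)).min = some ℓ := by
  apply Finset.min_of_nonempty
  by_contra hcon
  rw [Finset.not_nonempty_iff_eq_empty] at hcon
  have hsub : Finset.univ \ U ⊆ (v :: s).toFinset := by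
    intro x hx
    by_contra hx2
    have hxF : x ∈ (Finset.univ \ U).filter (fun x => x ∉ v :: s) :=
      Finset.mem_filter.mpr ⟨hx, by simpa using hx2⟩
    rw [hcon] at hxF
    simp at hxF
  have h1 := Finset.card_le_card hsub
  have h2 := (v :: s).toFinset_card_le
  simp only [List.length_cons] at h2
  omega

lemma prufer_inj (n : ℕ) (s : List (Fin n)) : ∀ (t : List (Fin n)) (U : Finset (Fin n)),
    (Finset.univ \ U).card = s.length + 2 → (∀ x ∈ s, x ∈ Finset.univ \ U) →
    (Finset.univ \ U).card = t.length + 2 → (∀ x ∈ t, x ∈ Finset.univ \ U) →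
    (∀ e, e ∈ pruferDecodeAux n s U ↔ e ∈ pruferDecodeAux n t U) → s = t := by
  induction s with
  | nil =>
    intro t U hcs hms hct hmt hsame
    have : t.length = 0 := by simp only [List.length_nil] at hcs; omega
    exact (List.length_eq_zero_iff.mp this).symm
  | cons v s ih =>
    intro t U hcs hms hct hmt hsame
    obtain ⟨w, t', rfl⟩ : ∃ w t', t = w :: t' := by
      cases t with
      | nil => simp only [List.length_nil, List.length_cons] at hct hcs; omega
      | cons w t' => exact ⟨w, t', rfl⟩
    simp only [List.length_cons] at hcs hct
    have hlen : s.length = t'.length := by omega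
    obtain ⟨ℓs, hℓs⟩ := exists_min_decode n U v s (by omega)
    obtain ⟨ℓt, hℓt⟩ := exists_min_decode n U w t' (by omega)
    -- common facts
    have hms' : ∀ x ∈ s, x ∈ Finset.univ \ U := fun x hx => hms x (List.mem_cons_of_mem _ hx)
    have hmt' : ∀ x ∈ t', x ∈ Finset.univ \ U := fun x hx => hmt x (List.mem_cons_of_mem _ hx)
    -- degL equality
    have htfin : (pruferDecodeAux n (v :: s) U).toFinset = (pruferDecodeAux n (w :: t') U).toFinset := by
      ext e; simp only [List.mem_toFinset]; exact hsame e
    have hdegeq : ∀ x, degL x (pruferDecodeAux n (v :: s) U) = degL x (pruferDecodeAux n (w :: t') U) := by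
      intro x; rw [degL, degL, htfin]
    obtain ⟨_, _, _, _, _, _, hleafS, _⟩ := prufer_main n (v :: s) U (by simp; omega) hms
    obtain ⟨_, _, _, _, _, _, hleafT, _⟩ := prufer_main n (w :: t') U (by simp; omega) hmt
    -- the filters agree
    have hfil : (Finset.univ \ U).filter (fun x => x ∉ v :: s) =
        (Finset.univ \ U).filter (fun x => x ∉ w :: t') := by
      ext x
      simp only [Finset.mem_filter, decide_eq_true_eq]
      constructor
      · rintro ⟨hx, hx2⟩
        exact ⟨hx, (hleafT x hx).mp ((hdegeq x) ▸ (hleafS x hx).mpr hx2)⟩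
      · rintro ⟨hx, hx2⟩
        exact ⟨hx, (hleafS x hx).mp ((hdegeq x).symm ▸ (hleafT x hx).mpr hx2)⟩
    have hℓeq : ℓs = ℓt := by
      rw [hfil] at hℓs; rw [hℓs] at hℓt; exact Option.some_injective _ hℓt
    subst hℓeq
    -- basic properties of ℓs
    have hℓF := Finset.mem_of_min hℓs
    have hℓV : ℓs ∈ Finset.univ \ U := (Finset.mem_filter.mp hℓF).1
    have hℓns : ℓs ∉ v :: s := by have := (Finset.mem_filter.mp hℓF).2; simpa using this
    have hℓnt : ℓs ∉ w :: t' := by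
      have := (Finset.mem_filter.mp (Finset.mem_of_min hℓt)).2; simpa using this
    have hV' : Finset.univ \ (insert ℓs U) = (Finset.univ \ U).erase ℓs := by
      ext x; simp [not_or, and_comm]
    have hcard' : (Finset.univ \ (insert ℓs U)).card = s.length + 2 := by
      rw [hV', Finset.card_erase_of_mem hℓV]; omega
    have hmemS' : ∀ x ∈ s, x ∈ Finset.univ \ (insert ℓs U) := by
      intro x hx
      rw [hV', Finset.mem_erase]
      exact ⟨fun h => hℓns (h ▸ List.mem_cons_of_mem v hx), hms' x hx⟩
    have hmemT' : ∀ x ∈ t', x ∈ Finset.univ \ (insert ℓs U) := by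
      intro x hx
      rw [hV', Finset.mem_erase]
      exact ⟨fun h => hℓnt (h ▸ List.mem_cons_of_mem w hx), hmt' x hx⟩
    obtain ⟨_, ih2S, _, _, _, _, _, _⟩ := prufer_main n s (insert ℓs U) hcard' hmemS'
    obtain ⟨_, ih2T, _, _, _, _, _, _⟩ := prufer_main n t' (insert ℓs U) (by omega) hmemT'
    have hℓnotV' : ℓs ∉ Finset.univ \ (insert ℓs U) := by rw [hV']; simp
    have keyS : ∀ e ∈ pruferDecodeAux n s (insert ℓs U), ℓs ∉ e :=
      fun e he hx => hℓnotV' (ih2S e he ℓs hx)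
    have keyT : ∀ e ∈ pruferDecodeAux n t' (insert ℓs U), ℓs ∉ e :=
      fun e he hx => hℓnotV' (ih2T e he ℓs hx)
    rw [decode_cons U v s ℓs hℓs, decode_cons U w t' ℓs hℓt] at hsame
    -- v = w
    have hvw : v = w := by
      have h1 : s(ℓs, v) ∈ s(ℓs, w) :: pruferDecodeAux n t' (insert ℓs U) :=
        (hsame _).mp List.mem_cons_self
      rcases List.mem_cons.mp h1 with h | h
      · rcases Sym2.eq_iff.mp h with ⟨_, h2⟩ | ⟨h1', h2'⟩
        · exact h2
        · exact absurd h2'.symm (fun hc => hℓns (hc ▸ List.mem_cons_self (a := v) (l := s)))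
      · exact absurd (by simp : ℓs ∈ s(ℓs, v)) (keyT _ h)
    subst hvw
    -- tails agree
    have htails : ∀ e, e ∈ pruferDecodeAux n s (insert ℓs U) ↔
        e ∈ pruferDecodeAux n t' (insert ℓs U) := by
      intro e
      constructor
      · intro he
        have := (hsame e).mp (List.mem_cons_of_mem _ he)
        rcases List.mem_cons.mp this with h | h
        · exact absurd (h ▸ (by simp : ℓs ∈ s(ℓs, v))) (keyS _ he)
        · exact h
      · intro he
        have := (hsame e).mpr (List.mem_cons_of_mem _ he)
        rcases List.mem_cons.mp this with h | h
        · exact absurd (h ▸ (by simp : ℓs ∈ s(ℓs, v))) (keyT _ he)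
        · exact h
    rw [ih t' (insert ℓs U) hcard' hmemS' (by omega) hmemT' htails]

lemma prufer_surj (n : ℕ) (m : ℕ) : ∀ (U : Finset (Fin n)) (G : SimpleGraph (Fin n)),
    (Finset.univ \ U).card = m + 2 →
    (∀ a b, G.Adj a b → a ∈ Finset.univ \ U ∧ b ∈ Finset.univ \ U) →
    (∀ x ∈ Finset.univ \ U, ∀ y ∈ Finset.univ \ U, G.Reachable x y) →
    G.edgeSet.ncard = m + 1 →
    ∃ s : List (Fin n), s.length = m ∧ (∀ x ∈ s, x ∈ Finset.univ \ U) ∧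
      (∀ e, e ∈ pruferDecodeAux n s U ↔ e ∈ G.edgeSet) := by
  induction m with
  | zero =>
    intro U G hcard hadjV _hconn hcount
    obtain ⟨a, b, hab⟩ := List.length_eq_two.mp
      ((Finset.length_sort (α := Fin n) (· ≤ ·)).trans hcard)
    have hnd : ([a, b] : List (Fin n)).Nodup := hab ▸ Finset.sort_nodup _ _
    have hne : a ≠ b := by simpa using hnd
    have hVeq : ∀ x ∈ Finset.univ \ U, x = a ∨ x = b := by
      intro x hx
      have : x ∈ Finset.univ \ U ↔ x ∈ ({a, b} : Finset (Fin n)) := by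
        rw [← Finset.mem_sort (α := Fin n) (· ≤ ·), hab]; simp
      simpa using this.mp hx
    obtain ⟨e, he⟩ := Set.ncard_eq_one.mp hcount
    have heab : e = s(a, b) := by
      induction e with
      | _ x y =>
        have hadj : G.Adj x y := by rw [← SimpleGraph.mem_edgeSet, he]; rfl
        have hx := hVeq x (hadjV x y hadj).1
        have hy := hVeq y (hadjV x y hadj).2
        have hxy := hadj.ne
        rcases hx with rfl | rfl <;> rcases hy with rfl | rfl
        · exact absurd rfl hxy
        · rfl
        · exact Sym2.eq_swap
        · exact absurd rfl hxy
    refine ⟨[], rfl, by simp, ?_⟩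
    intro e'
    rw [decode_nil U a b hab, he, heab]
    simp
  | succ m ih =>
    intro U G hcard hadjV hconn hcount
    classical
    haveI : DecidableRel G.Adj := Classical.decRel _
    -- vertices outside V have degree 0
    have hdeg0 : ∀ x, x ∉ Finset.univ \ U → G.degree x = 0 := by
      intro x hx
      rw [← SimpleGraph.card_neighborFinset_eq_degree, Finset.card_eq_zero,
        Finset.eq_empty_iff_forall_notMem]
      intro y hy
      exact hx (hadjV _ _ ((SimpleGraph.mem_neighborFinset _ _ _).mp hy)).1
    -- vertices in V have degree ≥ 1
    have hdegpos : ∀ x ∈ Finset.univ \ U, 1 ≤ G.degree x := by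
      intro x hx
      have hxe : ((Finset.univ \ U).erase x).Nonempty := by
        rw [← Finset.card_pos, Finset.card_erase_of_mem hx, hcard]; omega
      obtain ⟨y, hy⟩ := hxe
      obtain ⟨hyx, hyV⟩ := Finset.mem_erase.mp hy
      obtain ⟨w⟩ := hconn x hx y hyV
      cases w with
      | nil => exact absurd rfl hyx.symm
      | cons ha p => exact (SimpleGraph.degree_pos_iff_exists_adj _ _).mpr ⟨_, ha⟩
    have hefc : G.edgeFinset.card = m + 2 := by
      have := Set.ncard_eq_toFinset_card' G.edgeSet
      rw [hcount] at this
      rw [SimpleGraph.edgeFinset]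
      omega
    -- there is a vertex of degree 1
    have hleaf : ∃ x ∈ Finset.univ \ U, G.degree x = 1 := by
      by_contra hcon
      push_neg at hcon
      have h2 : ∀ x ∈ Finset.univ \ U, 2 ≤ G.degree x := by
        intro x hx
        have h1 := hdegpos x hx
        have h3 := hcon x hx
        omega
      have hsum := G.sum_degrees_eq_twice_card_edges
      have hss : ∑ x ∈ Finset.univ \ U, G.degree x = ∑ x : Fin n, G.degree x := by
        refine Finset.sum_subset (Finset.subset_univ _) ?_
        intro x _ hx
        exact hdeg0 x hx
      have hge : (Finset.univ \ U).card * 2 ≤ ∑ x ∈ Finset.univ \ U, G.degree x := by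
        calc (Finset.univ \ U).card * 2 = ∑ _x ∈ Finset.univ \ U, 2 := by
              rw [Finset.sum_const, smul_eq_mul]
          _ ≤ _ := Finset.sum_le_sum h2
      rw [hss, hsum, hefc] at hge
      rw [hcard] at hge
      omega
    -- the minimal leaf
    have hlne : ((Finset.univ \ U).filter (fun x => G.degree x = 1)).Nonempty := by
      obtain ⟨x, hx1, hx2⟩ := hleaf
      exact ⟨x, Finset.mem_filter.mpr ⟨hx1, hx2⟩⟩
    set ℓ := ((Finset.univ \ U).filter (fun x => G.degree x = 1)).min' hlne with hℓdef
    have hℓmem := Finset.min'_mem _ hlne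
    have hℓV : ℓ ∈ Finset.univ \ U := (Finset.mem_filter.mp hℓmem).1
    have hℓdeg : G.degree ℓ = 1 := by
      have := (Finset.mem_filter.mp hℓmem).2; simpa using this
    obtain ⟨v, hv⟩ := Finset.card_eq_one.mp
      ((SimpleGraph.card_neighborFinset_eq_degree _ _).trans hℓdeg)
    have hadjℓv : G.Adj ℓ v := by
      rw [← SimpleGraph.mem_neighborFinset, hv]; simp
    have huniq : ∀ u, G.Adj ℓ u → u = v := by
      intro u hu
      have : u ∈ G.neighborFinset ℓ := (SimpleGraph.mem_neighborFinset _ _ _).mpr hu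
      rw [hv] at this; simpa using this
    have hℓv : ℓ ≠ v := hadjℓv.ne
    have hvV : v ∈ Finset.univ \ U := (hadjV _ _ hadjℓv).2
    have hV' : Finset.univ \ (insert ℓ U) = (Finset.univ \ U).erase ℓ := by
      ext x; simp [not_or, and_comm]
    have hcard' : (Finset.univ \ (insert ℓ U)).card = m + 2 := by
      rw [hV', Finset.card_erase_of_mem hℓV, hcard]; omega
    have hmemx : ∀ x ∈ Finset.univ \ U, x ≠ ℓ → x ∈ Finset.univ \ (insert ℓ U) := by
      intro x hx hxne; rw [hV', Finset.mem_erase]; exact ⟨hxne, hx⟩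
    have hℓnotV' : ℓ ∉ Finset.univ \ (insert ℓ U) := by rw [hV']; simp
    -- the reduced graph
    set G' := G.deleteEdges {s(ℓ, v)} with hG'def
    have hadjV' : ∀ a b, G'.Adj a b → a ∈ Finset.univ \ (insert ℓ U) ∧
        b ∈ Finset.univ \ (insert ℓ U) := by
      intro a b hab
      rw [hG'def, SimpleGraph.deleteEdges_adj, Set.mem_singleton_iff] at hab
      obtain ⟨hab1, hab2⟩ := hab
      have haℓ : a ≠ ℓ := by
        rintro rfl
        exact hab2 (by rw [huniq b hab1])
      have hbℓ : b ≠ ℓ := by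
        rintro rfl
        rw [huniq a hab1.symm] at hab2
        exact hab2 Sym2.eq_swap
      exact ⟨hmemx a (hadjV _ _ hab1).1 haℓ, hmemx b (hadjV _ _ hab1).2 hbℓ⟩
    have hconn' : ∀ x ∈ Finset.univ \ (insert ℓ U), ∀ y ∈ Finset.univ \ (insert ℓ U),
        G'.Reachable x y := by
      intro x hx y hy
      have hxℓ : x ≠ ℓ := fun h => hℓnotV' (h ▸ hx)
      have hyℓ : y ≠ ℓ := fun h => hℓnotV' (h ▸ hy)
      have hxV : x ∈ Finset.univ \ U := (Finset.mem_erase.mp (hV' ▸ hx)).2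
      have hyV : y ∈ Finset.univ \ U := (Finset.mem_erase.mp (hV' ▸ hy)).2
      obtain ⟨w⟩ := hconn x hxV y hyV
      set p := w.toPath with hp
      have hno : ℓ ∉ p.val.support := path_avoids_leaf huniq p.property hxℓ hyℓ
      have hedges : ∀ e ∈ p.val.edges, e ∉ ({s(ℓ, v)} : Set (Sym2 (Fin n))) := by
        intro e he hcon2
        rw [Set.mem_singleton_iff] at hcon2
        subst hcon2
        exact hno (p.val.fst_mem_support_of_mem_edges he)
      exact ⟨p.val.toDeleteEdges _ hedges⟩
    have hmemE : s(ℓ, v) ∈ G.edgeSet := hadjℓv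
    have hcount' : G'.edgeSet.ncard = m + 1 := by
      rw [hG'def, SimpleGraph.edgeSet_deleteEdges,
        Set.ncard_diff_singleton_of_mem hmemE, hcount]
      omega
    obtain ⟨s', hlen', hmem', hiff'⟩ := ih (insert ℓ U) G' hcard' hadjV' hconn' hcount'
    -- properties of the decoded list for s'
    obtain ⟨_, _, _, _, _, _, m7, _⟩ := prufer_main n s' (insert ℓ U) (by rw [hcard', hlen']) hmem'
    have hdfin : (pruferDecodeAux n s' (insert ℓ U)).toFinset = G'.edgeFinset := by
      ext e
      rw [List.mem_toFinset, SimpleGraph.mem_edgeFinset]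
      exact hiff' e
    -- ℓ is the minimum of the decode filter
    have hℓns' : ℓ ∉ v :: s' := by
      intro h
      rcases List.mem_cons.mp h with h | h
      · exact hℓv h
      · exact hℓnotV' (hmem' ℓ h)
    have hℓF : ℓ ∈ (Finset.univ \ U).filter (fun x => x ∉ v :: s') :=
      Finset.mem_filter.mpr ⟨hℓV, by simpa using hℓns'⟩
    have hminle : ∀ x ∈ (Finset.univ \ U).filter (fun x => x ∉ v :: s'), ℓ ≤ x := by
      intro x hx
      obtain ⟨hxV, hxns⟩ := Finset.mem_filter.mp hx
      have hxns' : x ∉ v :: s' := by simpa using hxns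
      by_cases hxℓ : x = ℓ
      · exact le_of_eq hxℓ.symm
      · have hxV' : x ∈ Finset.univ \ (insert ℓ U) := hmemx x hxV hxℓ
        have hxv : x ≠ v := fun h => hxns' (h ▸ List.mem_cons_self (a := v) (l := s'))
        have hxs' : x ∉ s' := fun h => hxns' (List.mem_cons_of_mem _ h)
        -- degree of x in G' is 1
        have hdegL : degL x (pruferDecodeAux n s' (insert ℓ U)) = 1 := (m7 x hxV').mpr hxs'
        have hinc : G'.incidenceFinset x = G'.edgeFinset.filter (fun e => x ∈ e) := by
          ext e
          rw [SimpleGraph.mem_incidenceFinset, Finset.mem_filter, SimpleGraph.mem_edgeFinset]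
          exact Iff.rfl
        have hdegG' : G'.degree x = 1 := by
          rw [← SimpleGraph.card_incidenceFinset_eq_degree, hinc, ← hdfin]
          exact hdegL
        have hnbr : G.neighborFinset x = G'.neighborFinset x := by
          ext u
          rw [SimpleGraph.mem_neighborFinset, SimpleGraph.mem_neighborFinset, hG'def,
            SimpleGraph.deleteEdges_adj, Set.mem_singleton_iff]
          constructor
          · intro h
            refine ⟨h, ?_⟩
            intro hcon2
            rcases Sym2.eq_iff.mp hcon2 with ⟨h1, _⟩ | ⟨h1, _⟩
            · exact hxℓ h1
            · exact hxv h1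
          · exact fun h => h.1
        have hdegG : G.degree x = 1 := by
          rw [← SimpleGraph.card_neighborFinset_eq_degree, hnbr,
            SimpleGraph.card_neighborFinset_eq_degree, hdegG']
        exact Finset.min'_le _ _ (Finset.mem_filter.mpr ⟨hxV, hdegG⟩)
    have hminF : ((Finset.univ \ U).filter (fun x => x ∉ v :: s')).min = some ℓ := by
      refine le_antisymm (Finset.min_le hℓF) (Finset.le_min ?_)
      intro b hb
      exact WithTop.coe_le_coe.mpr (hminle b hb)
    refine ⟨v :: s', by simp [hlen'], ?_, ?_⟩
    · intro x hx
      rcases List.mem_cons.mp hx with rfl | hx'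
      · exact hvV
      · exact (hV' ▸ Finset.erase_subset _ _) (hmem' x hx')
    · intro e
      rw [decode_cons U v s' ℓ hminF]
      rw [List.mem_cons]
      constructor
      · rintro (rfl | he)
        · exact hmemE
        · have := (hiff' e).mp he
          rw [hG'def, SimpleGraph.edgeSet_deleteEdges] at this
          exact this.1
      · intro he
        by_cases heq : e = s(ℓ, v)
        · exact Or.inl heq
        · refine Or.inr ((hiff' e).mpr ?_)
          rw [hG'def, SimpleGraph.edgeSet_deleteEdges]
          exact ⟨he, by simpa using heq⟩


end PruferAux

/-- The tree (as a simple graph on `Fin n`) decoded from a Prüfer sequence. -/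
def pruferDecode {n : ℕ} (s : List (Fin n)) : SimpleGraph (Fin n) :=
  SimpleGraph.fromEdgeSet {e | e ∈ pruferDecodeAux n s ∅}

/-- for `n ≥ 2`, the Prüfer decoding map, from sequences in `{0,…,n-1}` of
length `n - 2` to graphs on `Fin n`, is a bijection onto the set of labelled trees. -/
theorem prufer_decode_bijective (n : ℕ) (hn : 2 ≤ n) :
    Function.Injective (fun s : Fin (n - 2) → Fin n => pruferDecode (List.ofFn s)) ∧
    Set.range (fun s : Fin (n - 2) → Fin n => pruferDecode (List.ofFn s))
      = {G : SimpleGraph (Fin n) | G.IsTree} := by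
  have hcardV : (Finset.univ \ (∅ : Finset (Fin n))).card = n := by simp
  have hlen2 : ∀ s : Fin (n - 2) → Fin n, (List.ofFn s).length = n - 2 := fun s => by simp
  have hcards : ∀ s : Fin (n - 2) → Fin n,
      (Finset.univ \ (∅ : Finset (Fin n))).card = (List.ofFn s).length + 2 := by
    intro s; rw [hcardV, hlen2]; omega
  have hmems : ∀ (l : List (Fin n)), ∀ x ∈ l, x ∈ Finset.univ \ (∅ : Finset (Fin n)) := by
    intro l x _; simp
  constructor
  · intro s t h
    simp only at h
    have hsame : ∀ e, e ∈ pruferDecodeAux n (List.ofFn s) ∅ ↔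
        e ∈ pruferDecodeAux n (List.ofFn t) ∅ := by
      obtain ⟨_, _, hd3s, _, _, _, _, _⟩ := prufer_main n (List.ofFn s) ∅ (hcards s) (hmems _)
      obtain ⟨_, _, hd3t, _, _, _, _, _⟩ := prufer_main n (List.ofFn t) ∅ (hcards t) (hmems _)
      intro e
      constructor
      · intro he
        have hes : e ∈ (pruferDecode (List.ofFn s)).edgeSet := by
          rw [pruferDecode, SimpleGraph.edgeSet_fromEdgeSet]
          exact ⟨he, hd3s e he⟩
        rw [h] at hes
        rw [pruferDecode, SimpleGraph.edgeSet_fromEdgeSet] at hes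
        exact hes.1
      · intro he
        have het : e ∈ (pruferDecode (List.ofFn t)).edgeSet := by
          rw [pruferDecode, SimpleGraph.edgeSet_fromEdgeSet]
          exact ⟨he, hd3t e he⟩
        rw [← h] at het
        rw [pruferDecode, SimpleGraph.edgeSet_fromEdgeSet] at het
        exact het.1
    have := prufer_inj n (List.ofFn s) (List.ofFn t) ∅ (hcards s) (hmems _)
      (hcards t) (hmems _) hsame
    exact List.ofFn_injective this
  · ext G
    simp only [Set.mem_range, Set.mem_setOf_eq]
    constructor
    · rintro ⟨s, rfl⟩
      obtain ⟨_, _, _, _, m5, _, _, m8⟩ := prufer_main n (List.ofFn s) ∅ (hcards s) (hmems _)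
      refine ⟨?_, m8⟩
      rw [SimpleGraph.connected_iff]
      refine ⟨?_, ⟨⟨0, by omega⟩⟩⟩
      intro x y
      exact m5 x (by simp) y (by simp)
    · intro hG
      classical
      obtain ⟨hconn, hacy⟩ := (SimpleGraph.isTree_iff G).mp hG
      have hcnt : G.edgeSet.ncard = (n - 2) + 1 := by
        have h1 := hG.card_edgeFinset
        rw [Fintype.card_fin] at h1
        rw [Set.ncard_eq_toFinset_card' G.edgeSet]
        rw [SimpleGraph.edgeFinset] at h1
        omega
      obtain ⟨s, hlen, _, hiff⟩ := prufer_surj n (n - 2) ∅ G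
        (by rw [hcardV]; omega)
        (fun a b _ => ⟨by simp, by simp⟩)
        (fun x _ y _ => hconn.preconnected x y)
        hcnt
      refine ⟨fun i => s.get (Fin.cast hlen.symm i), ?_⟩
      have hofn : List.ofFn (fun i : Fin (n - 2) => s.get (Fin.cast hlen.symm i)) = s := by
        apply List.ext_getElem
        · simp [hlen]
        · intro i h1 h2
          simp [List.getElem_ofFn]
      rw [hofn]
      ext a b
      rw [pruferDecode, SimpleGraph.fromEdgeSet_adj, Set.mem_setOf_eq]
      constructor
      · rintro ⟨h1, _⟩
        exact (G.mem_edgeSet).mp ((hiff _).mp h1)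
      · intro h1
        exact ⟨(hiff _).mpr ((G.mem_edgeSet).mpr h1), h1.ne⟩
end

section
/- Let A ∈ ℤ^{d×n} be a configuration matrix. Any two minimal Markov bases of A have the same cardinality, and moreover the multiset of A-degrees {Au⁺ : u ∈ M} is the same for every minimal Markov basis M. -/
open MvPolynomial

section Aux

variable {k : Type*} [Field k] {d n : ℕ}

/-- columns of `A` as weights -/
def colW (A : Matrix (Fin d) (Fin n) ℤ) : Fin n → (Fin d → ℤ) := fun i j => A j i

lemma weight_colW (A : Matrix (Fin d) (Fin n) ℤ) (u : Fin n →₀ ℕ) :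
    Finsupp.weight (colW A) u = A.mulVec (natToInt (u : Fin n → ℕ)) := by
  funext j
  rw [Finsupp.weight_apply, Finsupp.sum_fintype _ _ (fun i => by simp)]
  have : (∑ i, u i • colW A i) j = ∑ i, u i • colW A i j := by
    simp [Finset.sum_apply]
  rw [this, Matrix.mulVec]
  simp [colW, dotProduct, natToInt, mul_comm, nsmul_eq_mul]

lemma homog_natMonomial (A : Matrix (Fin d) (Fin n) ℤ) (u : Fin n → ℕ) :
    IsWeightedHomogeneous (colW A) (natMonomial k u) (A.mulVec (natToInt u)) := by
  apply isWeightedHomogeneous_monomial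
  rw [weight_colW]
  congr

lemma IsWeightedHomogeneous.sub' {A : Matrix (Fin d) (Fin n) ℤ}
    {p q : MvPolynomial (Fin n) k} {m : Fin d → ℤ}
    (hp : IsWeightedHomogeneous (colW A) p m) (hq : IsWeightedHomogeneous (colW A) q m) :
    IsWeightedHomogeneous (colW A) (p - q) m := by
  intro e he
  rw [coeff_sub] at he
  by_cases h : coeff e p = 0
  · exact hq (by simpa [h] using he)
  · exact hp h

variable (A : Matrix (Fin d) (Fin n) ℤ)

lemma homog_moveBinomial {u : Fin n → ℤ} (hu : A.mulVec u = 0) :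
    IsWeightedHomogeneous (colW A) (moveBinomial k u)
      (A.mulVec (natToInt (posPart u))) := by
  have hpn : natToInt (posPart u) - natToInt (negPart u) = u := by
    funext i
    change ((u i).toNat : ℤ) - ((-(u i)).toNat : ℤ) = u i
    omega
  have : A.mulVec (natToInt (negPart u)) = A.mulVec (natToInt (posPart u)) := by
    have := Matrix.mulVec_sub A (natToInt (posPart u)) (natToInt (negPart u))
    rw [hpn, hu] at this
    exact (sub_eq_zero.mp this.symm).symm
  exact IsWeightedHomogeneous.sub' (homog_natMonomial A _) (this ▸ homog_natMonomial A _)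

variable {A}

lemma grade0 (hA : IsConfiguration A)
    {p : MvPolynomial (Fin n) k} (hp : IsWeightedHomogeneous (colW A) p 0) :
    p = C (constantCoeff p) := by
  have key : ∀ e : Fin n →₀ ℕ, coeff e p ≠ 0 → e = 0 := by
    intro e he
    have h1 := hp he
    rw [weight_colW] at h1
    have h2 := hA _ h1
    exact Finsupp.coe_eq_zero.mp h2
  ext e
  rw [coeff_C]
  by_cases h0 : e = 0
  · simp [h0, constantCoeff_eq]
  · rw [if_neg (by exact fun h => h0 h.symm)]
    by_contra hc
    exact h0 (key e hc)

lemma constCoeff_zero_of_homog {p : MvPolynomial (Fin n) k} {c : Fin d → ℤ}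
    (hp : IsWeightedHomogeneous (colW A) p c) (hc : c ≠ 0) :
    constantCoeff p = 0 := by
  by_contra h
  rw [constantCoeff_eq] at h
  have := hp h
  rw [map_zero] at this
  exact hc this.symm

lemma whc_mul_right {w : Fin n → Fin d → ℤ} {g : MvPolynomial (Fin n) k} {c : Fin d → ℤ}
    (hg : IsWeightedHomogeneous w g c) (r : MvPolynomial (Fin n) k) (b : Fin d → ℤ) :
    weightedHomogeneousComponent w b (r * g)
      = weightedHomogeneousComponent w (b - c) r * g := by
  classical
  ext e
  rw [coeff_weightedHomogeneousComponent, coeff_mul, coeff_mul]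
  by_cases hb : Finsupp.weight w e = b
  · rw [if_pos hb]
    apply Finset.sum_congr rfl
    rintro ⟨e1, e2⟩ hmem
    rw [Finset.HasAntidiagonal.mem_antidiagonal] at hmem
    rw [coeff_weightedHomogeneousComponent]
    by_cases hg2 : coeff e2 g = 0
    · simp [hg2]
    · rw [if_pos]
      have h2 := hg hg2
      have hadd : Finsupp.weight w e1 + Finsupp.weight w e2 = b := by
        rw [← map_add, hmem, hb]
      rw [← hadd, h2]; abel
  · rw [if_neg hb]
    symm
    apply Finset.sum_eq_zero
    rintro ⟨e1, e2⟩ hmem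
    rw [Finset.HasAntidiagonal.mem_antidiagonal] at hmem
    rw [coeff_weightedHomogeneousComponent]
    by_cases hg2 : coeff e2 g = 0
    · simp [hg2]
    by_cases h1 : Finsupp.weight w e1 = b - c
    · exact absurd (by rw [← hmem, map_add, h1, hg hg2]; abel) hb
    · rw [if_neg h1, zero_mul]

/-- The irrelevant maximal ideal. -/
noncomputable def mId (k : Type*) [Field k] (n : ℕ) : Ideal (MvPolynomial (Fin n) k) :=
  RingHom.ker (constantCoeff (R := k) (σ := Fin n))

/-- homogeneous components of elements of a homogeneous span stay in the span -/
lemma comp_mem {S : Set (MvPolynomial (Fin n) k)}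
    (hS : ∀ s ∈ S, ∃ c, IsWeightedHomogeneous (colW A) s c)
    {f : MvPolynomial (Fin n) k} (hf : f ∈ Ideal.span S) (b : Fin d → ℤ) :
    weightedHomogeneousComponent (colW A) b f ∈ Ideal.span S := by
  obtain ⟨cc, hsupp, hsum⟩ := Submodule.mem_span_set.mp hf
  rw [← hsum, map_finsuppSum]
  apply Submodule.sum_mem
  intro s hs
  obtain ⟨c, hc⟩ := hS s (hsupp hs)
  show weightedHomogeneousComponent (colW A) b (cc s • s) ∈ _
  rw [smul_eq_mul, whc_mul_right hc]
  exact Ideal.mul_mem_left _ _ (Ideal.subset_span (hsupp hs))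

/-- Decomposition of a homogeneous element of a homogeneous span. -/
lemma span_decomp (hA : IsConfiguration A) {S : Set (MvPolynomial (Fin n) k)}
    (hS : ∀ s ∈ S, ∃ c, IsWeightedHomogeneous (colW A) s c)
    {f : MvPolynomial (Fin n) k} (hf : f ∈ Ideal.span S) {b : Fin d → ℤ}
    (hfb : IsWeightedHomogeneous (colW A) f b) :
    f ∈ Submodule.span k {s | s ∈ S ∧ IsWeightedHomogeneous (colW A) s b}
        ⊔ Submodule.restrictScalars k (mId k n * Ideal.span S) := by
  obtain ⟨cc, hsupp, hsum⟩ := Submodule.mem_span_set.mp hf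
  have hf2 : f = weightedHomogeneousComponent (colW A) b f :=
    (hfb.weightedHomogeneousComponent_same).symm
  rw [hf2, ← hsum, map_finsuppSum]
  apply Submodule.sum_mem
  intro s hs
  obtain ⟨c, hc⟩ := hS s (hsupp hs)
  show weightedHomogeneousComponent (colW A) b (cc s • s) ∈ _
  rw [smul_eq_mul, whc_mul_right hc]
  by_cases hcb : c = b
  · subst hcb
    have h0 : IsWeightedHomogeneous (colW A)
        (weightedHomogeneousComponent (colW A) (c - c) (cc s)) 0 := by
      rw [sub_self]
      exact weightedHomogeneousComponent_isWeightedHomogeneous 0 (cc s)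
    rw [grade0 hA h0, ← MvPolynomial.smul_eq_C_mul]
    exact Submodule.mem_sup_left
      (Submodule.smul_mem _ _ (Submodule.subset_span ⟨hsupp hs, hc⟩))
  · apply Submodule.mem_sup_right
    rw [Submodule.restrictScalars_mem]
    refine Ideal.mul_mem_mul ?_ (Ideal.subset_span (hsupp hs))
    rw [mId, RingHom.mem_ker]
    exact constCoeff_zero_of_homog
      (weightedHomogeneousComponent_isWeightedHomogeneous (b - c) (cc s))
      (sub_ne_zero.mpr (Ne.symm hcb))

/-- graded Nakayama step -/
lemma nakayama (hA : IsConfiguration A) {S : Set (MvPolynomial (Fin n) k)}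
    (hS : ∀ s ∈ S, ∃ c, IsWeightedHomogeneous (colW A) s c)
    {g : MvPolynomial (Fin n) k} {b : Fin d → ℤ}
    (hg : IsWeightedHomogeneous (colW A) g b)
    (hmem : g ∈ Ideal.span S ⊔ mId k n * (Ideal.span S ⊔ Ideal.span {g})) :
    g ∈ Ideal.span S := by
  rw [Ideal.mul_sup] at hmem
  have hre : Ideal.span S ⊔ (mId k n * Ideal.span S ⊔ mId k n * Ideal.span {g})
      = Ideal.span S ⊔ mId k n * Ideal.span {g} := by
    rw [← sup_assoc, sup_eq_left.mpr (Ideal.mul_le_right (I := mId k n) (J := Ideal.span S))]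
  rw [hre] at hmem
  obtain ⟨j, hj, h, hh, hgeq⟩ := Submodule.mem_sup.mp hmem
  rw [mul_comm] at hh
  obtain ⟨p, hp, hpg⟩ := Ideal.mem_span_singleton_mul.mp hh
  have hcomp : g = weightedHomogeneousComponent (colW A) b g :=
    (hg.weightedHomogeneousComponent_same).symm
  have hzero : weightedHomogeneousComponent (colW A) b h = 0 := by
    rw [← hpg, mul_comm, whc_mul_right hg]
    have h0 : IsWeightedHomogeneous (colW A)
        (weightedHomogeneousComponent (colW A) (b - b) p) 0 := by
      rw [sub_self]
      exact weightedHomogeneousComponent_isWeightedHomogeneous 0 p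
    rw [grade0 hA h0]
    have : constantCoeff (weightedHomogeneousComponent (colW A) (b - b) p) = 0 := by
      rw [sub_self, constantCoeff_eq]
      classical
      rw [coeff_weightedHomogeneousComponent, if_pos (map_zero _), ← constantCoeff_eq]
      exact RingHom.mem_ker.mp hp
    rw [this, map_zero, zero_mul]
  have : g = weightedHomogeneousComponent (colW A) b j := by
    rw [hcomp, ← hgeq, map_add, hzero, add_zero]
  rw [this]
  exact comp_mem hS hj b

end Aux
section Basis

variable {k : Type*} [Field k] {d n : ℕ} {A : Matrix (Fin d) (Fin n) ℤ}

/-- The degree-`b` part of the toric ideal, as a `k`-subspace. -/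
noncomputable def Vb (k : Type*) [Field k] {d n : ℕ} (A : Matrix (Fin d) (Fin n) ℤ)
    (b : Fin d → ℤ) : Submodule k (MvPolynomial (Fin n) k) :=
  Submodule.restrictScalars k (toricIdeal k A) ⊓ weightedHomogeneousSubmodule k (colW A) b

/-- The degree-`b` part of `m·I_A`, as a `k`-subspace. -/
noncomputable def Wb (k : Type*) [Field k] {d n : ℕ} (A : Matrix (Fin d) (Fin n) ℤ)
    (b : Fin d → ℤ) : Submodule k (MvPolynomial (Fin n) k) :=
  Submodule.restrictScalars k (mId k n * toricIdeal k A) ⊓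
    weightedHomogeneousSubmodule k (colW A) b

lemma basis_of_minimal (hA : IsConfiguration A) (M : Finset (Fin n → ℤ))
    (hM : IsMinimalMarkovBasis k A (↑M : Set (Fin n → ℤ))) (b : Fin d → ℤ) :
    Nonempty (Module.Basis
      {u // u ∈ M.filter (fun u => A.mulVec (natToInt (_root_.posPart u)) = b)} k
      ↥((Vb k A b).map (Wb k A b).mkQ)) := by
  classical
  obtain ⟨⟨hker, hspan⟩, hmin⟩ := hM
  set S : Set (MvPolynomial (Fin n) k) := moveBinomial k '' (↑M : Set (Fin n → ℤ)) with hS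
  set Mb := M.filter (fun u => A.mulVec (natToInt (_root_.posPart u)) = b) with hMbdef
  set q := (Wb k A b).mkQ with hq
  have hSh : ∀ (T : Set (Fin n → ℤ)), T ⊆ ↑M →
      ∀ s ∈ moveBinomial k '' T, ∃ c, IsWeightedHomogeneous (colW A) s c := by
    rintro T hT s ⟨u, hu, rfl⟩
    exact ⟨_, homog_moveBinomial A (hker u (hT hu))⟩
  have hbin : ∀ u : Fin n → ℤ, u ∈ M → moveBinomial k u ∈ toricIdeal k A := by
    intro u hu
    rw [← hspan]
    exact Ideal.subset_span ⟨u, hu, rfl⟩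
  have hhom : ∀ u : Fin n → ℤ, u ∈ Mb →
      IsWeightedHomogeneous (colW A) (moveBinomial k u) b := by
    intro u hu
    rw [hMbdef, Finset.mem_filter] at hu
    have := homog_moveBinomial (k := k) A (hker u hu.1)
    rwa [hu.2] at this
  have hmemV : ∀ u : Fin n → ℤ, u ∈ Mb → moveBinomial k u ∈ Vb k A b := by
    intro u hu
    exact ⟨hbin u (Finset.mem_filter.mp hu).1, hhom u hu⟩
  set f0 : {u // u ∈ Mb} → (MvPolynomial (Fin n) k ⧸ Wb k A b) :=
    fun u => q (moveBinomial k u.1) with hf0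
  -- linear independence
  have hind0 : LinearIndependent k f0 := by
    rw [Fintype.linearIndependent_iff]
    intro g hg
    by_contra hne
    push_neg at hne
    obtain ⟨u0, hu0g⟩ := hne
    have hu0M : (u0 : Fin n → ℤ) ∈ M := (Finset.mem_filter.mp u0.2).1
    set g0 := moveBinomial k (u0 : Fin n → ℤ) with hg0
    set J : Ideal (MvPolynomial (Fin n) k) :=
      Ideal.span (moveBinomial k '' (↑(M.erase (u0 : Fin n → ℤ)) : Set (Fin n → ℤ))) with hJ
    have hJg : toricIdeal k A = J ⊔ Ideal.span {g0} := by
      rw [← hspan]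
      have hins : (↑M : Set (Fin n → ℤ)) =
          insert (u0 : Fin n → ℤ) (↑(M.erase (u0 : Fin n → ℤ)) : Set (Fin n → ℤ)) := by
        rw [← Finset.coe_insert, Finset.insert_erase hu0M]
      show Ideal.span (moveBinomial k '' (↑M : Set (Fin n → ℤ))) = _
      rw [hins, Set.image_insert_eq, Set.insert_eq, Ideal.span_union, sup_comm]
    set h := ∑ u : {u // u ∈ Mb}, g u • moveBinomial k (u : Fin n → ℤ) with hh
    have hW : h ∈ Wb k A b := by
      rw [← Submodule.ker_mkQ (Wb k A b), LinearMap.mem_ker, map_sum]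
      simpa [f0, hq] using hg
    set T : Submodule k (MvPolynomial (Fin n) k) :=
      Submodule.restrictScalars k (J ⊔ mId k n * (J ⊔ Ideal.span {g0})) with hT
    have hhT : h ∈ T := by
      rw [hT, Submodule.restrictScalars_mem]
      apply Submodule.mem_sup_right
      have hW1 : h ∈ mId k n * toricIdeal k A := hW.1
      rwa [hJg] at hW1
    have hothers : ∀ u : {u // u ∈ Mb}, u ≠ u0 →
        moveBinomial k (u : Fin n → ℤ) ∈ T := by
      intro u hu
      rw [hT, Submodule.restrictScalars_mem]
      apply Submodule.mem_sup_left
      apply Ideal.subset_span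
      refine ⟨u, ?_, rfl⟩
      rw [Finset.coe_erase]
      exact ⟨(Finset.mem_filter.mp u.2).1, fun hcontra => hu (Subtype.ext hcontra)⟩
    have hsmulT : g u0 • g0 ∈ T := by
      have hsplit : g u0 • g0
          = h - ∑ u ∈ Finset.univ.erase u0, g u • moveBinomial k (u : Fin n → ℤ) := by
        rw [eq_sub_iff_add_eq]
        exact Finset.add_sum_erase _
          (fun u : {u // u ∈ Mb} => g u • moveBinomial k (u : Fin n → ℤ))
          (Finset.mem_univ u0)
      rw [hsplit]
      apply Submodule.sub_mem _ hhT
      apply Submodule.sum_mem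
      intro u hu
      exact Submodule.smul_mem _ _ (hothers u (Finset.ne_of_mem_erase hu))
    have hg0T : g0 ∈ T := (Submodule.smul_mem_iff _ hu0g).mp hsmulT
    have hg0J : g0 ∈ J := by
      apply nakayama hA
        (hSh _ (by rw [Finset.coe_erase]; exact Set.diff_subset))
        (hhom _ u0.2)
      rw [hT, Submodule.restrictScalars_mem] at hg0T
      exact hg0T
    have hJtoric : J = toricIdeal k A := by
      rw [hJg]
      exact (sup_eq_left.mpr
        (Ideal.span_le.mpr (Set.singleton_subset_iff.mpr hg0J))).symm
    have hmarkov : IsMarkovBasis k A (↑(M.erase (u0 : Fin n → ℤ)) : Set (Fin n → ℤ)) := by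
      constructor
      · intro u hu
        rw [Finset.mem_coe] at hu
        exact hker u (Finset.mem_of_mem_erase hu)
      · exact hJtoric
    exact hmin _ (Finset.coe_ssubset.mpr (Finset.erase_ssubset hu0M)) hmarkov
  -- spanning
  have hspan0 : ∀ v ∈ Vb k A b, q v ∈ Submodule.span k (Set.range f0) := by
    intro v hv
    rw [Vb, Submodule.mem_inf] at hv
    obtain ⟨hvI, hvb⟩ := hv
    rw [Submodule.restrictScalars_mem, ← hspan] at hvI
    have hdec := span_decomp hA (hSh _ le_rfl) hvI
      (by rwa [mem_weightedHomogeneousSubmodule] at hvb)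
    obtain ⟨s, hs, h, hh, hsum⟩ := Submodule.mem_sup.mp hdec
    have hsb : s ∈ weightedHomogeneousSubmodule k (colW A) b := by
      have hle : Submodule.span k {t | t ∈ S ∧ IsWeightedHomogeneous (colW A) t b}
          ≤ weightedHomogeneousSubmodule k (colW A) b :=
        Submodule.span_le.mpr (fun x hx => hx.2)
      exact hle hs
    have hhW : h ∈ Wb k A b := by
      rw [Wb, Submodule.mem_inf]
      constructor
      · rw [Submodule.restrictScalars_mem]
        rwa [hspan] at hh
      · have heq : h = v - s := by rw [← hsum]; ring
        rw [heq]
        exact Submodule.sub_mem _ hvb hsb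
    have hqv : q v = q s := by
      rw [← hsum, map_add]
      have : q h = 0 := by
        rw [hq, ← LinearMap.mem_ker, Submodule.ker_mkQ]
        exact hhW
      rw [this, add_zero]
    rw [hqv]
    have hmap : q s ∈ Submodule.map q
        (Submodule.span k {t | t ∈ S ∧ IsWeightedHomogeneous (colW A) t b}) :=
      Submodule.mem_map_of_mem hs
    rw [Submodule.map_span] at hmap
    refine Submodule.span_le.mpr ?_ hmap
    rintro x ⟨t, ⟨⟨u, huM, rfl⟩, htb⟩, rfl⟩
    by_cases hz : moveBinomial k u = 0
    · rw [hz, map_zero]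
      exact Submodule.zero_mem _
    · have hdeg : A.mulVec (natToInt (_root_.posPart u)) = b :=
        IsWeightedHomogeneous.inj_right hz (homog_moveBinomial A (hker u huM)) htb
      have huMb : u ∈ Mb := Finset.mem_filter.mpr ⟨huM, hdeg⟩
      exact Submodule.subset_span ⟨⟨u, huMb⟩, rfl⟩
  -- assemble the basis
  set P := (Vb k A b).map q with hP
  set f : {u // u ∈ Mb} → P :=
    fun u => ⟨f0 u, Submodule.mem_map_of_mem (hmemV u.1 u.2)⟩ with hf
  have hindf : LinearIndependent k f := by
    apply LinearIndependent.of_comp P.subtype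
    exact hind0
  have htop : ⊤ ≤ Submodule.span k (Set.range f) := by
    intro x _
    obtain ⟨v, hv, hvx⟩ := x.2
    have hx0 : (x : MvPolynomial (Fin n) k ⧸ Wb k A b) ∈ Submodule.span k (Set.range f0) := by
      rw [← hvx]
      exact hspan0 v hv
    have hrange : Set.range f0 = P.subtype '' Set.range f := by
      rw [← Set.range_comp]
      rfl
    rw [hrange, ← Submodule.map_span] at hx0
    obtain ⟨y, hy, hyx⟩ := hx0
    have : y = x := Subtype.ext hyx
    rwa [← this]
  exact ⟨Module.Basis.mk hindf htop⟩

end Basis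

/-- any two minimal Markov bases of a configuration matrix have the same
cardinality, and the same multiset of `A`-degrees `{Au⁺ : u ∈ M}`. -/
theorem minimal_markov_bases_same_degrees (k : Type*) [Field k] {d n : ℕ}
    (A : Matrix (Fin d) (Fin n) ℤ) (hA : IsConfiguration A)
    (M₁ M₂ : Finset (Fin n → ℤ))
    (h₁ : IsMinimalMarkovBasis k A (↑M₁ : Set (Fin n → ℤ)))
    (h₂ : IsMinimalMarkovBasis k A (↑M₂ : Set (Fin n → ℤ))) :
    M₁.card = M₂.card ∧
      M₁.val.map (fun u => A.mulVec (natToInt (posPart u))) =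
        M₂.val.map (fun u => A.mulVec (natToInt (posPart u))) := by
  classical
  have key : ∀ b : Fin d → ℤ,
      (M₁.filter (fun u => A.mulVec (natToInt (_root_.posPart u)) = b)).card =
      (M₂.filter (fun u => A.mulVec (natToInt (_root_.posPart u)) = b)).card := by
    intro b
    obtain ⟨B₁⟩ := basis_of_minimal hA M₁ h₁ b
    obtain ⟨B₂⟩ := basis_of_minimal hA M₂ h₂ b
    have e := B₁.indexEquiv B₂
    rw [← Fintype.card_coe, ← Fintype.card_coe]
    exact Fintype.card_congr e
  have hms : M₁.val.map (fun u => A.mulVec (natToInt (posPart u))) =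
      M₂.val.map (fun u => A.mulVec (natToInt (posPart u))) := by
    rw [Multiset.ext]
    intro b
    rw [Multiset.count_map, Multiset.count_map]
    have hflt : ∀ (M : Finset (Fin n → ℤ)),
        Multiset.card (M.val.filter (fun u => b = A.mulVec (natToInt (posPart u)))) =
        (M.filter (fun u => A.mulVec (natToInt (_root_.posPart u)) = b)).card := by
      intro M
      rw [Finset.card_def, Finset.filter_val]
      congr 1
      apply Multiset.filter_congr
      intro u _
      exact eq_comm
    rw [hflt, hflt, key b]
  refine ⟨?_, hms⟩
  have := congrArg Multiset.card hms
  rwa [Multiset.card_map, Multiset.card_map] at this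
end

section
/- For the matrix A = (7 8 9 10) ∈ ℤ^{1×4}, the set {(−1,2,−1,0), (−1,1,1,−1), (0,−1,2,−1), (4,0,−2,−1), (3,1,−1,−2), (3,0,1,−3)} is a minimal Markov basis of the toric ideal I_A. -/
open MvPolynomial

/-! ### Auxiliary development for A = (7 8 9 10) -/

namespace MB7891011

set_option maxHeartbeats 1000000

def A0 : Matrix (Fin 1) (Fin 4) ℤ := !![7, 8, 9, 10]

def Mset : Set (Fin 4 → ℤ) :=
  {![-1, 2, -1, 0], ![-1, 1, 1, -1], ![0, -1, 2, -1],
   ![4, 0, -2, -1], ![3, 1, -1, -2], ![3, 0, 1, -3]}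

/-- The A-degree of an exponent vector. -/
def degA (u : Fin 4 → ℕ) : ℕ := 7 * u 0 + 8 * u 1 + 9 * u 2 + 10 * u 3

/-- A measure which strictly decreases under reduction by the six moves. -/
def mu (u : Fin 4 → ℕ) : ℕ := 3 * u 0 + 4 * u 1 + 4 * u 2

lemma degA_vec (a b c d : ℕ) : degA ![a, b, c, d] = 7*a + 8*b + 9*c + 10*d := rfl

lemma mu_vec (a b c d : ℕ) : mu ![a, b, c, d] = 3*a + 4*b + 4*c := rfl

variable (k : Type*) [Field k]

/-- The ideal generated by the six move binomials. -/
noncomputable def J : Ideal (MvPolynomial (Fin 4) k) := Ideal.span (moveBinomial k '' Mset)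

lemma symm_add (u v : Fin 4 → ℕ) :
    Finsupp.equivFunOnFinite.symm (u + v)
      = Finsupp.equivFunOnFinite.symm u + Finsupp.equivFunOnFinite.symm v := by
  ext i; simp

lemma natMonomial_mul (u v : Fin 4 → ℕ) :
    natMonomial k u * natMonomial k v = natMonomial k (u + v) := by
  simp [natMonomial, monomial_mul, symm_add]

lemma mulVec_eq (u : Fin 4 → ℤ) :
    A0.mulVec u = fun _ => 7 * u 0 + 8 * u 1 + 9 * u 2 + 10 * u 3 := by
  funext i
  fin_cases i
  simp [A0, Matrix.mulVec, dotProduct, Fin.sum_univ_four]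

lemma step_mem (m : Fin 4 → ℤ) (hm : m ∈ Mset) (w u u' : Fin 4 → ℕ)
    (h1 : u = w + _root_.posPart m) (h2 : u' = w + _root_.negPart m) :
    natMonomial k u - natMonomial k u' ∈ J k := by
  subst h1 h2
  have h : natMonomial k (w + _root_.posPart m) - natMonomial k (w + _root_.negPart m)
      = natMonomial k w * moveBinomial k m := by
    rw [moveBinomial, mul_sub, natMonomial_mul, natMonomial_mul]
  rw [h]
  exact Ideal.mul_mem_left _ _ (Ideal.subset_span ⟨m, hm, rfl⟩)

lemma reduce (u : Fin 4 → ℕ) (h : ¬ (u 0 + u 1 + u 2 ≤ 3 ∧ u 1 + u 2 ≤ 1)) :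
    ∃ u' : Fin 4 → ℕ, natMonomial k u - natMonomial k u' ∈ J k ∧
      degA u' = degA u ∧ mu u' < mu u := by
  have hc : 2 ≤ u 1 ∨ (1 ≤ u 1 ∧ 1 ≤ u 2) ∨ 2 ≤ u 2 ∨ 4 ≤ u 0 ∨
      (3 ≤ u 0 ∧ 1 ≤ u 1) ∨ (3 ≤ u 0 ∧ 1 ≤ u 2) := by omega
  rcases hc with h1 | h1 | h1 | h1 | h1 | h1
  · refine ⟨![u 0 + 1, u 1 - 2, u 2 + 1, u 3],
      step_mem k ![-1, 2, -1, 0] (by simp [Mset]) ![u 0, u 1 - 2, u 2, u 3] _ _ ?_ ?_,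
      by rw [degA_vec]; simp only [degA]; omega,
      by rw [mu_vec]; simp only [mu]; omega⟩ <;>
    · funext i; fin_cases i <;> simp [_root_.posPart, _root_.negPart] <;> omega
  · refine ⟨![u 0 + 1, u 1 - 1, u 2 - 1, u 3 + 1],
      step_mem k ![-1, 1, 1, -1] (by simp [Mset]) ![u 0, u 1 - 1, u 2 - 1, u 3] _ _ ?_ ?_,
      by rw [degA_vec]; simp only [degA]; omega,
      by rw [mu_vec]; simp only [mu]; omega⟩ <;>
    · funext i; fin_cases i <;> simp [_root_.posPart, _root_.negPart] <;> omega
  · refine ⟨![u 0, u 1 + 1, u 2 - 2, u 3 + 1],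
      step_mem k ![0, -1, 2, -1] (by simp [Mset]) ![u 0, u 1, u 2 - 2, u 3] _ _ ?_ ?_,
      by rw [degA_vec]; simp only [degA]; omega,
      by rw [mu_vec]; simp only [mu]; omega⟩ <;>
    · funext i; fin_cases i <;> simp [_root_.posPart, _root_.negPart] <;> omega
  · refine ⟨![u 0 - 4, u 1, u 2 + 2, u 3 + 1],
      step_mem k ![4, 0, -2, -1] (by simp [Mset]) ![u 0 - 4, u 1, u 2, u 3] _ _ ?_ ?_,
      by rw [degA_vec]; simp only [degA]; omega,
      by rw [mu_vec]; simp only [mu]; omega⟩ <;>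
    · funext i; fin_cases i <;> simp [_root_.posPart, _root_.negPart] <;> omega
  · refine ⟨![u 0 - 3, u 1 - 1, u 2 + 1, u 3 + 2],
      step_mem k ![3, 1, -1, -2] (by simp [Mset]) ![u 0 - 3, u 1 - 1, u 2, u 3] _ _ ?_ ?_,
      by rw [degA_vec]; simp only [degA]; omega,
      by rw [mu_vec]; simp only [mu]; omega⟩ <;>
    · funext i; fin_cases i <;> simp [_root_.posPart, _root_.negPart] <;> omega
  · refine ⟨![u 0 - 3, u 1, u 2 - 1, u 3 + 3],
      step_mem k ![3, 0, 1, -3] (by simp [Mset]) ![u 0 - 3, u 1, u 2 - 1, u 3] _ _ ?_ ?_,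
      by rw [degA_vec]; simp only [degA]; omega,
      by rw [mu_vec]; simp only [mu]; omega⟩ <;>
    · funext i; fin_cases i <;> simp [_root_.posPart, _root_.negPart] <;> omega

lemma std_unique (u v : Fin 4 → ℕ)
    (hu : u 0 + u 1 + u 2 ≤ 3 ∧ u 1 + u 2 ≤ 1)
    (hv : v 0 + v 1 + v 2 ≤ 3 ∧ v 1 + v 2 ≤ 1)
    (hd : degA u = degA v) : u = v := by
  simp only [degA] at hd
  have h10 : u 0 = v 0 ∧ u 1 = v 1 ∧ u 2 = v 2 ∧ u 3 = v 3 := by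
    obtain ⟨hu1, hu2⟩ := hu
    obtain ⟨hv1, hv2⟩ := hv
    set a := u 0 with ha0
    set b := u 1 with hb0
    set c := u 2 with hc0
    set a' := v 0 with ha0'
    set b' := v 1 with hb0'
    set c' := v 2 with hc0'
    have ha : a ≤ 3 := by omega
    have hb : b ≤ 1 := by omega
    have hc : c ≤ 1 := by omega
    have ha' : a' ≤ 3 := by omega
    have hb' : b' ≤ 1 := by omega
    have hc' : c' ≤ 1 := by omega
    clear ha0 hb0 hc0 ha0' hb0' hc0'
    interval_cases a <;> interval_cases b <;> interval_cases c <;>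
      interval_cases a' <;> interval_cases b' <;> interval_cases c' <;> omega
  funext i
  fin_cases i <;> simp [h10.1, h10.2.1, h10.2.2.1, h10.2.2.2]

lemma connect (n : ℕ) : ∀ u v : Fin 4 → ℕ, mu u + mu v ≤ n → degA u = degA v →
    natMonomial k u - natMonomial k v ∈ J k := by
  induction n with
  | zero =>
    intro u v hn hd
    have hu : u 0 + u 1 + u 2 ≤ 3 ∧ u 1 + u 2 ≤ 1 := by simp only [mu] at hn; omega
    have hv : v 0 + v 1 + v 2 ≤ 3 ∧ v 1 + v 2 ≤ 1 := by simp only [mu] at hn; omega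
    rw [std_unique u v hu hv hd, sub_self]
    exact zero_mem _
  | succ n ih =>
    intro u v hn hd
    by_cases hu : u 0 + u 1 + u 2 ≤ 3 ∧ u 1 + u 2 ≤ 1
    · by_cases hv : v 0 + v 1 + v 2 ≤ 3 ∧ v 1 + v 2 ≤ 1
      · rw [std_unique u v hu hv hd, sub_self]
        exact zero_mem _
      · obtain ⟨v', hJ, hdeg, hmu⟩ := reduce k v hv
        have h2 := ih u v' (by omega) (by rw [hd, hdeg])
        have h3 : natMonomial k u - natMonomial k v
            = (natMonomial k u - natMonomial k v') - (natMonomial k v - natMonomial k v') := by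
          ring
        rw [h3]
        exact sub_mem h2 hJ
    · obtain ⟨u', hJ, hdeg, hmu⟩ := reduce k u hu
      have h2 := ih u' v (by omega) (by rw [← hd, hdeg])
      have h3 : natMonomial k u - natMonomial k v
          = (natMonomial k u - natMonomial k u') + (natMonomial k u' - natMonomial k v) := by
        ring
      rw [h3]
      exact add_mem hJ h2

lemma connect' (u v : Fin 4 → ℕ) (h : degA u = degA v) :
    natMonomial k u - natMonomial k v ∈ J k :=
  connect k (mu u + mu v) u v le_rfl h

lemma gen_mem (m : Fin 4 → ℤ) (hm : m ∈ Mset) : moveBinomial k m ∈ toricIdeal k A0 := by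
  refine Ideal.subset_span ⟨_root_.posPart m, _root_.negPart m, ?_, rfl⟩
  rw [mulVec_eq, mulVec_eq]
  funext i
  simp only [Mset, Set.mem_insert_iff, Set.mem_singleton_iff] at hm
  rcases hm with rfl | rfl | rfl | rfl | rfl | rfl <;> decide

lemma markov : IsMarkovBasis k A0 Mset := by
  constructor
  · intro m hm
    rw [mulVec_eq]
    funext i
    simp only [Pi.zero_apply]
    simp only [Mset, Set.mem_insert_iff, Set.mem_singleton_iff] at hm
    rcases hm with rfl | rfl | rfl | rfl | rfl | rfl <;> decide
  · apply le_antisymm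
    · rw [Ideal.span_le]
      rintro p ⟨m, hm, rfl⟩
      exact gen_mem k m hm
    · rw [toricIdeal, Ideal.span_le]
      rintro p ⟨u, v, huv, rfl⟩
      apply connect'
      rw [mulVec_eq, mulVec_eq] at huv
      have h0 := congrFun huv 0
      simp only [natToInt] at h0
      simp only [degA]
      omega

/-! ### Minimality -/

lemma coeff_span_zero {S : Set (MvPolynomial (Fin 4) k)} {e : (Fin 4) →₀ ℕ}
    (hS : ∀ g ∈ S, ∀ f, coeff e (f * g) = 0) {p} (hp : p ∈ Ideal.span S) :
    coeff e p = 0 := by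
  have H : ∀ f, coeff e (f * p) = 0 := by
    refine Submodule.span_induction (p := fun x _ => ∀ f, coeff e (f * x) = 0) ?_ ?_ ?_ ?_ hp
    · exact hS
    · intro f; simp
    · intro x y _ _ hx hy f; rw [mul_add, coeff_add, hx, hy, add_zero]
    · intro r x _ hx f; rw [smul_eq_mul, ← mul_assoc]; exact hx (f * r)
  simpa using H 1

lemma coeff_mul_binomial_zero (a b e : Fin 4 → ℕ)
    (ha : ¬ (∀ i, a i ≤ e i)) (hb : ¬ (∀ i, b i ≤ e i)) (f : MvPolynomial (Fin 4) k) :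
    coeff (Finsupp.equivFunOnFinite.symm e) (f * (natMonomial k a - natMonomial k b)) = 0 := by
  rw [mul_sub, coeff_sub, natMonomial, natMonomial, coeff_mul_monomial', coeff_mul_monomial',
    if_neg, if_neg, sub_zero]
  · intro h; exact hb fun i => by simpa using h i
  · intro h; exact ha fun i => by simpa using h i

lemma coeff_move_pos (m : Fin 4 → ℤ) (e : Fin 4 → ℕ)
    (h1 : _root_.posPart m = e) (h2 : _root_.negPart m ≠ e) :
    coeff (Finsupp.equivFunOnFinite.symm e) (moveBinomial k m) = 1 := by
  rw [moveBinomial, natMonomial, natMonomial, coeff_sub, coeff_monomial, coeff_monomial,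
    if_pos (congrArg _ h1),
    if_neg (fun h => h2 (Finsupp.equivFunOnFinite.symm.injective h)), sub_zero]

lemma coeff_move_neg (m : Fin 4 → ℤ) (e : Fin 4 → ℕ)
    (h1 : _root_.posPart m ≠ e) (h2 : _root_.negPart m = e) :
    coeff (Finsupp.equivFunOnFinite.symm e) (moveBinomial k m) = -1 := by
  rw [moveBinomial, natMonomial, natMonomial, coeff_sub, coeff_monomial, coeff_monomial,
    if_pos (congrArg _ h2),
    if_neg (fun h => h1 (Finsupp.equivFunOnFinite.symm.injective h)), zero_sub]

lemma contra (e : Fin 4 → ℕ) (m : Fin 4 → ℤ) (hm : m ∈ Mset)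
    (hcoeff : coeff (Finsupp.equivFunOnFinite.symm e) (moveBinomial k m) ≠ 0)
    {M' : Set (Fin 4 → ℤ)}
    (hall : ∀ m' ∈ M', (¬ ∀ i, _root_.posPart m' i ≤ e i) ∧ (¬ ∀ i, _root_.negPart m' i ≤ e i))
    (hspan : Ideal.span (moveBinomial k '' M') = toricIdeal k A0) : False := by
  have h1 : moveBinomial k m ∈ toricIdeal k A0 := gen_mem k m hm
  rw [← hspan] at h1
  apply hcoeff
  refine coeff_span_zero k ?_ h1
  rintro g ⟨m', hm', rfl⟩ f
  exact coeff_mul_binomial_zero k _ _ e (hall m' hm').1 (hall m' hm').2 f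

lemma minimal : ∀ M' ⊂ Mset, ¬ IsMarkovBasis k A0 M' := by
  intro M' hM' hMB
  obtain ⟨m, hmM, hmM'⟩ := Set.exists_of_ssubset hM'
  have hsub : M' ⊆ Mset := hM'.1
  have hall : ∀ (e : Fin 4 → ℕ), (∀ m'' ∈ Mset, m'' ∉ M' ∨
      ((¬ ∀ i, _root_.posPart m'' i ≤ e i) ∧ (¬ ∀ i, _root_.negPart m'' i ≤ e i))) →
      ∀ m' ∈ M', (¬ ∀ i, _root_.posPart m' i ≤ e i) ∧ (¬ ∀ i, _root_.negPart m' i ≤ e i) := by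
    intro e h m' hm'
    rcases h m' (hsub hm') with h' | h'
    · exact absurd hm' h'
    · exact h'
  simp only [Mset, Set.mem_insert_iff, Set.mem_singleton_iff] at hmM
  rcases hmM with rfl | rfl | rfl | rfl | rfl | rfl
  · refine contra k ![0, 2, 0, 0] ![-1, 2, -1, 0] (by simp [Mset])
      (by rw [coeff_move_pos k _ _ (by decide) (by decide)]; exact one_ne_zero)
      (hall ![0, 2, 0, 0] ?_) hMB.2
    intro m'' hm''
    simp only [Mset, Set.mem_insert_iff, Set.mem_singleton_iff] at hm''
    rcases hm'' with rfl | rfl | rfl | rfl | rfl | rfl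
    · exact Or.inl hmM'
    all_goals exact Or.inr ⟨by decide, by decide⟩
  · refine contra k ![0, 1, 1, 0] ![-1, 1, 1, -1] (by simp [Mset])
      (by rw [coeff_move_pos k _ _ (by decide) (by decide)]; exact one_ne_zero)
      (hall ![0, 1, 1, 0] ?_) hMB.2
    intro m'' hm''
    simp only [Mset, Set.mem_insert_iff, Set.mem_singleton_iff] at hm''
    rcases hm'' with rfl | rfl | rfl | rfl | rfl | rfl
    · exact Or.inr ⟨by decide, by decide⟩
    · exact Or.inl hmM'
    all_goals exact Or.inr ⟨by decide, by decide⟩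
  · refine contra k ![0, 0, 2, 0] ![0, -1, 2, -1] (by simp [Mset])
      (by rw [coeff_move_pos k _ _ (by decide) (by decide)]; exact one_ne_zero)
      (hall ![0, 0, 2, 0] ?_) hMB.2
    intro m'' hm''
    simp only [Mset, Set.mem_insert_iff, Set.mem_singleton_iff] at hm''
    rcases hm'' with rfl | rfl | rfl | rfl | rfl | rfl
    · exact Or.inr ⟨by decide, by decide⟩
    · exact Or.inr ⟨by decide, by decide⟩
    · exact Or.inl hmM'
    all_goals exact Or.inr ⟨by decide, by decide⟩
  · refine contra k ![4, 0, 0, 0] ![4, 0, -2, -1] (by simp [Mset])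
      (by rw [coeff_move_pos k _ _ (by decide) (by decide)]; exact one_ne_zero)
      (hall ![4, 0, 0, 0] ?_) hMB.2
    intro m'' hm''
    simp only [Mset, Set.mem_insert_iff, Set.mem_singleton_iff] at hm''
    rcases hm'' with rfl | rfl | rfl | rfl | rfl | rfl
    · exact Or.inr ⟨by decide, by decide⟩
    · exact Or.inr ⟨by decide, by decide⟩
    · exact Or.inr ⟨by decide, by decide⟩
    · exact Or.inl hmM'
    all_goals exact Or.inr ⟨by decide, by decide⟩
  · refine contra k ![3, 1, 0, 0] ![3, 1, -1, -2] (by simp [Mset])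
      (by rw [coeff_move_pos k _ _ (by decide) (by decide)]; exact one_ne_zero)
      (hall ![3, 1, 0, 0] ?_) hMB.2
    intro m'' hm''
    simp only [Mset, Set.mem_insert_iff, Set.mem_singleton_iff] at hm''
    rcases hm'' with rfl | rfl | rfl | rfl | rfl | rfl
    · exact Or.inr ⟨by decide, by decide⟩
    · exact Or.inr ⟨by decide, by decide⟩
    · exact Or.inr ⟨by decide, by decide⟩
    · exact Or.inr ⟨by decide, by decide⟩
    · exact Or.inl hmM'
    · exact Or.inr ⟨by decide, by decide⟩
  · refine contra k ![0, 0, 0, 3] ![3, 0, 1, -3] (by simp [Mset])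
      (by rw [coeff_move_neg k _ _ (by decide) (by decide)]; exact neg_ne_zero.mpr one_ne_zero)
      (hall ![0, 0, 0, 3] ?_) hMB.2
    intro m'' hm''
    simp only [Mset, Set.mem_insert_iff, Set.mem_singleton_iff] at hm''
    rcases hm'' with rfl | rfl | rfl | rfl | rfl | rfl
    · exact Or.inr ⟨by decide, by decide⟩
    · exact Or.inr ⟨by decide, by decide⟩
    · exact Or.inr ⟨by decide, by decide⟩
    · exact Or.inr ⟨by decide, by decide⟩
    · exact Or.inr ⟨by decide, by decide⟩
    · exact Or.inl hmM'

end MB7891011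

/-- for `A = (7 8 9 10)`, the set
`{(-1,2,-1,0), (-1,1,1,-1), (0,-1,2,-1), (4,0,-2,-1), (3,1,-1,-2), (3,0,1,-3)}`
is a minimal Markov basis of the toric ideal `I_A`. -/
theorem minimal_markov_basis_7891011 (k : Type*) [Field k] :
    IsMinimalMarkovBasis k (!![7, 8, 9, 10] : Matrix (Fin 1) (Fin 4) ℤ)
      ({![-1, 2, -1, 0], ![-1, 1, 1, -1], ![0, -1, 2, -1],
        ![4, 0, -2, -1], ![3, 1, -1, -2], ![3, 0, 1, -3]} : Set (Fin 4 → ℤ)) := by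
  exact ⟨MB7891011.markov k, MB7891011.minimal k⟩
end

section
/- For the matrix A = (7 8 9 10) ∈ ℤ^{1×4}, the moves (−1,2,−1,0), (−1,1,1,−1), (0,−1,2,−1), and (3,1,−1,−2) are indispensable: each corresponding binomial belongs (up to sign) to every minimal Markov basis of I_A. -/
/-!
A nonzero move `w ∈ ker A` lies, up to sign, in every Markov basis as soon as the fiber of `w⁺`
is `{w⁺, w⁻}`. Indeed, a move `v` of the basis can only touch the monomial `x^{w⁺}` if `v⁺`
or `v⁻` divides it, and then `w⁺ - v⁺ + v⁻` (or `w⁺ - v⁻ + v⁺`) lies in that fiber, which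
forces `v ∈ {0, w, -w}`. If neither `w` nor `-w` is in the basis, every element of the ideal
it generates therefore has zero coefficient at `x^{w⁺}`, whereas `x^{w⁺} - x^{w⁻}` does not.
For `A = (7 8 9 10)` the four fibers, of degrees 16, 17, 18 and 29, are found by a finite
search.
-/

open MvPolynomial

open Matrix

def fiber {d n : ℕ} (A : Matrix (Fin d) (Fin n) ℤ) (b : Fin d → ℤ) : Set (Fin n → ℕ) :=
  {u | A *ᵥ natToInt u = b}

namespace Toric

variable {d n : ℕ}

lemma natToInt_posPart_sub_natToInt_negPart (w : Fin n → ℤ) :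
    natToInt (_root_.posPart w) - natToInt (_root_.negPart w) = w := by
  funext i
  simp only [natToInt, _root_.posPart, _root_.negPart, Pi.sub_apply]
  omega

lemma posPart_neg (w : Fin n → ℤ) : _root_.posPart (-w) = _root_.negPart w := rfl

lemma posPart_eq_negPart_iff {w : Fin n → ℤ} :
    _root_.posPart w = _root_.negPart w ↔ w = 0 := by
  simp only [_root_.funext_iff, _root_.posPart, _root_.negPart, Pi.zero_apply]
  exact forall_congr' fun i => by omega

lemma mulVec_natToInt_posPart_eq_negPart {A : Matrix (Fin d) (Fin n) ℤ} {w : Fin n → ℤ}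
    (hw : A *ᵥ w = 0) : A *ᵥ natToInt (_root_.posPart w) = A *ᵥ natToInt (_root_.negPart w) :=
  sub_eq_zero.mp <| by rw [← mulVec_sub, natToInt_posPart_sub_natToInt_negPart, hw]

lemma eq_zero_or_eq_of_posPart_le {A : Matrix (Fin d) (Fin n) ℤ} {v w : Fin n → ℤ}
    (hfib : fiber A (A *ᵥ natToInt (_root_.posPart w)) ⊆ {_root_.posPart w, _root_.negPart w})
    (hv : A *ᵥ v = 0) (hle : _root_.posPart v ≤ _root_.posPart w) : v = 0 ∨ v = w := by
  have hle' : ∀ i, (v i).toNat ≤ (w i).toNat := hle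
  set m := _root_.posPart w - _root_.posPart v + _root_.negPart v with hm_def
  have hm : natToInt m = natToInt (_root_.posPart w) - v := by
    funext i
    have := hle' i
    simp only [hm_def, natToInt, _root_.posPart, _root_.negPart, Pi.add_apply, Pi.sub_apply]
    omega
  have hmem : m ∈ fiber A (A *ᵥ natToInt (_root_.posPart w)) := by
    show A *ᵥ natToInt _ = _
    rw [hm, mulVec_sub, hv, sub_zero]
  rcases hfib hmem with h | h
  · left
    funext i
    have hi := congrFun h i
    have := hle' i
    simp only [hm_def, _root_.posPart, _root_.negPart, Pi.add_apply, Pi.sub_apply] at hi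
    simp only [Pi.zero_apply]
    omega
  · right
    funext i
    have hi := congrFun h i
    have := hle' i
    simp only [hm_def, _root_.posPart, _root_.negPart, Pi.add_apply, Pi.sub_apply] at hi
    omega

lemma coeff_mul_eq_zero_of_mem_span {R σ : Type*} [CommSemiring R] {S : Set (MvPolynomial σ R)}
    {m : σ →₀ ℕ} (hS : ∀ g ∈ S, ∀ f, coeff m (f * g) = 0) {q : MvPolynomial σ R}
    (hq : q ∈ Ideal.span S) (f : MvPolynomial σ R) : coeff m (f * q) = 0 := by
  induction hq using Submodule.span_induction generalizing f with
  | mem g hg => exact hS g hg f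
  | zero => rw [mul_zero, coeff_zero]
  | add _ _ _ _ hx hy => rw [mul_add, coeff_add, hx, hy, add_zero]
  | smul _ _ _ hx => rw [smul_eq_mul, ← mul_assoc, hx]

variable (k : Type*) [Field k]

lemma moveBinomial_zero : moveBinomial k (0 : Fin n → ℤ) = 0 := by
  rw [moveBinomial, posPart_eq_negPart_iff.mpr rfl, sub_self]

lemma coeff_mul_moveBinomial_eq_zero {v : Fin n → ℤ} {U : Fin n → ℕ}
    (hpos : ¬ _root_.posPart v ≤ U) (hneg : ¬ _root_.negPart v ≤ U)
    (f : MvPolynomial (Fin n) k) :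
    coeff (Finsupp.equivFunOnFinite.symm U) (f * moveBinomial k v) = 0 := by
  replace hpos := (Equiv.le_def Finsupp.equivFunOnFinite.symm _ _).not.mpr hpos
  replace hneg := (Equiv.le_def Finsupp.equivFunOnFinite.symm _ _).not.mpr hneg
  rw [moveBinomial, natMonomial, natMonomial, mul_sub, coeff_sub, coeff_mul_monomial',
    coeff_mul_monomial', if_neg hpos, if_neg hneg, sub_zero]

lemma coeff_posPart_moveBinomial {w : Fin n → ℤ} (hw : w ≠ 0) :
    coeff (Finsupp.equivFunOnFinite.symm (_root_.posPart w)) (moveBinomial k w) = 1 := by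
  have hne : Finsupp.equivFunOnFinite.symm (_root_.negPart w) ≠
      Finsupp.equivFunOnFinite.symm (_root_.posPart w) :=
    fun h => hw (posPart_eq_negPart_iff.mp (Finsupp.equivFunOnFinite.symm.injective h).symm)
  rw [moveBinomial, natMonomial, natMonomial, coeff_sub, coeff_monomial, coeff_monomial,
    if_pos rfl, if_neg hne, sub_zero]

theorem mem_or_neg_mem_of_isMarkovBasis {A : Matrix (Fin d) (Fin n) ℤ}
    {M : Set (Fin n → ℤ)} (hM : IsMarkovBasis k A M) {w : Fin n → ℤ} (hw0 : w ≠ 0)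
    (hw : A *ᵥ w = 0)
    (hfib : fiber A (A *ᵥ natToInt (_root_.posPart w)) ⊆ {_root_.posPart w, _root_.negPart w}) :
    w ∈ M ∨ -w ∈ M := by
  by_contra! hwM
  have hgen : ∀ g ∈ moveBinomial k '' M, ∀ f,
      coeff (Finsupp.equivFunOnFinite.symm (_root_.posPart w)) (f * g) = 0 := by
    rintro _ ⟨v, hvM, rfl⟩ f
    by_cases hv0 : v = 0
    · rw [hv0, moveBinomial_zero, mul_zero, coeff_zero]
    refine coeff_mul_moveBinomial_eq_zero k (fun hle => ?_) (fun hle => ?_) f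
    · rcases eq_zero_or_eq_of_posPart_le hfib (hM.1 v hvM) hle with h | rfl
      exacts [hv0 h, hwM.1 hvM]
    · rw [← posPart_neg] at hle
      rcases eq_zero_or_eq_of_posPart_le hfib (by rw [mulVec_neg, hM.1 v hvM, neg_zero]) hle
        with h | h
      exacts [hv0 (neg_eq_zero.mp h), hwM.2 (neg_eq_iff_eq_neg.mp h ▸ hvM)]
  have hwI : moveBinomial k w ∈ Ideal.span (moveBinomial k '' M) :=
    hM.2 ▸ Ideal.subset_span ⟨_, _, mulVec_natToInt_posPart_eq_negPart hw, rfl⟩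
  have := coeff_mul_eq_zero_of_mem_span hgen hwI 1
  rw [one_mul, coeff_posPart_moveBinomial k hw0] at this
  exact one_ne_zero this

end Toric

lemma mulVec_seven_eight_nine_ten (u : Fin 4 → ℕ) :
    (!![7, 8, 9, 10] : Matrix (Fin 1) (Fin 4) ℤ) *ᵥ natToInt u =
      fun _ => ((7 * u 0 + 8 * u 1 + 9 * u 2 + 10 * u 3 : ℕ) : ℤ) := by
  funext i
  simp [mulVec, dotProduct, Fin.sum_univ_four, natToInt]

lemma fiber_seven_eight_nine_ten_subset {p q : Fin 4 → ℕ}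
    (hp : 7 * p 0 + 8 * p 1 + 9 * p 2 + 10 * p 3 ≤ 29)
    (hsearch : ∀ a < 5, ∀ b < 4, ∀ c < 4, ∀ d < 3,
      7 * a + 8 * b + 9 * c + 10 * d = 7 * p 0 + 8 * p 1 + 9 * p 2 + 10 * p 3 →
        ![a, b, c, d] = p ∨ ![a, b, c, d] = q) :
    fiber !![7, 8, 9, 10] (!![7, 8, 9, 10] *ᵥ natToInt p) ⊆ {p, q} := by
  intro u hu
  simp only [fiber, Set.mem_ofPred_eq, mulVec_seven_eight_nine_ten, _root_.funext_iff,
    forall_const, Nat.cast_inj] at hu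
  have hu' : u = ![u 0, u 1, u 2, u 3] := by
    funext i
    fin_cases i <;> rfl
  rw [hu']
  exact hsearch _ (by omega) _ (by omega) _ (by omega) _ (by omega) hu

-- the `Decidable` instance of the four nested bounded quantifiers is large
set_option synthInstance.maxSize 1024 in
/-- for `A = (7 8 9 10)`, the moves `(-1,2,-1,0)`, `(-1,1,1,-1)`,
`(0,-1,2,-1)` and `(3,1,-1,-2)` are indispensable: each belongs, up to sign, to every
minimal Markov basis of `I_A`. -/
theorem indispensables_7891011 (k : Type*) [Field k]
    (M : Set (Fin 4 → ℤ))
    (hM : IsMinimalMarkovBasis k (!![7, 8, 9, 10] : Matrix (Fin 1) (Fin 4) ℤ) M) :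
    ∀ w ∈ ({![-1, 2, -1, 0], ![-1, 1, 1, -1], ![0, -1, 2, -1],
        ![3, 1, -1, -2]} : Set (Fin 4 → ℤ)), w ∈ M ∨ -w ∈ M := by
  intro w hw
  simp only [Set.mem_insert_iff, Set.mem_singleton_iff] at hw
  rcases hw with rfl | rfl | rfl | rfl <;>
    exact Toric.mem_or_neg_mem_of_isMarkovBasis k hM.1 (by decide) (by decide)
      (fiber_seven_eight_nine_ten_subset (by decide) (by decide))
end
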